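/- arXiv:2406.07478 — 11 statements merged into one kernel-verified Lean document; each statement's English description precedes it below -/
import Mathlib

section
/- Let H be a group generated by a set S ⊆ H, and let φ_i : H → G be group homomorphisms for i in an index set. Then K(G; ∪_i φ_i(S)) ≥ (1/2)·K(G; ∪_i φ_i(H))·K(H;S). -/
universe u u' v

section Aux

variable {H : Type*} [Group H] {E : Type*} [NormedAddCommGroup E] [InnerProductSpace ℂ E]

/-- The submodule of vectors fixed by a unitary representation. -/
def fixedSubmodule (σ : H →* (E ≃ₗᵢ[ℂ] E)) : Submodule ℂ E where
  carrier := {w | ∀ h, σ h w = w}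
  add_mem' := by intro a b ha hb h; rw [map_add, ha h, hb h]
  zero_mem' := by intro h; exact map_zero _
  smul_mem' := by intro c a ha h; rw [map_smul, ha h]

lemma mem_fixedSubmodule {σ : H →* (E ≃ₗᵢ[ℂ] E)} {w : E} :
    w ∈ fixedSubmodule σ ↔ ∀ h, σ h w = w := Iff.rfl

lemma isClosed_fixedSubmodule (σ : H →* (E ≃ₗᵢ[ℂ] E)) :
    IsClosed (fixedSubmodule σ : Set E) := by
  have : (fixedSubmodule σ : Set E) = ⋂ h, {w | σ h w = w} := by
    ext w; simp [mem_fixedSubmodule, Set.mem_iInter]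
  rw [this]
  exact isClosed_iInter fun h => isClosed_eq (σ h).continuous continuous_id

lemma maps_orthogonal (σ : H →* (E ≃ₗᵢ[ℂ] E)) (s : H) {w : E}
    (hw : w ∈ (fixedSubmodule σ)ᗮ) : σ s w ∈ (fixedSubmodule σ)ᗮ := by
  rw [Submodule.mem_orthogonal] at hw ⊢
  intro u hu
  have hu' : σ s u = u := hu s
  calc (inner ℂ u (σ s w) : ℂ) = inner ℂ (σ s u) (σ s w) := by rw [hu']
    _ = inner ℂ u w := (σ s).inner_map_map u w
    _ = 0 := hw u hu

/-- Restriction of a unitary representation to the orthogonal complement of the fixed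
vectors. -/
noncomputable def restrictRep (σ : H →* (E ≃ₗᵢ[ℂ] E)) :
    H →* ((fixedSubmodule σ)ᗮ ≃ₗᵢ[ℂ] (fixedSubmodule σ)ᗮ) where
  toFun s :=
    { toFun := fun w => ⟨σ s w, maps_orthogonal σ s w.2⟩
      invFun := fun w => ⟨σ s⁻¹ w, maps_orthogonal σ s⁻¹ w.2⟩
      left_inv := by
        intro w
        apply Subtype.ext
        show σ s⁻¹ (σ s w) = w
        have h : σ s⁻¹ (σ s (w : E)) = σ (s⁻¹ * s) (w : E) := by rw [map_mul]; rfl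
        rw [h, inv_mul_cancel, map_one]
        rfl
      right_inv := by
        intro w
        apply Subtype.ext
        show σ s (σ s⁻¹ w) = w
        have h : σ s (σ s⁻¹ (w : E)) = σ (s * s⁻¹) (w : E) := by rw [map_mul]; rfl
        rw [h, mul_inv_cancel, map_one]
        rfl
      map_add' := by intro a b; apply Subtype.ext; exact map_add _ _ _
      map_smul' := by intro c a; apply Subtype.ext; exact map_smul _ _ _
      norm_map' := by intro w; exact (σ s).norm_map w }
  map_one' := by
    apply LinearIsometryEquiv.ext
    intro w
    apply Subtype.ext
    show σ 1 w = w
    rw [map_one]; rfl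
  map_mul' := by
    intro a b
    apply LinearIsometryEquiv.ext
    intro w
    apply Subtype.ext
    show σ (a * b) w = σ a (σ b w)
    rw [map_mul]; rfl

lemma restrictRep_apply (σ : H →* (E ≃ₗᵢ[ℂ] E)) (s : H) (w : (fixedSubmodule σ)ᗮ) :
    (restrictRep σ s w : E) = σ s w := rfl

end Aux

/-- The Kazhdan constant of a group `G` with respect to a subset `S`: the supremum of all
`ε ≥ 0` such that every unitary representation of `G` (on a complex Hilbert space) without
nonzero invariant vectors moves every unit vector by at least `ε` under some element of `S`. -/
noncomputable def kazhdanConstant (G : Type u) [Group G] (S : Set G) : ℝ :=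
  sSup {ε : ℝ | 0 ≤ ε ∧
    ∀ (E : Type v) [NormedAddCommGroup E] [InnerProductSpace ℂ E] [CompleteSpace E]
      (ρ : G →* (E ≃ₗᵢ[ℂ] E)),
      (∀ w : E, (∀ g : G, ρ g w = w) → w = 0) →
      ∀ ψ : E, ‖ψ‖ = 1 → ∃ g ∈ S, ε ≤ ‖ρ g ψ - ψ‖}

/-- **Chaining Kazhdan constants through homomorphic images.** If `H` is generated by `S` and
`φᵢ : H → G` are group homomorphisms, then
`K(G; ⋃ᵢ φᵢ(S)) ≥ (1/2) · K(G; ⋃ᵢ φᵢ(H)) · K(H; S)`. -/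
theorem kazhdan_chain_rule {H : Type u} {G : Type u'} [Group H] [Group G]
    (S : Set H) (hgen : Subgroup.closure S = ⊤)
    {ι : Type*} (φ : ι → (H →* G)) :
    (1 / 2 : ℝ) * kazhdanConstant.{u', v} G (⋃ i, Set.range (φ i))
        * kazhdanConstant.{u, v} H S
      ≤ kazhdanConstant.{u', v} G (⋃ i, (φ i) '' S) := by
  classical
  set A : Set ℝ := {ε : ℝ | 0 ≤ ε ∧
    ∀ (E : Type v) [NormedAddCommGroup E] [InnerProductSpace ℂ E] [CompleteSpace E]
      (ρ : G →* (E ≃ₗᵢ[ℂ] E)),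
      (∀ w : E, (∀ g : G, ρ g w = w) → w = 0) →
      ∀ ψ : E, ‖ψ‖ = 1 → ∃ g ∈ (⋃ i, Set.range (φ i)), ε ≤ ‖ρ g ψ - ψ‖} with hA
  set B : Set ℝ := {ε : ℝ | 0 ≤ ε ∧
    ∀ (E : Type v) [NormedAddCommGroup E] [InnerProductSpace ℂ E] [CompleteSpace E]
      (ρ : H →* (E ≃ₗᵢ[ℂ] E)),
      (∀ w : E, (∀ g : H, ρ g w = w) → w = 0) →
      ∀ ψ : E, ‖ψ‖ = 1 → ∃ g ∈ S, ε ≤ ‖ρ g ψ - ψ‖} with hB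
  set C : Set ℝ := {ε : ℝ | 0 ≤ ε ∧
    ∀ (E : Type v) [NormedAddCommGroup E] [InnerProductSpace ℂ E] [CompleteSpace E]
      (ρ : G →* (E ≃ₗᵢ[ℂ] E)),
      (∀ w : E, (∀ g : G, ρ g w = w) → w = 0) →
      ∀ ψ : E, ‖ψ‖ = 1 → ∃ g ∈ (⋃ i, (φ i) '' S), ε ≤ ‖ρ g ψ - ψ‖} with hC
  have hKA : kazhdanConstant.{u', v} G (⋃ i, Set.range (φ i)) = sSup A := rfl
  have hKB : kazhdanConstant.{u, v} H S = sSup B := rfl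
  have hKC : kazhdanConstant.{u', v} G (⋃ i, (φ i) '' S) = sSup C := rfl
  rw [hKA, hKB, hKC]
  -- nonnegativity of the sups
  have hCnonneg : 0 ≤ sSup C := Real.sSup_nonneg (fun x hx => hx.1)
  have hBnonneg : 0 ≤ sSup B := Real.sSup_nonneg (fun x hx => hx.1)
  -- C ⊆ A
  have hCA : C ⊆ A := by
    intro ε hε
    refine ⟨hε.1, fun E _ _ _ ρ hinv ψ hψ => ?_⟩
    obtain ⟨g, hg, hle⟩ := hε.2 E ρ hinv ψ hψ
    refine ⟨g, ?_, hle⟩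
    rw [Set.mem_iUnion] at hg ⊢
    obtain ⟨i, hgi⟩ := hg
    exact ⟨i, (Set.image_subset_range _ _) hgi⟩
  -- the key step
  have key : ∀ ε₁ ∈ A, ∀ ε₂ ∈ B, 0 < ε₁ → (1 / 2 : ℝ) * ε₁ * ε₂ ∈ C := by
    intro ε₁ hε₁ ε₂ hε₂ hε₁pos
    refine ⟨mul_nonneg (by positivity) hε₂.1, ?_⟩
    intro E _ _ _ ρ hinv ψ hψ
    obtain ⟨g, hg, hgle⟩ := hε₁.2 E ρ hinv ψ hψ
    rw [Set.mem_iUnion] at hg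
    obtain ⟨i, h, rfl⟩ := hg
    set σ : H →* (E ≃ₗᵢ[ℂ] E) := ρ.comp (φ i) with hσ
    set E₀ : Submodule ℂ E := fixedSubmodule σ with hE₀
    haveI : CompleteSpace E₀ := (isClosed_fixedSubmodule σ).completeSpace_coe
    obtain ⟨ψ₀, hψ₀, ψ₁, hψ₁, hsum⟩ := E₀.exists_add_mem_mem_orthogonal ψ
    have hfix : ∀ h' : H, σ h' ψ₀ = ψ₀ := hψ₀
    have hdiff : ∀ h' : H, ρ (φ i h') ψ - ψ = σ h' ψ₁ - ψ₁ := by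
      intro h'
      have : ρ (φ i h') ψ = σ h' ψ := rfl
      rw [this, hsum, map_add, hfix h']
      abel
    -- lower bound on ‖ψ₁‖
    have hnorm1 : ε₁ ≤ 2 * ‖ψ₁‖ := by
      calc ε₁ ≤ ‖ρ (φ i h) ψ - ψ‖ := hgle
        _ = ‖σ h ψ₁ - ψ₁‖ := by rw [hdiff h]
        _ ≤ ‖σ h ψ₁‖ + ‖ψ₁‖ := norm_sub_le _ _
        _ = 2 * ‖ψ₁‖ := by rw [(σ h).norm_map]; ring
    have hψ₁pos : 0 < ‖ψ₁‖ := by linarith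
    -- the restricted representation on E₀ᗮ
    set τ := restrictRep σ with hτ
    have hτinv : ∀ w : E₀ᗮ, (∀ g : H, τ g w = w) → w = 0 := by
      intro w hw
      have hwfix : (w : E) ∈ E₀ := by
        intro h'
        have := congrArg (Subtype.val) (hw h')
        exact this
      apply Subtype.ext
      have : (inner ℂ (w : E) (w : E) : ℂ) = 0 := (Submodule.mem_orthogonal _ _).1 w.2 w hwfix
      exact inner_self_eq_zero.1 this
    set w₁ : E₀ᗮ := ⟨ψ₁, hψ₁⟩ with hw₁
    set c : ℂ := ((‖ψ₁‖⁻¹ : ℝ) : ℂ) with hc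
    have hcnorm : ‖c‖ = ‖ψ₁‖⁻¹ := by
      rw [hc, Complex.norm_real, Real.norm_eq_abs, abs_of_pos (by positivity)]
    set u : E₀ᗮ := c • w₁ with hu
    have hw₁norm : ‖w₁‖ = ‖ψ₁‖ := rfl
    have hunorm : ‖u‖ = 1 := by
      rw [hu, norm_smul, hcnorm, hw₁norm, inv_mul_cancel₀ (ne_of_gt hψ₁pos)]
    obtain ⟨s, hs, hsle⟩ := hε₂.2 E₀ᗮ τ hτinv u hunorm
    have hτcalc : ‖τ s u - u‖ = ‖ψ₁‖⁻¹ * ‖σ s ψ₁ - ψ₁‖ := by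
      have h1 : τ s u - u = c • (τ s w₁ - w₁) := by
        rw [hu, map_smul, smul_sub]
      have h2 : ((τ s w₁ - w₁ : E₀ᗮ) : E) = σ s ψ₁ - ψ₁ := by
        have : (τ s w₁ : E) = σ s ψ₁ := restrictRep_apply σ s w₁
        rw [AddSubgroupClass.coe_sub, this]
      have h3 : ‖(τ s w₁ - w₁ : E₀ᗮ)‖ = ‖σ s ψ₁ - ψ₁‖ := by
        rw [show ‖(τ s w₁ - w₁ : E₀ᗮ)‖ = ‖((τ s w₁ - w₁ : E₀ᗮ) : E)‖ from rfl, h2]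
      rw [h1, norm_smul, hcnorm, h3]
    have hfinal : ε₂ * ‖ψ₁‖ ≤ ‖σ s ψ₁ - ψ₁‖ := by
      have := hsle
      rw [hτcalc] at this
      calc ε₂ * ‖ψ₁‖ ≤ (‖ψ₁‖⁻¹ * ‖σ s ψ₁ - ψ₁‖) * ‖ψ₁‖ :=
        mul_le_mul_of_nonneg_right this (le_of_lt hψ₁pos)
        _ = ‖σ s ψ₁ - ψ₁‖ := by field_simp
    refine ⟨φ i s, ?_, ?_⟩
    · rw [Set.mem_iUnion]
      exact ⟨i, ⟨s, hs, rfl⟩⟩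
    · rw [hdiff s]
      have hε₂0 : 0 ≤ ε₂ := hε₂.1
      nlinarith
  -- assemble
  by_cases hAne : A.Nonempty
  swap
  · rw [Set.not_nonempty_iff_eq_empty] at hAne
    rw [hAne, Real.sSup_empty]
    simpa using hCnonneg
  by_cases hAbdd : BddAbove A
  swap
  · rw [Real.sSup_of_not_bddAbove hAbdd]
    simpa using hCnonneg
  by_cases hBne : B.Nonempty
  swap
  · rw [Set.not_nonempty_iff_eq_empty] at hBne
    rw [hBne, Real.sSup_empty]
    simpa using hCnonneg
  by_cases hBbdd : BddAbove B
  swap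
  · rw [Real.sSup_of_not_bddAbove hBbdd]
    simpa using hCnonneg
  have hCbdd : BddAbove C := hAbdd.mono hCA
  -- main estimate
  rcases eq_or_lt_of_le hBnonneg with hB0 | hBpos
  · rw [← hB0]
    simpa using hCnonneg
  have mainA : ∀ a ∈ A, (1 / 2 : ℝ) * a * sSup B ≤ sSup C := by
    intro a ha
    have ha0 : 0 ≤ a := ha.1
    rcases eq_or_lt_of_le ha0 with ha0' | hapos
    · rw [← ha0']; simpa using hCnonneg
    have hane0 : a ≠ 0 := ne_of_gt hapos
    have hBle : sSup B ≤ 2 * sSup C / a := by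
      apply csSup_le hBne
      intro b hb
      have hmem : (1 / 2 : ℝ) * a * b ∈ C := key a ha b hb hapos
      have : (1 / 2 : ℝ) * a * b ≤ sSup C := le_csSup hCbdd hmem
      rw [le_div_iff₀ hapos]
      nlinarith
    calc (1 / 2 : ℝ) * a * sSup B ≤ (1 / 2 : ℝ) * a * (2 * sSup C / a) := by
          apply mul_le_mul_of_nonneg_left hBle (by linarith)
      _ = sSup C := by field_simp
  have hBne0 : sSup B ≠ 0 := ne_of_gt hBpos
  have hAle : sSup A ≤ 2 * sSup C / sSup B := by
    apply csSup_le hAne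
    intro a ha
    have := mainA a ha
    rw [le_div_iff₀ hBpos]
    nlinarith
  have hAnonneg : 0 ≤ sSup A := Real.sSup_nonneg (fun x hx => hx.1)
  calc (1 / 2 : ℝ) * sSup A * sSup B ≤ (1 / 2 : ℝ) * (2 * sSup C / sSup B) * sSup B := by
        apply mul_le_mul_of_nonneg_right _ hBnonneg
        apply mul_le_mul_of_nonneg_left hAle (by norm_num)
    _ = sSup C := by field_simp
end

section
/- Let G be a compact group generated by a finite subset S that contains the identity and is closed under taking inverses, and let ν_S be the uniform probability measure on S. Then for any finite-dimensional unitary representation ρ of G, the essential norm ‖E_{U∼ν_S} ρ(U) − E_{U∼μ_G} ρ(U)‖_∞ is at most 1 − K(G;S)²/(2|S|), where μ_G is the Haar probability measure on G. -/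
open MeasureTheory

universe u v

local notation "⟪" x ", " y "⟫" => @inner ℂ _ _ x y

section AuxNorm

lemma norm_le_of_quadratic_bound {E : Type*} [NormedAddCommGroup E] [InnerProductSpace ℂ E]
    [FiniteDimensional ℂ E] (F : Submodule ℂ E) (T : E →L[ℂ] E) (c : ℝ) (hc : 0 ≤ c)
    (hF : ∀ v ∈ F, T v = 0) (hW : ∀ v ∈ Fᗮ, T v ∈ Fᗮ)
    (hsy : ∀ v ∈ Fᗮ, ∀ w ∈ Fᗮ, ⟪T v, w⟫ = ⟪v, T w⟫)
    (hq : ∀ v ∈ Fᗮ, |(⟪v, T v⟫).re| ≤ c * ‖v‖ ^ 2) :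
    ‖T‖ ≤ c := by
  have step1 : ∀ φ ∈ Fᗮ, ∀ ψ ∈ Fᗮ, (⟪φ, T ψ⟫).re ≤ c * (‖φ‖ ^ 2 + ‖ψ‖ ^ 2) / 2 := by
    intro φ hφ ψ hψ
    have hpm : (⟪φ + ψ, T (φ + ψ)⟫).re - (⟪φ - ψ, T (φ - ψ)⟫).re
        = 4 * (⟪φ, T ψ⟫).re := by
      have h1 : ⟪ψ, T φ⟫ = (starRingEnd ℂ) ⟪φ, T ψ⟫ := by
        rw [← hsy ψ hψ φ hφ]
        exact (inner_conj_symm _ _).symm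
      simp only [map_add, map_sub, inner_add_left, inner_add_right, inner_sub_left,
        inner_sub_right, h1, Complex.sub_re, Complex.add_re, Complex.conj_re]
      ring
    have hb1 := hq (φ + ψ) (add_mem hφ hψ)
    have hb2 := hq (φ - ψ) (sub_mem hφ hψ)
    have hpar := parallelogram_law_with_norm ℂ φ ψ
    have : 4 * (⟪φ, T ψ⟫).re ≤ c * (‖φ + ψ‖ ^ 2 + ‖φ - ψ‖ ^ 2) := by
      rw [← hpm]
      nlinarith [abs_le.1 hb1, abs_le.1 hb2]
    nlinarith [this, hpar]
  have step2 : ∀ ψ ∈ Fᗮ, ‖T ψ‖ ≤ c * ‖ψ‖ := by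
    intro ψ hψ
    rcases eq_or_ne (T ψ) 0 with h0 | h0
    · rw [h0, norm_zero]; positivity
    have hψ0 : ψ ≠ 0 := by rintro rfl; simp at h0
    set r : ℝ := ‖ψ‖ / ‖T ψ‖ with hr
    have hrpos : 0 < r := div_pos (norm_pos_iff.2 hψ0) (norm_pos_iff.2 h0)
    set φ : E := (r : ℂ) • T ψ with hφdef
    have hφ : φ ∈ Fᗮ := Submodule.smul_mem _ _ (hW ψ hψ)
    have hφn : ‖φ‖ = ‖ψ‖ := by
      rw [hφdef, norm_smul, Complex.norm_real, Real.norm_of_nonneg hrpos.le, hr,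
        div_mul_cancel₀ _ (norm_ne_zero_iff.2 h0)]
    have hre : (⟪φ, T ψ⟫).re = ‖ψ‖ * ‖T ψ‖ := by
      rw [hφdef, inner_smul_left, Complex.conj_ofReal]
      have : ⟪T ψ, T ψ⟫ = (‖T ψ‖ : ℂ) ^ 2 := inner_self_eq_norm_sq_to_K _
      rw [this]
      have h2 : (((r : ℂ)) * (‖T ψ‖ : ℂ) ^ 2).re = r * ‖T ψ‖ ^ 2 := by norm_cast
      have hT0 : ‖T ψ‖ ≠ 0 := norm_ne_zero_iff.2 h0
      rw [h2, hr]
      field_simp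
    have := step1 φ hφ ψ hψ
    rw [hre, hφn] at this
    have h2 : ‖ψ‖ * ‖T ψ‖ ≤ c * ‖ψ‖ ^ 2 := by nlinarith
    have hψpos : 0 < ‖ψ‖ := norm_pos_iff.2 hψ0
    nlinarith
  refine T.opNorm_le_bound hc fun v => ?_
  set v₀ : E := (Submodule.orthogonalProjectionOnto F v : E)
  have hv₀ : v₀ ∈ F := (Submodule.orthogonalProjectionOnto F v).2
  have hv₁ : v - v₀ ∈ Fᗮ := Submodule.sub_starProjection_mem_orthogonal (K := F) v
  have hTv : T v = T (v - v₀) := by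
    rw [map_sub, hF v₀ hv₀, sub_zero]
  have hnle : ‖v - v₀‖ ≤ ‖v‖ := by
    have hinner : (⟪v₀, v - v₀⟫) = 0 := Submodule.inner_right_of_mem_orthogonal hv₀ hv₁
    have := @norm_add_sq ℂ _ _ _ _ v₀ (v - v₀)
    have hv : v₀ + (v - v₀) = v := by abel
    rw [hv, hinner, map_zero] at this
    nlinarith [norm_nonneg v, norm_nonneg (v - v₀), norm_nonneg v₀]
  calc ‖T v‖ = ‖T (v - v₀)‖ := by rw [hTv]
    _ ≤ c * ‖v - v₀‖ := step2 _ hv₁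
    _ ≤ c * ‖v‖ := by nlinarith

end AuxNorm

section AuxRep

variable {G : Type u} [Group G] {E : Type v} [NormedAddCommGroup E] [InnerProductSpace ℂ E]

/-- The submodule of `ρ`-invariant vectors. -/
def invariantSub (ρ : G →* (E ≃ₗᵢ[ℂ] E)) : Submodule ℂ E where
  carrier := {w | ∀ g, ρ g w = w}
  add_mem' := fun ha hb g => by rw [map_add, ha g, hb g]
  zero_mem' := fun g => map_zero (ρ g)
  smul_mem' := fun c w hw g => by rw [_root_.map_smul, hw g]

lemma rho_mul_apply (ρ : G →* (E ≃ₗᵢ[ℂ] E)) (a b : G) (v : E) :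
    ρ a (ρ b v) = ρ (a * b) v := by rw [map_mul]; rfl

lemma rho_one_apply (ρ : G →* (E ≃ₗᵢ[ℂ] E)) (v : E) : ρ (1 : G) v = v := by
  rw [map_one]; rfl

lemma mapsOrth (ρ : G →* (E ≃ₗᵢ[ℂ] E)) (g : G) {v : E} (hv : v ∈ (invariantSub ρ)ᗮ) :
    ρ g v ∈ (invariantSub ρ)ᗮ := by
  rw [Submodule.mem_orthogonal] at hv ⊢
  intro u hu
  calc ⟪u, ρ g v⟫ = ⟪ρ g u, ρ g v⟫ := by rw [hu g]
    _ = ⟪u, v⟫ := (ρ g).inner_map_map u v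
    _ = 0 := hv u hu

/-- `ρ g` restricted to the orthogonal complement of the invariant vectors. -/
noncomputable def resAut (ρ : G →* (E ≃ₗᵢ[ℂ] E)) (g : G) :
    (invariantSub ρ)ᗮ ≃ₗᵢ[ℂ] (invariantSub ρ)ᗮ where
  toFun v := ⟨ρ g v.1, mapsOrth ρ g v.2⟩
  invFun v := ⟨ρ g⁻¹ v.1, mapsOrth ρ g⁻¹ v.2⟩
  map_add' v w := Subtype.ext (map_add (ρ g) v.1 w.1)
  map_smul' c v := Subtype.ext (_root_.map_smul (ρ g) c v.1)
  left_inv v := Subtype.ext (by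
    show ρ g⁻¹ (ρ g v.1) = v.1
    rw [rho_mul_apply, inv_mul_cancel, rho_one_apply])
  right_inv v := Subtype.ext (by
    show ρ g (ρ g⁻¹ v.1) = v.1
    rw [rho_mul_apply, mul_inv_cancel, rho_one_apply])
  norm_map' v := (ρ g).norm_map v.1

/-- The restriction of `ρ` to the orthogonal complement of the invariant vectors. -/
noncomputable def resRep (ρ : G →* (E ≃ₗᵢ[ℂ] E)) :
    G →* ((invariantSub ρ)ᗮ ≃ₗᵢ[ℂ] (invariantSub ρ)ᗮ) where
  toFun := resAut ρ
  map_one' := by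
    ext v
    exact rho_one_apply ρ v.1
  map_mul' g h := by
    ext v
    show ρ (g * h) v.1 = _
    rw [LinearIsometryEquiv.coe_mul]
    exact (rho_mul_apply ρ g h v.1).symm

lemma resRep_apply (ρ : G →* (E ≃ₗᵢ[ℂ] E)) (g : G) (v : (invariantSub ρ)ᗮ) :
    (resRep ρ g v : E) = ρ g v.1 := rfl

lemma resRep_no_invariants (ρ : G →* (E ≃ₗᵢ[ℂ] E)) :
    ∀ w : (invariantSub ρ)ᗮ, (∀ g : G, resRep ρ g w = w) → w = 0 := by
  intro w hw
  have h1 : (w : E) ∈ invariantSub ρ := by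
    intro g
    have := congrArg (Subtype.val) (hw g)
    rwa [resRep_apply] at this
  have h2 : (w : E) = 0 :=
    inner_self_eq_zero.mp (Submodule.inner_right_of_mem_orthogonal h1 w.2)
  exact Subtype.ext h2

end AuxRep

set_option maxHeartbeats 2000000 in
set_option synthInstance.maxHeartbeats 200000 in
/-- **Spectral gap from the Kazhdan constant.** For a compact group `G` generated by a finite
symmetric set `S ∋ 1` and a finite-dimensional unitary representation `ρ`, the essential norm
of the uniform measure on `S` is at most `1 - K(G;S)²/(2|S|)`; here the moment operator of the
Haar probability measure `μ` is the projector onto the invariant vectors. -/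
theorem spectral_gap_from_kazhdan
    {G : Type u} [Group G] [TopologicalSpace G] [IsTopologicalGroup G] [CompactSpace G]
    [MeasurableSpace G] [BorelSpace G]
    (μ : Measure G) [IsProbabilityMeasure μ] [μ.IsMulLeftInvariant]
    (S : Finset G) (hne : S.Nonempty) (hone : (1 : G) ∈ S) (hsym : ∀ s ∈ S, s⁻¹ ∈ S)
    (hgen : Subgroup.closure (S : Set G) = ⊤)
    {E : Type v} [NormedAddCommGroup E] [InnerProductSpace ℂ E] [FiniteDimensional ℂ E]
    (ρ : G →* (E ≃ₗᵢ[ℂ] E))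
    (hcont : Continuous fun g : G => (ρ g).toLinearIsometry.toContinuousLinearMap) :
    ‖(S.card : ℂ)⁻¹ • (∑ s ∈ S, (ρ s).toLinearIsometry.toContinuousLinearMap)
        - ∫ g, (ρ g).toLinearIsometry.toContinuousLinearMap ∂μ‖
      ≤ 1 - (kazhdanConstant.{u, v} G (S : Set G)) ^ 2 / (2 * S.card) := by
  classical
  set f : G → (E →L[ℂ] E) := fun g => (ρ g).toLinearIsometry.toContinuousLinearMap with hfdef
  have hfapp : ∀ g v, f g v = ρ g v := fun g v => rfl
  set A : E →L[ℂ] E := (S.card : ℂ)⁻¹ • (∑ s ∈ S, f s) with hAdef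
  set P : E →L[ℂ] E := ∫ g, f g ∂μ with hPdef
  set KSet : Set ℝ := {ε : ℝ | 0 ≤ ε ∧
    ∀ (E' : Type v) [NormedAddCommGroup E'] [InnerProductSpace ℂ E'] [CompleteSpace E']
      (ρ' : G →* (E' ≃ₗᵢ[ℂ] E')),
      (∀ w : E', (∀ g : G, ρ' g w = w) → w = 0) →
      ∀ ψ : E', ‖ψ‖ = 1 → ∃ g ∈ (S : Set G), ε ≤ ‖ρ' g ψ - ψ‖} with hKSetdef
  have hK : kazhdanConstant.{u, v} G (S : Set G) = sSup KSet := rfl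
  have hcard0 : (0 : ℝ) < S.card := by
    exact_mod_cast Finset.card_pos.mpr hne
  have hcardC : ((S.card : ℂ)) ≠ 0 :=
    Nat.cast_ne_zero.mpr (Finset.card_pos.mpr hne).ne'
  -- integrability
  have hfm : Integrable f μ := by
    refine (integrable_const (1 : ℝ)).mono' hcont.aestronglyMeasurable ?_
    filter_upwards with g
    simpa using (ρ g).toLinearIsometry.norm_toContinuousLinearMap_le
  have hintv : ∀ v : E, Integrable (fun g => ρ g v) μ := fun v =>
    (ContinuousLinearMap.apply ℂ E v).integrable_comp hfm
  have hPapp : ∀ v : E, P v = ∫ g, ρ g v ∂μ := fun v =>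
    ContinuousLinearMap.integral_apply hfm v
  set F : Submodule ℂ E := invariantSub ρ with hFdef
  -- A fixes F
  have hAfix : ∀ w ∈ F, A w = w := by
    intro w hw
    have hconst : ∀ s ∈ S, f s w = w := fun s _ => hw s
    rw [hAdef, ContinuousLinearMap.smul_apply, ContinuousLinearMap.sum_apply,
      Finset.sum_congr rfl hconst, Finset.sum_const, ← Nat.cast_smul_eq_nsmul ℂ, smul_smul,
      inv_mul_cancel₀ hcardC, one_smul]
  -- P fixes F
  have hPfix : ∀ w ∈ F, P w = w := by
    intro w hw
    rw [hPapp]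
    have hconst : (fun g : G => ρ g w) = fun _ => w := funext fun g => hw g
    rw [hconst, integral_const, probReal_univ, one_smul]
  -- P v is invariant
  have hPinv : ∀ h v, ρ h (P v) = P v := by
    intro h v
    have h1 : ρ h (P v) = f h (P v) := rfl
    rw [h1, hPapp]
    calc f h (∫ g, ρ g v ∂μ) = ∫ g, f h (ρ g v) ∂μ :=
          ((f h).integral_comp_comm (hintv v)).symm
      _ = ∫ g, ρ (h * g) v ∂μ := by
          congr 1; funext g; rw [hfapp, rho_mul_apply]
      _ = ∫ g, ρ g v ∂μ := integral_mul_left_eq_self (fun g => ρ g v) h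
  -- P vanishes on Fᗮ
  have hPzero : ∀ v ∈ Fᗮ, P v = 0 := by
    intro v hv
    have hmem : P v ∈ F := fun g => hPinv g v
    have hvan : ∀ g : G, ⟪P v, ρ g v⟫ = (0 : ℂ) := by
      intro g
      calc ⟪P v, ρ g v⟫ = ⟪ρ g (P v), ρ g v⟫ := by rw [hPinv g v]
        _ = ⟪P v, v⟫ := (ρ g).inner_map_map _ _
        _ = 0 := Submodule.inner_right_of_mem_orthogonal hmem hv
    have h0 : ⟪P v, P v⟫ = (0 : ℂ) := by
      have h1 : ∫ g, ⟪P v, ρ g v⟫ ∂μ = ⟪P v, ∫ g, ρ g v ∂μ⟫ :=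
        integral_inner (hintv v) (P v)
      rw [← hPapp v] at h1
      rw [← h1]
      simp [hvan]
    exact inner_self_eq_zero.mp h0
  -- A maps Fᗮ to Fᗮ
  have hAW : ∀ v ∈ Fᗮ, A v ∈ Fᗮ := by
    intro v hv
    rw [hAdef, ContinuousLinearMap.smul_apply, ContinuousLinearMap.sum_apply]
    exact Submodule.smul_mem _ _ (Submodule.sum_mem _ fun s _ => mapsOrth ρ s hv)
  set T : E →L[ℂ] E := A - P with hTdef
  have hTapp : ∀ v, T v = A v - P v := fun v => rfl
  have hTF : ∀ v ∈ F, T v = 0 := by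
    intro v hv; rw [hTapp, hAfix v hv, hPfix v hv, sub_self]
  have hTW : ∀ v ∈ Fᗮ, T v = A v := by
    intro v hv; rw [hTapp, hPzero v hv, sub_zero]
  have hTWmem : ∀ v ∈ Fᗮ, T v ∈ Fᗮ := by
    intro v hv; rw [hTW v hv]; exact hAW v hv
  -- symmetry of A
  have hAsym : ∀ v w : E, ⟪A v, w⟫ = ⟪v, A w⟫ := by
    intro v w
    have hinv : ∀ (s : G) (x y : E), ⟪ρ s x, y⟫ = ⟪x, ρ s⁻¹ y⟫ := by
      intro s x y
      calc ⟪ρ s x, y⟫ = ⟪ρ s x, ρ s (ρ s⁻¹ y)⟫ := by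
            rw [rho_mul_apply, mul_inv_cancel, rho_one_apply]
        _ = ⟪x, ρ s⁻¹ y⟫ := (ρ s).inner_map_map _ _
    rw [hAdef, ContinuousLinearMap.smul_apply, ContinuousLinearMap.sum_apply,
      ContinuousLinearMap.smul_apply, ContinuousLinearMap.sum_apply,
      inner_smul_left, inner_smul_right, sum_inner, inner_sum]
    congr 1
    · simp
    rw [show (∑ s ∈ S, ⟪f s v, w⟫) = ∑ s ∈ S, ⟪v, ρ s⁻¹ w⟫ from
      Finset.sum_congr rfl fun s _ => hinv s v w]
    refine Finset.sum_nbij' (fun s => s⁻¹) (fun s => s⁻¹) ?_ ?_ ?_ ?_ ?_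
    · intro a ha; exact hsym a ha
    · intro a ha; exact hsym a ha
    · intro a _; exact inv_inv a
    · intro a _; exact inv_inv a
    · intro a _; rfl
  have hTsym : ∀ v ∈ Fᗮ, ∀ w ∈ Fᗮ, ⟪T v, w⟫ = ⟪v, T w⟫ := by
    intro v hv w hw; rw [hTW v hv, hTW w hw]; exact hAsym v w
  -- norm of A
  have hAnorm : ‖A‖ ≤ 1 := by
    refine A.opNorm_le_bound zero_le_one fun v => ?_
    have h1 : A v = (S.card : ℂ)⁻¹ • ∑ s ∈ S, f s v := by
      rw [hAdef, ContinuousLinearMap.smul_apply, ContinuousLinearMap.sum_apply]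
    rw [one_mul, h1, norm_smul, norm_inv, Complex.norm_natCast]
    calc (S.card : ℝ)⁻¹ * ‖∑ s ∈ S, f s v‖ ≤ (S.card : ℝ)⁻¹ * ∑ s ∈ S, ‖f s v‖ := by
          gcongr
          exact norm_sum_le _ _
      _ = (S.card : ℝ)⁻¹ * ∑ _s ∈ S, ‖v‖ := by
          congr 1
          exact Finset.sum_congr rfl fun s _ => (ρ s).norm_map v
      _ = ‖v‖ := by
          rw [Finset.sum_const, nsmul_eq_mul, ← mul_assoc, inv_mul_cancel₀ hcard0.ne', one_mul]
  have hT1 : ‖T‖ ≤ 1 := by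
    refine norm_le_of_quadratic_bound F T 1 zero_le_one hTF hTWmem hTsym ?_
    intro v hv
    calc |(⟪v, T v⟫).re| ≤ ‖(⟪v, T v⟫ : ℂ)‖ := Complex.abs_re_le_norm _
      _ ≤ ‖v‖ * ‖T v‖ := norm_inner_le_norm _ _
      _ ≤ ‖v‖ * (1 * ‖v‖) := by
          refine mul_le_mul_of_nonneg_left ?_ (norm_nonneg v)
          rw [hTW v hv]
          calc ‖A v‖ ≤ ‖A‖ * ‖v‖ := A.le_opNorm v
            _ ≤ 1 * ‖v‖ := mul_le_mul_of_nonneg_right hAnorm (norm_nonneg v)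
      _ = 1 * ‖v‖ ^ 2 := by ring
  by_cases hbdd : BddAbove KSet
  swap
  · rw [hK, Real.sSup_of_not_bddAbove hbdd]
    simpa using hT1
  by_cases hwit : ∀ (E' : Type v) [NormedAddCommGroup E'] [InnerProductSpace ℂ E']
      [CompleteSpace E'] (ρ' : G →* (E' ≃ₗᵢ[ℂ] E')),
      (∀ w : E', (∀ g : G, ρ' g w = w) → w = 0) → ∀ ψ : E', ‖ψ‖ ≠ 1
  · exfalso
    obtain ⟨m, hm⟩ := hbdd
    have hmem : max (m + 1) 0 ∈ KSet := by
      refine ⟨le_max_right _ _, ?_⟩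
      intro E' _ _ _ ρ' hinv ψ hψ
      exact absurd hψ (hwit E' ρ' hinv ψ)
    have h1 := hm hmem
    have h2 := le_max_left (m + 1) (0 : ℝ)
    linarith
  have hle2 : ∀ ε ∈ KSet, ε ≤ 2 := by
    intro ε hε
    by_contra hcgt
    push_neg at hcgt
    refine hwit ?_
    intro E' _ _ _ ρ' hinv ψ
    by_contra hψ1
    obtain ⟨g, _, hge⟩ := hε.2 E' ρ' hinv ψ hψ1
    have hb : ‖ρ' g ψ - ψ‖ ≤ 2 := by
      calc ‖ρ' g ψ - ψ‖ ≤ ‖ρ' g ψ‖ + ‖ψ‖ := norm_sub_le _ _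
        _ = 2 := by rw [(ρ' g).norm_map, hψ1]; norm_num
    linarith
  have hS2 : (2 : ℝ) ≤ S.card := by
    by_contra hcgt
    push_neg at hcgt
    have hcard1 : S.card = 1 := by
      have h1 : 1 ≤ S.card := Finset.card_pos.mpr hne
      have h2 : S.card < 2 := by exact_mod_cast hcgt
      omega
    obtain ⟨a, ha⟩ := Finset.card_eq_one.mp hcard1
    have ha1 : a = 1 := by
      have := hone
      rw [ha, Finset.mem_singleton] at this
      exact this.symm
    subst ha1
    have hGtriv : ∀ g : G, g = 1 := by
      intro g
      have hmem : g ∈ (⊤ : Subgroup G) := trivial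
      rw [← hgen, ha] at hmem
      simpa [Subgroup.closure_singleton_one, Subgroup.mem_bot] using hmem
    refine hwit ?_
    intro E' _ _ _ ρ' hinv ψ
    have : ψ = 0 := hinv ψ (fun g => by rw [hGtriv g, rho_one_apply])
    rw [this, norm_zero]
    norm_num
  -- the main estimate
  have hmain : ∀ ε ∈ KSet, ‖T‖ ≤ 1 - ε ^ 2 / (2 * S.card) := by
    intro ε hεK
    obtain ⟨hε0, hεP⟩ := hεK
    have hε2 : ε ≤ 2 := hle2 ε ⟨hε0, hεP⟩
    have hε4 : ε ^ 2 ≤ 4 := by nlinarith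
    set c : ℝ := 1 - ε ^ 2 / (2 * S.card) with hcdef
    have hc0 : 0 ≤ c := by
      have hd : ε ^ 2 / (2 * S.card) ≤ 1 := by
        rw [div_le_one (by positivity)]
        nlinarith
      simp only [hcdef]
      linarith
    have hunit : ∀ u, ∀ hu : u ∈ Fᗮ, ‖u‖ = 1 → |(⟪u, T u⟫).re| ≤ c := by
      intro u hu hu1
      obtain ⟨g₀, hg₀S, hg₀⟩ := hεP (↥Fᗮ) (resRep ρ) (resRep_no_invariants ρ) ⟨u, hu⟩ hu1
      have hg₀' : ε ≤ ‖ρ g₀ u - u‖ := hg₀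
      -- Rayleigh computation
      have hterm : ∀ s : G, (⟪u, ρ s u⟫).re = 1 - ‖ρ s u - u‖ ^ 2 / 2 := by
        intro s
        have h := @norm_sub_sq ℂ _ _ _ _ (ρ s u) u
        rw [(ρ s).norm_map, hu1] at h
        have h2 : RCLike.re (⟪ρ s u, u⟫) = (⟪u, ρ s u⟫).re := by
          rw [inner_re_symm]; rfl
        rw [h2] at h
        linarith
      have hsumid : (⟪u, T u⟫).re
          = 1 - (∑ s ∈ S, ‖ρ s u - u‖ ^ 2) / (2 * S.card) := by
        rw [hTW u hu, hAdef, ContinuousLinearMap.smul_apply,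
          ContinuousLinearMap.sum_apply, inner_smul_right, inner_sum]
        have hcast : ((S.card : ℂ))⁻¹ = (((S.card : ℝ)⁻¹ : ℝ) : ℂ) := by push_cast; ring
        rw [hcast, Complex.re_ofReal_mul, Complex.re_sum]
        simp only [hfapp]
        rw [Finset.sum_congr rfl fun s _ => hterm s]
        rw [Finset.sum_sub_distrib, Finset.sum_const, nsmul_eq_mul, mul_one,
          ← Finset.sum_div]
        field_simp
      have hlow : ε ^ 2 ≤ ∑ s ∈ S, ‖ρ s u - u‖ ^ 2 := by
        have h1 : ε ^ 2 ≤ ‖ρ g₀ u - u‖ ^ 2 := by nlinarith [norm_nonneg (ρ g₀ u - u)]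
        exact h1.trans (Finset.single_le_sum (f := fun s => ‖ρ s u - u‖ ^ 2)
          (fun s _ => sq_nonneg _) (Finset.mem_coe.mp hg₀S))
      have hupp : ∑ s ∈ S, ‖ρ s u - u‖ ^ 2 ≤ 4 * ((S.card : ℝ) - 1) := by
        have h1 : ‖ρ (1 : G) u - u‖ ^ 2 = 0 := by
          rw [rho_one_apply, sub_self, norm_zero]; norm_num
        rw [← Finset.add_sum_erase S _ hone, h1, zero_add]
        calc ∑ s ∈ S.erase 1, ‖ρ s u - u‖ ^ 2 ≤ ∑ s ∈ S.erase 1, 4 := by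
              refine Finset.sum_le_sum fun s _ => ?_
              have : ‖ρ s u - u‖ ≤ 2 := by
                calc ‖ρ s u - u‖ ≤ ‖ρ s u‖ + ‖u‖ := norm_sub_le _ _
                  _ = 2 := by rw [(ρ s).norm_map, hu1]; norm_num
              nlinarith [norm_nonneg (ρ s u - u)]
          _ = 4 * ((S.card : ℝ) - 1) := by
              rw [Finset.sum_const, nsmul_eq_mul, Finset.card_erase_of_mem hone]
              have h1 : 1 ≤ S.card := Finset.card_pos.mpr hne
              push_cast [Nat.cast_sub h1]
              ring
      rw [hsumid]
      rw [abs_le]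
      constructor
      · -- lower bound
        have hk : (0 : ℝ) < 2 * S.card := by positivity
        have hsplit : (∑ s ∈ S, ‖ρ s u - u‖ ^ 2) / (2 * S.card) + ε ^ 2 / (2 * S.card)
            = ((∑ s ∈ S, ‖ρ s u - u‖ ^ 2) + ε ^ 2) / (2 * S.card) := (add_div _ _ _).symm
        have hdb : ((∑ s ∈ S, ‖ρ s u - u‖ ^ 2) + ε ^ 2) / (2 * S.card) ≤ 2 := by
          rw [div_le_iff₀ hk]
          nlinarith
        simp only [hcdef]
        linarith
      · simp only [hcdef]
        gcongr
    refine norm_le_of_quadratic_bound F T c hc0 hTF hTWmem hTsym ?_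
    intro v hv
    rcases eq_or_ne v 0 with rfl | hv0
    · simp
    have hvn : (0 : ℝ) < ‖v‖ := norm_pos_iff.mpr hv0
    set un : E := ((‖v‖ : ℂ))⁻¹ • v with hudef
    have huW : un ∈ Fᗮ := Submodule.smul_mem _ _ hv
    have hu1 : ‖un‖ = 1 := by
      rw [hudef, norm_smul, norm_inv, Complex.norm_real, Real.norm_of_nonneg hvn.le,
        inv_mul_cancel₀ hvn.ne']
    have hvu : v = ((‖v‖ : ℂ)) • un := by
      rw [hudef, smul_smul, mul_inv_cancel₀ (by exact_mod_cast hvn.ne'), one_smul]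
    have hscal : (⟪v, T v⟫) = ((‖v‖ : ℂ)) ^ 2 * ⟪un, T un⟫ := by
      conv_lhs => rw [hvu]
      rw [_root_.map_smul, inner_smul_left, inner_smul_right, Complex.conj_ofReal]
      ring
    rw [hscal]
    have hre2 : (((‖v‖ : ℂ)) ^ 2 * ⟪un, T un⟫).re = ‖v‖ ^ 2 * (⟪un, T un⟫).re := by
      rw [← Complex.ofReal_pow, Complex.re_ofReal_mul]
    rw [hre2, abs_mul, abs_of_nonneg (by positivity : (0 : ℝ) ≤ ‖v‖ ^ 2)]
    calc ‖v‖ ^ 2 * |(⟪un, T un⟫).re| ≤ ‖v‖ ^ 2 * c :=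
          mul_le_mul_of_nonneg_left (hunit un huW hu1) (by positivity)
      _ = c * ‖v‖ ^ 2 := by ring
  -- final assembly
  have h0mem : (0 : ℝ) ∈ KSet := by
    refine ⟨le_refl 0, ?_⟩
    intro E' _ _ _ ρ' _ ψ _
    exact ⟨1, Finset.mem_coe.mpr hone, by positivity⟩
  have hTle : (0 : ℝ) ≤ 1 - ‖T‖ := by linarith
  set B : ℝ := Real.sqrt (2 * S.card * (1 - ‖T‖)) with hB
  have hub : ∀ ε ∈ KSet, ε ≤ B := by
    intro ε hε
    have h := hmain ε hε
    have hk : (0 : ℝ) < 2 * S.card := by positivity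
    have hsq : ε ^ 2 ≤ 2 * S.card * (1 - ‖T‖) := by
      have hd : ε ^ 2 / (2 * S.card) ≤ 1 - ‖T‖ := by linarith
      calc ε ^ 2 = ε ^ 2 / (2 * S.card) * (2 * S.card) := by field_simp
        _ ≤ (1 - ‖T‖) * (2 * S.card) := mul_le_mul_of_nonneg_right hd hk.le
        _ = 2 * S.card * (1 - ‖T‖) := by ring
    calc ε = Real.sqrt (ε ^ 2) := (Real.sqrt_sq hε.1).symm
      _ ≤ B := Real.sqrt_le_sqrt hsq
  have hKB : sSup KSet ≤ B := csSup_le ⟨0, h0mem⟩ hub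
  have hK0 : (0 : ℝ) ≤ sSup KSet := le_csSup hbdd h0mem
  have hBsq : B ^ 2 = 2 * S.card * (1 - ‖T‖) := Real.sq_sqrt (by positivity)
  have hKsq : (sSup KSet) ^ 2 ≤ 2 * S.card * (1 - ‖T‖) := by
    calc (sSup KSet) ^ 2 ≤ B ^ 2 := by nlinarith [Real.sqrt_nonneg (2 * S.card * (1 - ‖T‖))]
      _ = _ := hBsq
  rw [hK]
  have hk : (0 : ℝ) < 2 * S.card := by positivity
  have hfin : (sSup KSet) ^ 2 / (2 * S.card) ≤ 1 - ‖T‖ := by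
    rw [div_le_iff₀ hk]
    nlinarith
  linarith
end

section
/- Let H = Σ_i Q_i be a finite sum of orthogonal projectors Q_i on a Hilbert space. Then for every vector ψ, 1 − 4⟨ψ|H|ψ⟩ ≤ ‖∏_i (1 − Q_i)ψ‖², where the product is taken in any fixed order. -/
/-- Two-term Cauchy–Schwarz: `a*b + c*d ≤ √((a²+c²)(b²+d²))` for nonnegative reals. -/
private lemma two_term_cs {a b c d : ℝ} (ha : 0 ≤ a) (hb : 0 ≤ b) (hc : 0 ≤ c) (hd : 0 ≤ d) :
    a * b + c * d ≤ Real.sqrt ((a ^ 2 + c ^ 2) * (b ^ 2 + d ^ 2)) := by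
  apply (Real.le_sqrt (by positivity) (by positivity)).mpr
  nlinarith [sq_nonneg (a * d - b * c), mul_nonneg ha hb, mul_nonneg hc hd]

/-- **Gao's quantum union bound** (converse of the detectability lemma). If `H = Σᵢ Qᵢ` is a
finite sum of orthogonal projectors on a Hilbert space, then for every unit vector `ψ` and any
fixed ordering (given by a list `l` enumerating the index set) of the product,
`1 - 4⟨ψ|H|ψ⟩ ≤ ‖∏ᵢ (1 - Qᵢ) ψ‖²`. -/
theorem quantum_union_bound
    {E : Type*} [NormedAddCommGroup E] [InnerProductSpace ℂ E] [CompleteSpace E]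
    {ι : Type*} [Fintype ι]
    (Q : ι → (E →L[ℂ] E))
    (hidem : ∀ i, IsIdempotentElem (Q i))
    (hsa : ∀ i, IsSelfAdjoint (Q i))
    (l : List ι) (hnodup : l.Nodup) (hmem : ∀ i : ι, i ∈ l)
    (ψ : E) (hψ : ‖ψ‖ = 1) :
    1 - 4 * (inner ℂ ψ ((∑ i, Q i) ψ) : ℂ).re
      ≤ ‖((l.map fun i => (1 : E →L[ℂ] E) - Q i).prod) ψ‖ ^ 2 := by
  classical
  have hsym : ∀ i (x y : E), (inner ℂ (Q i x) y : ℂ) = inner ℂ x (Q i y) := fun i =>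
    (ContinuousLinearMap.isSelfAdjoint_iff_isSymmetric.mp (hsa i))
  have hQQ : ∀ i (y : E), Q i (Q i y) = Q i y := by
    intro i y
    calc Q i (Q i y) = (Q i * Q i) y := rfl
    _ = Q i y := by rw [hidem i]
  -- ⟨y, Qᵢ y⟩ is real and equals ‖Qᵢ y‖²
  have hip : ∀ i (y : E), (inner ℂ y (Q i y) : ℂ).re = ‖Q i y‖ ^ 2 := by
    intro i y
    have h1 : (inner ℂ y (Q i y) : ℂ) = inner ℂ (Q i y) (Q i y) := by
      conv_lhs => rw [← hQQ i y, ← hsym i y (Q i y)]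
    rw [h1]
    simpa using inner_self_eq_norm_sq (𝕜 := ℂ) (Q i y)
  -- Pythagoras: ‖y - Qᵢ y‖² = ‖y‖² - ‖Qᵢ y‖²
  have hpyth : ∀ i (y : E), ‖y - Q i y‖ ^ 2 = ‖y‖ ^ 2 - ‖Q i y‖ ^ 2 := by
    intro i y
    have h1 := norm_sub_sq (𝕜 := ℂ) y (Q i y)
    simp only [RCLike.re_to_complex] at h1
    rw [h1, hip i y]; ring
  -- the partial-product vectors
    -- x m = (∏_{i ∈ m} (1 - Q i)) ψ
  set x : List ι → E := fun m => ((m.map fun i => (1 : E →L[ℂ] E) - Q i).prod) ψ with hx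
  have hxnil : x [] = ψ := by simp [hx]
  have hxcons : ∀ i m, x (i :: m) = x m - Q i (x m) := by
    intro i m
    simp only [hx, List.map_cons, List.prod_cons, ContinuousLinearMap.mul_apply,
      ContinuousLinearMap.sub_apply, ContinuousLinearMap.one_apply]
  -- nonnegativity of the partial error sums
  have hsum_nonneg : ∀ m : List ι, 0 ≤ (m.map fun i => ‖Q i ψ‖ ^ 2).sum := by
    intro m
    apply List.sum_nonneg
    intro a ha
    obtain ⟨j, _, rfl⟩ := List.mem_map.mp ha
    positivity
  -- the main induction
  have main : ∀ m : List ι, ‖x m‖ ≤ 1 ∧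
      ‖(1 : ℂ) - inner ℂ ψ (x m)‖ ≤
        Real.sqrt ((m.map fun i => ‖Q i ψ‖ ^ 2).sum * (1 - ‖x m‖ ^ 2)) := by
    intro m
    induction m with
    | nil =>
      constructor
      · rw [hxnil, hψ]
      · have : (inner ℂ ψ (x []) : ℂ) = 1 := by
          rw [hxnil]
          rw [inner_self_eq_norm_sq_to_K, hψ]
          norm_num
        rw [this]
        simp [Real.sqrt_nonneg]
    | cons i m ih =>
      obtain ⟨ih1, ih2⟩ := ih
      have hnormsq : ‖x (i :: m)‖ ^ 2 = ‖x m‖ ^ 2 - ‖Q i (x m)‖ ^ 2 := by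
        rw [hxcons]; exact hpyth i (x m)
      have h1 : ‖x (i :: m)‖ ≤ 1 := by
        nlinarith [norm_nonneg (x (i :: m)), norm_nonneg (x m), sq_nonneg ‖Q i (x m)‖]
      refine ⟨h1, ?_⟩
      -- triangle inequality
      have htri : ‖(1 : ℂ) - inner ℂ ψ (x (i :: m))‖ ≤
          ‖(1 : ℂ) - inner ℂ ψ (x m)‖ + ‖(inner ℂ ψ (Q i (x m)) : ℂ)‖ := by
        have heq : (1 : ℂ) - inner ℂ ψ (x (i :: m)) =
            ((1 : ℂ) - inner ℂ ψ (x m)) + inner ℂ ψ (Q i (x m)) := by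
          rw [hxcons, inner_sub_right]; ring
        rw [heq]
        exact norm_add_le _ _
      have hcs : ‖(inner ℂ ψ (Q i (x m)) : ℂ)‖ ≤ ‖Q i ψ‖ * ‖Q i (x m)‖ := by
        have heq : (inner ℂ ψ (Q i (x m)) : ℂ) = inner ℂ (Q i ψ) (Q i (x m)) := by
          conv_lhs => rw [← hQQ i (x m), ← hsym i ψ (Q i (x m))]
        rw [heq]
        exact norm_inner_le_norm _ _
      have hkey : Real.sqrt ((m.map fun j => ‖Q j ψ‖ ^ 2).sum * (1 - ‖x m‖ ^ 2))
            + ‖Q i ψ‖ * ‖Q i (x m)‖ ≤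
          Real.sqrt (((m.map fun j => ‖Q j ψ‖ ^ 2).sum + ‖Q i ψ‖ ^ 2)
            * ((1 - ‖x m‖ ^ 2) + ‖Q i (x m)‖ ^ 2)) := by
        have hs := hsum_nonneg m
        have ht : (0 : ℝ) ≤ 1 - ‖x m‖ ^ 2 := by nlinarith [norm_nonneg (x m)]
        have := two_term_cs (a := Real.sqrt ((m.map fun j => ‖Q j ψ‖ ^ 2).sum))
          (b := Real.sqrt (1 - ‖x m‖ ^ 2)) (c := ‖Q i ψ‖) (d := ‖Q i (x m)‖)
          (Real.sqrt_nonneg _) (Real.sqrt_nonneg _) (norm_nonneg _) (norm_nonneg _)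
        rwa [← Real.sqrt_mul hs, Real.sq_sqrt hs, Real.sq_sqrt ht] at this
      have hsumcons : ((i :: m).map fun j => ‖Q j ψ‖ ^ 2).sum =
          (m.map fun j => ‖Q j ψ‖ ^ 2).sum + ‖Q i ψ‖ ^ 2 := by
        simp [List.map_cons, List.sum_cons]; ring
      have hns : 1 - ‖x (i :: m)‖ ^ 2 = (1 - ‖x m‖ ^ 2) + ‖Q i (x m)‖ ^ 2 := by
        rw [hnormsq]; ring
      calc ‖(1 : ℂ) - inner ℂ ψ (x (i :: m))‖
          ≤ ‖(1 : ℂ) - inner ℂ ψ (x m)‖ + ‖(inner ℂ ψ (Q i (x m)) : ℂ)‖ := htri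
        _ ≤ Real.sqrt ((m.map fun j => ‖Q j ψ‖ ^ 2).sum * (1 - ‖x m‖ ^ 2))
            + ‖Q i ψ‖ * ‖Q i (x m)‖ := by gcongr
        _ ≤ _ := by rw [hsumcons, hns]; exact hkey
  obtain ⟨ht1, hmain⟩ := main l
  set t : ℝ := ‖x l‖ with htdef
  have ht0 : 0 ≤ t := norm_nonneg _
  -- identify the sum with ⟨ψ, H ψ⟩
  set ε : ℝ := (inner ℂ ψ ((∑ i, Q i) ψ) : ℂ).re with hε
  have hSε : (l.map fun i => ‖Q i ψ‖ ^ 2).sum = ε := by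
    have huniv : l.toFinset = Finset.univ :=
      Finset.eq_univ_iff_forall.mpr fun i => List.mem_toFinset.mpr (hmem i)
    have h1 : (l.map fun i => ‖Q i ψ‖ ^ 2).sum = ∑ i, ‖Q i ψ‖ ^ 2 := by
      rw [← List.sum_toFinset _ hnodup, huniv]
    rw [h1, hε]
    rw [ContinuousLinearMap.sum_apply, inner_sum, Complex.re_sum]
    exact Finset.sum_congr rfl fun i _ => (hip i ψ).symm
  have hε0 : 0 ≤ ε := hSε ▸ hsum_nonneg l
  -- 1 - t ≤ ‖1 - ⟨ψ, x l⟩‖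
  have hlow : 1 - t ≤ ‖(1 : ℂ) - inner ℂ ψ (x l)‖ := by
    have hcs : ‖(inner ℂ ψ (x l) : ℂ)‖ ≤ t := by
      have := norm_inner_le_norm (𝕜 := ℂ) ψ (x l)
      rwa [hψ, one_mul] at this
    have htri := norm_sub_norm_le (1 : ℂ) ((1 : ℂ) - inner ℂ ψ (x l))
    simp only [norm_one, sub_sub_cancel] at htri
    linarith
  rw [hSε] at hmain
  have hchain : 1 - t ≤ Real.sqrt (ε * (1 - t ^ 2)) := le_trans hlow hmain
  have hsq : (1 - t) ^ 2 ≤ ε * (1 - t ^ 2) := by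
    have h1mt : (0 : ℝ) ≤ 1 - t := by linarith
    have h1t2 : (0:ℝ) ≤ 1 - t ^ 2 := by nlinarith
    have h2 := pow_le_pow_left₀ h1mt hchain 2
    rwa [Real.sq_sqrt (mul_nonneg hε0 h1t2)] at h2
  -- final arithmetic: (1-t)² ≤ ε(1-t)(1+t) ⟹ 1 - 4ε ≤ t²
  rcases le_or_gt 1 t with h | h
  · nlinarith
  · have h1 : 1 - t ≤ ε * (1 + t) := by
      have hpos : 0 < 1 - t := by linarith
      nlinarith
    nlinarith
end

section
/- Let Φ, Φ': L(H) → L(H) be superoperators on a finite-dimensional Hilbert space H. If the composition Φ'∘Φ is self-adjoint (with respect to the Hilbert–Schmidt inner product) and ‖Φ'‖_{1→1} ≤ 1, then ‖Φ'∘Φ‖_{2→2} ≤ ‖Φ‖_{1→1}. -/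
open scoped Matrix
/-- The Schatten 1-norm (trace norm) of a complex matrix: the sum of its singular values,
i.e. of the square roots of the eigenvalues of `Aᴴ * A`. -/
noncomputable def traceNorm {n : Type*} [Fintype n] [DecidableEq n] (A : Matrix n n ℂ) : ℝ :=
  ∑ i, Real.sqrt ((Matrix.isHermitian_conjTranspose_mul_self A).eigenvalues i)

/-- The Schatten 2-norm (Frobenius / Hilbert–Schmidt norm) of a complex matrix. -/
noncomputable def frobeniusNorm {n : Type*} [Fintype n] [DecidableEq n]
    (A : Matrix n n ℂ) : ℝ :=
  Real.sqrt (Matrix.trace (Aᴴ * A)).re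

section aux

lemma sqrt_sum_le {ι : Type*} [Fintype ι] (f : ι → ℝ) (hf : ∀ i, 0 ≤ f i) :
    Real.sqrt (∑ i, f i) ≤ ∑ i, Real.sqrt (f i) := by
  have h1 : ∑ i, f i = ∑ i, Real.sqrt (f i) ^ 2 :=
    Finset.sum_congr rfl fun i _ => (Real.sq_sqrt (hf i)).symm
  rw [h1]
  calc Real.sqrt (∑ i, Real.sqrt (f i) ^ 2)
      ≤ Real.sqrt ((∑ i, Real.sqrt (f i)) ^ 2) :=
        Real.sqrt_le_sqrt (Finset.sum_sq_le_sq_sum_of_nonneg fun i _ => Real.sqrt_nonneg _)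
    _ = ∑ i, Real.sqrt (f i) := Real.sqrt_sq (Finset.sum_nonneg fun i _ => Real.sqrt_nonneg _)

variable {n : Type*} [Fintype n] [DecidableEq n]

lemma trace_herm_eq_sum_eigenvalues {A : Matrix n n ℂ} (hA : A.IsHermitian) :
    Matrix.trace A = ∑ i, (hA.eigenvalues i : ℂ) := by
  conv_lhs => rw [hA.spectral_theorem]
  have h1 : (star (hA.eigenvectorUnitary : Matrix n n ℂ)) * (hA.eigenvectorUnitary : Matrix n n ℂ)
      = 1 := Unitary.coe_star_mul_self hA.eigenvectorUnitary
  rw [Unitary.conjStarAlgAut_apply, Matrix.trace_mul_cycle, h1, Matrix.one_mul, Matrix.trace_diagonal]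
  simp

lemma trace_conj_mul_re (A B : Matrix n n ℂ) :
    (Matrix.trace (Aᴴ * B)).re = ∑ p : n × n, ((starRingEnd ℂ) (A p.1 p.2) * B p.1 p.2).re := by
  rw [Fintype.sum_prod_type, Matrix.trace, Complex.re_sum, Finset.sum_comm]
  congr 1
  ext i
  simp [Matrix.mul_apply, Matrix.diag, Matrix.conjTranspose_apply, Complex.re_sum]

lemma trace_self_mul_re (A : Matrix n n ℂ) :
    (Matrix.trace (Aᴴ * A)).re = ∑ p : n × n, ‖A p.1 p.2‖ ^ 2 := by
  rw [trace_conj_mul_re]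
  congr 1; ext p
  rw [mul_comm, Complex.mul_conj]
  simp [Complex.sq_norm]

lemma frobeniusNorm_nonneg (A : Matrix n n ℂ) : 0 ≤ frobeniusNorm A :=
  Real.sqrt_nonneg _

lemma traceNorm_nonneg (A : Matrix n n ℂ) : 0 ≤ traceNorm A :=
  Finset.sum_nonneg fun _ _ => Real.sqrt_nonneg _

lemma frobeniusNorm_eq_zero {A : Matrix n n ℂ} (h : frobeniusNorm A = 0) : A = 0 := by
  have h2 : (Matrix.trace (Aᴴ * A)).re = 0 := by
    have h0 : 0 ≤ (Matrix.trace (Aᴴ * A)).re := by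
      rw [trace_self_mul_re]; positivity
    have := Real.sqrt_eq_zero h0 |>.mp h
    exact this
  rw [trace_self_mul_re] at h2
  have : ∀ p ∈ (Finset.univ : Finset (n × n)), ‖A p.1 p.2‖ ^ 2 = 0 := by
    intro p _
    have := (Finset.sum_eq_zero_iff_of_nonneg (fun p _ => by positivity)).mp h2
    exact this p (Finset.mem_univ p)
  ext i j
  have := this (i, j) (Finset.mem_univ _)
  simpa using (pow_eq_zero_iff (two_ne_zero)).mp this

/-- Cauchy–Schwarz for the Hilbert–Schmidt inner product (real part form). -/
lemma trace_re_le_frob_mul_frob (A B : Matrix n n ℂ) :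
    (Matrix.trace (Aᴴ * B)).re ≤ frobeniusNorm A * frobeniusNorm B := by
  rw [trace_conj_mul_re]
  have h1 : ∀ p : n × n, ((starRingEnd ℂ) (A p.1 p.2) * B p.1 p.2).re ≤
      ‖A p.1 p.2‖ * ‖B p.1 p.2‖ := by
    intro p
    calc ((starRingEnd ℂ) (A p.1 p.2) * B p.1 p.2).re
        ≤ ‖(starRingEnd ℂ) (A p.1 p.2) * B p.1 p.2‖ := Complex.re_le_norm _
      _ = ‖A p.1 p.2‖ * ‖B p.1 p.2‖ := by
          rw [norm_mul, Complex.norm_conj]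
  calc ∑ p : n × n, ((starRingEnd ℂ) (A p.1 p.2) * B p.1 p.2).re
      ≤ ∑ p : n × n, ‖A p.1 p.2‖ * ‖B p.1 p.2‖ :=
        Finset.sum_le_sum fun p _ => h1 p
    _ ≤ Real.sqrt (∑ p : n × n, ‖A p.1 p.2‖ ^ 2) *
        Real.sqrt (∑ p : n × n, ‖B p.1 p.2‖ ^ 2) :=
        Real.sum_mul_le_sqrt_mul_sqrt _ _ _
    _ = frobeniusNorm A * frobeniusNorm B := by
        rw [frobeniusNorm, frobeniusNorm, trace_self_mul_re, trace_self_mul_re]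

/-- The Frobenius norm is at most the trace norm. -/
lemma frobeniusNorm_le_traceNorm (A : Matrix n n ℂ) : frobeniusNorm A ≤ traceNorm A := by
  have hlam : ∀ i, 0 ≤ (Matrix.isHermitian_conjTranspose_mul_self A).eigenvalues i :=
    fun i => Matrix.eigenvalues_conjTranspose_mul_self_nonneg A i
  have htr : (Matrix.trace (Aᴴ * A)).re =
      ∑ i, (Matrix.isHermitian_conjTranspose_mul_self A).eigenvalues i := by
    have := trace_herm_eq_sum_eigenvalues (Matrix.isHermitian_conjTranspose_mul_self A)
    rw [this, Complex.re_sum]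
    simp
  rw [frobeniusNorm, htr, traceNorm]
  exact sqrt_sum_le _ hlam

end aux

/-- **Riesz–Thorin + duality for self-adjoint compositions.** Let `Φ, Φ'` be superoperators on
`L(H) = Matrix n n ℂ`. If `Φ' ∘ Φ` is self-adjoint with respect to the Hilbert–Schmidt inner
product and `‖Φ'‖_{1→1} ≤ 1`, then `‖Φ' ∘ Φ‖_{2→2} ≤ ‖Φ‖_{1→1}` (expressed here via: any
`1→1` norm bound `C` on `Φ` is a `2→2` norm bound on `Φ' ∘ Φ`). -/
theorem two_norm_le_one_norm_of_selfAdjoint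
    {n : Type*} [Fintype n] [DecidableEq n]
    (Φ Φ' : Matrix n n ℂ →ₗ[ℂ] Matrix n n ℂ)
    (hsa : ∀ A B : Matrix n n ℂ,
      Matrix.trace (Aᴴ * Φ' (Φ B)) = Matrix.trace ((Φ' (Φ A))ᴴ * B))
    (hΦ' : ∀ A : Matrix n n ℂ, traceNorm (Φ' A) ≤ traceNorm A)
    (C : ℝ) (hC : 0 ≤ C)
    (hΦ : ∀ A : Matrix n n ℂ, traceNorm (Φ A) ≤ C * traceNorm A) :
    ∀ A : Matrix n n ℂ, frobeniusNorm (Φ' (Φ A)) ≤ C * frobeniusNorm A := by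
  intro A
  -- iterates of the composed map
  set T : Matrix n n ℂ → Matrix n n ℂ := fun X => Φ' (Φ X) with hT
  set B : ℕ → Matrix n n ℂ := fun k => T^[k] A with hBdef
  set a : ℕ → ℝ := fun k => frobeniusNorm (B k) with ha
  have hB : ∀ k, B (k + 1) = Φ' (Φ (B k)) := by
    intro k
    simp only [hBdef, Function.iterate_succ_apply']
    rfl
  have hanonneg : ∀ k, 0 ≤ a k := fun k => frobeniusNorm_nonneg _
  have h11 : ∀ X : Matrix n n ℂ, traceNorm (Φ' (Φ X)) ≤ C * traceNorm X :=
    fun X => (hΦ' (Φ X)).trans (hΦ X)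
  -- trace-norm growth of the iterates
  have htrace : ∀ k, traceNorm (B k) ≤ C ^ k * traceNorm A := by
    intro k
    induction k with
    | zero => simp [hBdef]
    | succ k ih =>
        calc traceNorm (B (k + 1)) = traceNorm (Φ' (Φ (B k))) := by rw [hB]
          _ ≤ C * traceNorm (B k) := h11 _
          _ ≤ C * (C ^ k * traceNorm A) := by
              exact mul_le_mul_of_nonneg_left ih hC
          _ = C ^ (k + 1) * traceNorm A := by ring
  -- log-convexity of `a` via self-adjointness and Cauchy–Schwarz
  have hlogconv : ∀ k, a (k + 1) ^ 2 ≤ a k * a (k + 2) := by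
    intro k
    have hsq : a (k + 1) ^ 2 = (Matrix.trace ((B (k + 1))ᴴ * B (k + 1))).re := by
      have h0 : 0 ≤ (Matrix.trace ((B (k + 1))ᴴ * B (k + 1))).re := by
        rw [trace_self_mul_re]; positivity
      simp only [ha, frobeniusNorm]
      rw [Real.sq_sqrt h0]
    have hswap : Matrix.trace ((B (k + 1))ᴴ * B (k + 1)) =
        Matrix.trace ((B k)ᴴ * B (k + 2)) := by
      rw [hB k, hB (k + 1), hB k]
      exact (hsa (B k) (Φ' (Φ (B k)))).symm
    calc a (k + 1) ^ 2 = (Matrix.trace ((B k)ᴴ * B (k + 2))).re := by rw [hsq, hswap]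
      _ ≤ frobeniusNorm (B k) * frobeniusNorm (B (k + 2)) := trace_re_le_frob_mul_frob _ _
      _ = a k * a (k + 2) := rfl
  -- the ratios `a (k+1) / a k` are nondecreasing (multiplicative form)
  have hstep : ∀ k, a 1 * a (k + 1) ≤ a 0 * a (k + 2) := by
    intro k
    induction k with
    | zero =>
        rcases eq_or_lt_of_le (hanonneg 1) with h0 | h0
        · rw [← h0]; simpa using mul_nonneg (hanonneg 0) (hanonneg 2)
        · have := hlogconv 0
          have h2 : a 1 * (a 1 * a 1) ≤ a 1 * (a 0 * a 2) := by
            nlinarith [hanonneg 0, hanonneg 1, hanonneg 2]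
          have := le_of_mul_le_mul_left h2 h0
          nlinarith [hanonneg 0, hanonneg 1, hanonneg 2, hlogconv 0]
    | succ k ih =>
        rcases eq_or_lt_of_le (hanonneg (k + 2)) with h0 | h0
        · rw [← h0]
          simpa using mul_nonneg (hanonneg 0) (hanonneg (k + 3))
        · have h1 : (a 1 * a (k + 2)) * a (k + 2) ≤ (a 0 * a (k + 3)) * a (k + 2) := by
            calc (a 1 * a (k + 2)) * a (k + 2) = a 1 * a (k + 2) ^ 2 := by ring
              _ ≤ a 1 * (a (k + 1) * a (k + 3)) :=
                  mul_le_mul_of_nonneg_left (hlogconv (k + 1)) (hanonneg 1)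
              _ = (a 1 * a (k + 1)) * a (k + 3) := by ring
              _ ≤ (a 0 * a (k + 2)) * a (k + 3) :=
                  mul_le_mul_of_nonneg_right ih (hanonneg (k + 3))
              _ = (a 0 * a (k + 3)) * a (k + 2) := by ring
          exact le_of_mul_le_mul_right h1 h0
  -- iterate: `a 1 ^ (k+1) ≤ a 0 ^ k * a (k+1)`
  have hpow : ∀ k, a 1 ^ (k + 1) ≤ a 0 ^ k * a (k + 1) := by
    intro k
    induction k with
    | zero => simp
    | succ k ih =>
        calc a 1 ^ (k + 2) = a 1 ^ (k + 1) * a 1 := by ring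
          _ ≤ (a 0 ^ k * a (k + 1)) * a 1 :=
              mul_le_mul_of_nonneg_right ih (hanonneg 1)
          _ = a 0 ^ k * (a 1 * a (k + 1)) := by ring
          _ ≤ a 0 ^ k * (a 0 * a (k + 2)) :=
              mul_le_mul_of_nonneg_left (hstep k) (pow_nonneg (hanonneg 0) k)
          _ = a 0 ^ (k + 1) * a (k + 2) := by ring
  -- combining: for all k, `a 1 ^ (k+1) ≤ a 0 ^ k * C ^ (k+1) * traceNorm A`
  have hkey : ∀ k, a 1 ^ (k + 1) ≤ a 0 ^ k * (C ^ (k + 1) * traceNorm A) := by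
    intro k
    refine (hpow k).trans (mul_le_mul_of_nonneg_left ?_ (pow_nonneg (hanonneg 0) k))
    exact (frobeniusNorm_le_traceNorm _).trans (htrace (k + 1))
  -- conclude by (virtual) limit `k → ∞`
  show a 1 ≤ C * a 0
  by_contra hcon
  push_neg at hcon
  have ha1pos : 0 < a 1 := lt_of_le_of_lt (mul_nonneg hC (hanonneg 0)) hcon
  have ha0pos : 0 < a 0 := by
    rcases eq_or_lt_of_le (hanonneg 0) with h0 | h0
    · exfalso
      have hA0 : A = 0 := frobeniusNorm_eq_zero (by simpa [ha, hBdef] using h0.symm)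
      have : a 1 = 0 := by
        simp only [ha, hB 0]
        simp [hBdef, hA0, frobeniusNorm]
      exact absurd this (ne_of_gt ha1pos)
    · exact h0
  have hCpos : 0 < C := by
    rcases eq_or_lt_of_le hC with h0 | h0
    · exfalso
      have := (frobeniusNorm_le_traceNorm (B 1)).trans (htrace 1)
      rw [← h0] at this
      simp at this
      exact absurd (lt_of_lt_of_le ha1pos this) (by norm_num)
    · exact h0
  have hCa0 : 0 < C * a 0 := mul_pos hCpos ha0pos
  set t : ℝ := a 1 / (C * a 0) with ht
  have htgt : 1 < t := (one_lt_div hCa0).mpr hcon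
  set r : ℝ := traceNorm A / a 0 with hr
  have hbound : ∀ k, t ^ (k + 1) ≤ r := by
    intro k
    rw [ht, div_pow, div_le_iff₀ (by positivity), hr, div_mul_eq_mul_div,
      le_div_iff₀ ha0pos]
    calc a 1 ^ (k + 1) * a 0
        ≤ (a 0 ^ k * (C ^ (k + 1) * traceNorm A)) * a 0 :=
          mul_le_mul_of_nonneg_right (hkey k) ha0pos.le
      _ = traceNorm A * (C * a 0) ^ (k + 1) := by rw [mul_pow]; ring
  obtain ⟨m, hm⟩ := pow_unbounded_of_one_lt r htgt
  have h1 : t ^ m ≤ t ^ (m + 1) := pow_le_pow_right₀ htgt.le (Nat.le_succ m)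
  exact absurd ((h1.trans (hbound m)).trans_lt hm) (lt_irrefl _)
end

section
/- For all integers N ≥ 3 and 1 ≤ t ≤ N−2, the average of P(π)^{⊗t} over uniformly random π in the alternating group Alt(N) equals the average of P(π)^{⊗t} over uniformly random π in the symmetric group Sym(N), where P(π) is the N×N permutation matrix with P(π)|x⟩ = |π(x)⟩. -/
/-- The `t`-th tensor power `P(π)^{⊗t}` of the permutation matrix of `π ∈ Sym(N)`, realized as
a matrix acting on `(ℂ^N)^{⊗t} ≅ ℂ^{[N]^t}`: its `(x, y)` entry is `1` iff `x = π ∘ y`. -/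
noncomputable def permTensorPow (N t : ℕ) (π : Equiv.Perm (Fin N)) :
    Matrix (Fin t → Fin N) (Fin t → Fin N) ℂ :=
  fun x y => if (fun i => π (y i)) = x then 1 else 0

set_option maxHeartbeats 1000000 in
/-- **Moments of small order are equal.** For `3 ≤ N` and `1 ≤ t ≤ N - 2`, the average of
`P(π)^{⊗t}` over the alternating group equals the average over the full symmetric group. -/
theorem alternating_symmetric_moments_eq (N t : ℕ) (hN : 3 ≤ N) (ht1 : 1 ≤ t)
    (ht : t ≤ N - 2) :
    (Fintype.card (alternatingGroup (Fin N)) : ℂ)⁻¹ •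
        ∑ π : alternatingGroup (Fin N), permTensorPow N t (π : Equiv.Perm (Fin N))
      = (Fintype.card (Equiv.Perm (Fin N)) : ℂ)⁻¹ •
          ∑ π : Equiv.Perm (Fin N), permTensorPow N t π := by
  classical
  haveI : Nontrivial (Fin N) := by
    refine ⟨⟨⟨0, by omega⟩, ⟨1, by omega⟩, by simp [Fin.ext_iff]⟩⟩
  have hAlt2 : 2 * Fintype.card (alternatingGroup (Fin N)) =
      Fintype.card (Equiv.Perm (Fin N)) := two_mul_card_alternatingGroup
  have hAltpos : 0 < Fintype.card (alternatingGroup (Fin N)) := Fintype.card_pos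
  ext x y
  -- find two distinct points outside the range of `y`
  obtain ⟨a, ha, b, hb, hab⟩ :
      ∃ a ∈ (Finset.univ.image y)ᶜ, ∃ b ∈ (Finset.univ.image y)ᶜ, a ≠ b := by
    refine Finset.one_lt_card.mp ?_
    have h1 : (Finset.univ.image y).card ≤ t :=
      (Finset.card_image_le).trans (by simp)
    have h2 : ((Finset.univ.image y)ᶜ).card
        = Fintype.card (Fin N) - (Finset.univ.image y).card := Finset.card_compl _
    rw [h2, Fintype.card_fin]
    omega
  have hya : ∀ i, y i ≠ a := fun i h => by
    simp only [Finset.mem_compl, Finset.mem_image] at ha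
    exact ha ⟨i, Finset.mem_univ i, h⟩
  have hyb : ∀ i, y i ≠ b := fun i h => by
    simp only [Finset.mem_compl, Finset.mem_image] at hb
    exact hb ⟨i, Finset.mem_univ i, h⟩
  set P : Equiv.Perm (Fin N) → Prop := fun σ => (fun i => σ (y i)) = x with hP
  -- `P` is invariant under right multiplication by `swap a b`
  have hPswap : ∀ σ : Equiv.Perm (Fin N), P (σ * Equiv.swap a b) ↔ P σ := by
    intro σ
    unfold P
    constructor <;> intro h <;> rw [← h] <;> funext i <;>
      simp [Equiv.swap_apply_of_ne_of_ne (hya i) (hyb i)]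
  -- the key bijection between even and odd solutions
  have hbij : (Finset.univ.filter fun σ : Equiv.Perm (Fin N) =>
        σ ∈ alternatingGroup (Fin N) ∧ P σ).card
      = (Finset.univ.filter fun σ : Equiv.Perm (Fin N) =>
        σ ∉ alternatingGroup (Fin N) ∧ P σ).card := by
    refine Finset.card_nbij' (fun σ => σ * Equiv.swap a b) (fun σ => σ * Equiv.swap a b)
      ?_ ?_ ?_ ?_
    · intro σ hσ
      simp only [Finset.mem_coe, Finset.mem_filter, Finset.mem_univ, true_and,
        Equiv.Perm.mem_alternatingGroup] at hσ ⊢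
      refine ⟨?_, (hPswap σ).mpr hσ.2⟩
      simp [Equiv.Perm.sign_swap hab, hσ.1]
    · intro σ hσ
      simp only [Finset.mem_coe, Finset.mem_filter, Finset.mem_univ, true_and,
        Equiv.Perm.mem_alternatingGroup] at hσ ⊢
      refine ⟨?_, (hPswap σ).mpr hσ.2⟩
      have hs : Equiv.Perm.sign σ = -1 := by
        rcases Int.units_eq_one_or (Equiv.Perm.sign σ) with h | h
        · exact absurd h hσ.1
        · exact h
      simp [Equiv.Perm.sign_swap hab, hs]
    · intro σ _; simp [mul_assoc, Equiv.swap_mul_self]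
    · intro σ _; simp [mul_assoc, Equiv.swap_mul_self]
  have hsplit : (Finset.univ.filter fun σ : Equiv.Perm (Fin N) =>
        σ ∈ alternatingGroup (Fin N) ∧ P σ).card
      + (Finset.univ.filter fun σ : Equiv.Perm (Fin N) =>
        σ ∉ alternatingGroup (Fin N) ∧ P σ).card
      = (Finset.univ.filter P).card := by
    have e1 : (Finset.univ.filter fun σ : Equiv.Perm (Fin N) =>
        σ ∈ alternatingGroup (Fin N) ∧ P σ)
        = (Finset.univ.filter P).filter (fun σ => σ ∈ alternatingGroup (Fin N)) := by
      rw [Finset.filter_filter]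
      exact Finset.filter_congr fun σ _ => and_comm
    have e2 : (Finset.univ.filter fun σ : Equiv.Perm (Fin N) =>
        σ ∉ alternatingGroup (Fin N) ∧ P σ)
        = (Finset.univ.filter P).filter (fun σ => σ ∉ alternatingGroup (Fin N)) := by
      rw [Finset.filter_filter]
      exact Finset.filter_congr fun σ _ => and_comm
    rw [e1, e2]
    exact Finset.card_filter_add_card_filter_not _
  -- cardinality of the subtype filter
  have hsub : (Finset.univ.filter fun π : alternatingGroup (Fin N) =>
        P (π : Equiv.Perm (Fin N))).card
      = (Finset.univ.filter fun σ : Equiv.Perm (Fin N) =>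
        σ ∈ alternatingGroup (Fin N) ∧ P σ).card := by
    refine Finset.card_nbij (fun π => (π : Equiv.Perm (Fin N))) ?_ ?_ ?_
    · intro π hπ
      simp only [Finset.mem_coe, Finset.mem_filter, Finset.mem_univ, true_and] at hπ ⊢
      exact ⟨π.2, hπ⟩
    · intro π _ π' _ h; exact Subtype.ext h
    · intro σ hσ
      simp only [Finset.coe_filter, Finset.mem_univ, true_and, Set.mem_setOf_eq] at hσ
      exact ⟨⟨σ, hσ.1⟩,
        Finset.mem_coe.mpr (Finset.mem_filter.mpr ⟨Finset.mem_univ _, hσ.2⟩), rfl⟩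
  -- compute both entries
  simp only [Matrix.smul_apply, Matrix.sum_apply, permTensorPow, smul_eq_mul]
  rw [Finset.sum_boole, Finset.sum_boole]
  have hA : (Finset.univ.filter fun π : alternatingGroup (Fin N) =>
      (fun i => (π : Equiv.Perm (Fin N)) (y i)) = x).card
      = (Finset.univ.filter fun π : alternatingGroup (Fin N) =>
      P (π : Equiv.Perm (Fin N))).card := rfl
  have hS : (Finset.univ.filter fun σ : Equiv.Perm (Fin N) =>
      (fun i => σ (y i)) = x).card = (Finset.univ.filter P).card := rfl
  rw [hA, hS, hsub, ← hsplit, ← hbij]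
  have hc0 : (Fintype.card (alternatingGroup (Fin N)) : ℂ) ≠ 0 := by
    exact_mod_cast Nat.cast_ne_zero.mpr hAltpos.ne'
  rw [← hAlt2]
  push_cast
  field_simp
  ring
end

section
/- Let m = 2^{n−1} and let 1 ≤ k ≤ t with t ≤ √m/2. Then C(m,k)/C(2m,2k) ≤ (m·k²/(m−k)²)^k ≤ m·t²/(m−t)² ≤ 4t²/m. In particular, max_{1≤k≤t} C(m,k)/C(2m,2k) ≤ 4t²/2^{n−1} = 8t²/2^n. -/
set_option maxHeartbeats 1000000


/-- **Bounding the ratio of binomial coefficients.** Let `m = 2^{n−1}` and `1 ≤ k ≤ t` with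
`t ≤ √m / 2`. Then `C(m,k)/C(2m,2k) ≤ (m·k²/(m−k)²)^k ≤ m·t²/(m−t)² ≤ 4t²/m`; in particular
`C(m,k)/C(2m,2k) ≤ 8t²/2^n`. -/
theorem choose_ratio_bound (n k t m : ℕ) (hn : 1 ≤ n) (hm : m = 2 ^ (n - 1))
    (hk : 1 ≤ k) (hkt : k ≤ t) (ht : (t : ℝ) ≤ Real.sqrt m / 2) :
    ((m.choose k : ℝ) / ((2 * m).choose (2 * k) : ℝ)
        ≤ ((m : ℝ) * (k : ℝ) ^ 2 / ((m : ℝ) - (k : ℝ)) ^ 2) ^ k)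
    ∧ (((m : ℝ) * (k : ℝ) ^ 2 / ((m : ℝ) - (k : ℝ)) ^ 2) ^ k
        ≤ (m : ℝ) * (t : ℝ) ^ 2 / ((m : ℝ) - (t : ℝ)) ^ 2)
    ∧ ((m : ℝ) * (t : ℝ) ^ 2 / ((m : ℝ) - (t : ℝ)) ^ 2 ≤ 4 * (t : ℝ) ^ 2 / (m : ℝ))
    ∧ ((m.choose k : ℝ) / ((2 * m).choose (2 * k) : ℝ) ≤ 8 * (t : ℝ) ^ 2 / (2 : ℝ) ^ n) := by
  set M : ℝ := (m : ℝ) with hM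
  set K : ℝ := (k : ℝ) with hKdef
  set T : ℝ := (t : ℝ) with hT
  have hT1 : (1 : ℝ) ≤ T := by rw [hT]; exact_mod_cast hk.trans hkt
  have hK1 : (1 : ℝ) ≤ K := by rw [hKdef]; exact_mod_cast hk
  have hKT : K ≤ T := by rw [hKdef, hT]; exact_mod_cast hkt
  have hMnn : (0 : ℝ) ≤ M := by positivity
  have hsq : Real.sqrt M ^ 2 = M := Real.sq_sqrt hMnn
  have hs2 : (2 : ℝ) ≤ Real.sqrt M := by linarith
  have hm4 : (4 : ℝ) ≤ M := by nlinarith [Real.sqrt_nonneg M]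
  have hT2 : 4 * T ^ 2 ≤ M := by nlinarith [Real.sqrt_nonneg M]
  have hTM : T ≤ M / 4 := by nlinarith
  have hKM : K ≤ M / 4 := hKT.trans hTM
  have hMK : (0 : ℝ) < M - K := by linarith
  have hMT : (0 : ℝ) < M - T := by linarith
  have hKpos : (0 : ℝ) < K := by linarith
  have hknat : 2 * k ≤ 2 * m := by
    have : (k : ℝ) ≤ (m : ℝ) := by linarith
    have : k ≤ m := by exact_mod_cast this
    omega
  -- first inequality
  have hc1 : (m.choose k : ℝ) ≤ M ^ k := by
    rw [hM]; exact_mod_cast Nat.choose_le_pow m k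
  have hc2nat : (2 * m - 2 * k) ^ (2 * k) ≤ ((2 * m).choose (2 * k)) * (2 * k) ^ (2 * k) := by
    calc (2 * m - 2 * k) ^ (2 * k) ≤ (2 * m + 1 - 2 * k) ^ (2 * k) := by
          apply Nat.pow_le_pow_left; omega
      _ ≤ (2 * m).descFactorial (2 * k) := Nat.pow_sub_le_descFactorial _ _
      _ = Nat.factorial (2 * k) * (2 * m).choose (2 * k) := Nat.descFactorial_eq_factorial_mul_choose _ _
      _ ≤ (2 * k) ^ (2 * k) * (2 * m).choose (2 * k) :=
          Nat.mul_le_mul_right _ (Nat.factorial_le_pow _)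
      _ = ((2 * m).choose (2 * k)) * (2 * k) ^ (2 * k) := Nat.mul_comm _ _
  have hc2 : ((M - K) / K) ^ (2 * k) ≤ ((2 * m).choose (2 * k) : ℝ) := by
    have hcast : ((2 * M - 2 * K)) ^ (2 * k)
        ≤ ((2 * m).choose (2 * k) : ℝ) * (2 * K) ^ (2 * k) := by
      have := hc2nat
      have h2 : ((2 * m - 2 * k : ℕ) : ℝ) = 2 * M - 2 * K := by
        push_cast [Nat.cast_sub hknat]; ring
      calc (2 * M - 2 * K) ^ (2 * k) = ((2 * m - 2 * k : ℕ) : ℝ) ^ (2 * k) := by rw [h2]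
        _ ≤ (((2 * m).choose (2 * k)) * (2 * k) ^ (2 * k) : ℕ) := by exact_mod_cast this
        _ = ((2 * m).choose (2 * k) : ℝ) * (2 * K) ^ (2 * k) := by push_cast; ring
    have hdiv : ((M - K) / K) ^ (2 * k) = (2 * M - 2 * K) ^ (2 * k) / (2 * K) ^ (2 * k) := by
      rw [← div_pow]
      congr 1
      field_simp
    rw [hdiv, div_le_iff₀ (by positivity)]
    exact hcast
  have hdpos : (0 : ℝ) < ((M - K) / K) ^ (2 * k) := by positivity
  have h1 : (m.choose k : ℝ) / ((2 * m).choose (2 * k) : ℝ)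
      ≤ M ^ k / ((M - K) / K) ^ (2 * k) := by
    apply div_le_div₀ (by positivity) hc1 hdpos hc2
  have heq : M ^ k / ((M - K) / K) ^ (2 * k) = (M * K ^ 2 / (M - K) ^ 2) ^ k := by
    rw [pow_mul, ← div_pow]
    congr 1
    rw [div_pow]
    field_simp
  have first : (m.choose k : ℝ) / ((2 * m).choose (2 * k) : ℝ)
      ≤ (M * K ^ 2 / (M - K) ^ 2) ^ k := heq ▸ h1
  -- second inequality
  have hr1 : M * K ^ 2 / (M - K) ^ 2 ≤ 1 := by
    rw [div_le_one (by positivity)]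
    have hK2 : K ^ 2 ≤ T ^ 2 := by nlinarith
    nlinarith [mul_le_mul_of_nonneg_left hK2 hMnn, mul_le_mul_of_nonneg_left hKM hMnn,
      sq_nonneg K]
  have hrnn : (0 : ℝ) ≤ M * K ^ 2 / (M - K) ^ 2 := by positivity
  have hrk : (M * K ^ 2 / (M - K) ^ 2) ^ k ≤ M * K ^ 2 / (M - K) ^ 2 := by
    calc (M * K ^ 2 / (M - K) ^ 2) ^ k ≤ (M * K ^ 2 / (M - K) ^ 2) ^ 1 :=
          pow_le_pow_of_le_one hrnn hr1 hk
      _ = M * K ^ 2 / (M - K) ^ 2 := pow_one _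
  have hmono : M * K ^ 2 / (M - K) ^ 2 ≤ M * T ^ 2 / (M - T) ^ 2 := by
    rw [div_le_div_iff₀ (by positivity) (by positivity)]
    have hKMT : K * (M - T) ≤ T * (M - K) := by
      nlinarith [mul_nonneg (sub_nonneg.2 hKT) hMnn]
    nlinarith [mul_le_mul_of_nonneg_left
      (mul_self_le_mul_self (mul_nonneg hKpos.le hMT.le) hKMT) hMnn]
  have second : (M * K ^ 2 / (M - K) ^ 2) ^ k ≤ M * T ^ 2 / (M - T) ^ 2 := hrk.trans hmono
  -- third inequality
  have third : M * T ^ 2 / (M - T) ^ 2 ≤ 4 * T ^ 2 / M := by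
    rw [div_le_div_iff₀ (by positivity) (by linarith)]
    have h34 : (3 * M / 4) * (3 * M / 4) ≤ (M - T) * (M - T) :=
      mul_self_le_mul_self (by linarith) (by linarith)
    nlinarith [mul_le_mul_of_nonneg_left h34 (by positivity : (0:ℝ) ≤ 4 * T ^ 2)]
  -- fourth
  have hpow : (2 : ℝ) ^ n = 2 * M := by
    have : n = (n - 1) + 1 := by omega
    rw [this, pow_succ, hM, hm]
    push_cast
    ring
  have fourth : (m.choose k : ℝ) / ((2 * m).choose (2 * k) : ℝ) ≤ 8 * T ^ 2 / (2 : ℝ) ^ n := by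
    rw [hpow]
    have : 8 * T ^ 2 / (2 * M) = 4 * T ^ 2 / M := by
      rw [div_eq_div_iff (by linarith) (by linarith)]
      ring
    rw [this]
    exact first.trans (second.trans third)
  exact ⟨first, second, third, fourth⟩
end

section
/- If N ≥ 5, every element of the alternating group Alt(N) is a product of 3 commutators, i.e., of 3 elements of the form [a,b] = aba⁻¹b⁻¹ with a, b ∈ Alt(N). -/
open Equiv Equiv.Perm

open scoped commutatorElement

namespace ThreeComm

variable {α : Type*} [DecidableEq α]

theorem core0 : ∀ (xs : List α) (x : α) (ys : List α) (hys : ys ≠ []),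
    List.formPerm (x :: xs ++ ys) =
      List.formPerm (x :: xs) *
        Equiv.swap ((x :: xs).getLast (by simp)) (ys.head hys) * List.formPerm ys
  | [], x, ys, hys => by
    obtain ⟨y, t, rfl⟩ := List.exists_cons_of_ne_nil hys
    simp [List.formPerm_cons_cons]
  | x2 :: rest, x, ys, hys => by
    have IH := core0 rest x2 ys hys
    have hg : (x :: x2 :: rest).getLast (by simp) = (x2 :: rest).getLast (by simp) :=
      List.getLast_cons (by simp)
    simp only [List.cons_append] at IH
    simp only [List.cons_append, List.formPerm_cons_cons, hg]
    rw [IH, mul_assoc, mul_assoc, mul_assoc]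

/-- Splitting one cycle into two overlapping cycles. -/
theorem core1 (xs ys : List α) (hxs : xs ≠ []) (hys : ys ≠ []) :
    List.formPerm (xs ++ ys) =
      List.formPerm (xs ++ [ys.head hys]) * List.formPerm ys := by
  obtain ⟨x, t, rfl⟩ := List.exists_cons_of_ne_nil hxs
  rw [core0 t x ys hys]
  have : List.formPerm (x :: t ++ [ys.head hys]) =
      List.formPerm (x :: t) * Equiv.swap ((x :: t).getLast (by simp)) (ys.head hys) := by
    rw [core0 t x [ys.head hys] (by simp)]
    simp
  rw [this]

/-- A product of two disjoint cycles as a product of two overlapping cycles. -/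
theorem pair (xs ys : List α) (hxs : xs ≠ []) (hys : ys ≠ []) :
    List.formPerm xs * List.formPerm ys =
      List.formPerm (xs ++ [ys.head hys]) * List.formPerm (xs.getLast hxs :: ys) := by
  obtain ⟨x, t, rfl⟩ := List.exists_cons_of_ne_nil hxs
  have h1 : List.formPerm (x :: t ++ [ys.head hys]) =
      List.formPerm (x :: t) * Equiv.swap ((x :: t).getLast (by simp)) (ys.head hys) := by
    rw [core0 t x [ys.head hys] (by simp)]; simp
  have h2 : List.formPerm ((x :: t).getLast hxs :: ys) =
      Equiv.swap ((x :: t).getLast hxs) (ys.head hys) * List.formPerm ys := by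
    have := core0 [] ((x :: t).getLast hxs) ys hys
    simpa using this
  rw [h1, h2]
  simp [mul_assoc]

variable {α : Type*} [DecidableEq α] [Fintype α]

theorem sign_eq_one_of_odd_orderOf {g : Perm α} (h : Odd (orderOf g)) : sign g = 1 := by
  obtain ⟨k, hk⟩ := h
  have h1 : (sign g) ^ orderOf g = 1 := by
    rw [← map_pow, pow_orderOf_eq_one, map_one]
  have h2 : (sign g) ^ (2 * k + 1) = sign g := by
    rw [pow_succ, pow_mul]
    rcases Int.units_eq_one_or (sign g) with h | h <;> simp [h]
  rw [hk, h2] at h1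
  exact h1

/-- The key commutator lemma: an element of odd order whose support misses at least
two points is a commutator of two even permutations. -/
theorem good_comm {g : Perm α} (h1 : Odd (orderOf g))
    (h2 : g.support.card + 2 ≤ Fintype.card α) :
    ∃ a b : Perm α, sign a = 1 ∧ sign b = 1 ∧ g = ⁅a, b⁆ := by
  obtain ⟨c, hc⟩ := isConj_iff.mp (isConj_iff_cycleType_eq.mpr (cycleType_inv g).symm)
  -- two fixed points
  have hcard : 1 < g.supportᶜ.card := by
    have := Finset.card_compl (s := g.support) (α := α)
    omega
  obtain ⟨x, hx, y, hy, hxy⟩ := Finset.one_lt_card.mp hcard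
  simp only [Finset.mem_compl] at hx hy
  have hswap : Perm.Disjoint g (Equiv.swap x y) := by
    intro z
    by_cases hz : z ∈ g.support
    · right
      exact Equiv.swap_apply_of_ne_of_ne (fun h => hx (h ▸ hz)) (fun h => hy (h ▸ hz))
    · left; exact notMem_support.mp hz
  set c' : Perm α := if sign c = 1 then c else c * Equiv.swap x y with hc'def
  have hconj : c' * g * c'⁻¹ = g⁻¹ := by
    rw [hc'def]
    split_ifs with h
    · exact hc
    · have hcomm : Equiv.swap x y * g * (Equiv.swap x y)⁻¹ = g := by
        rw [mul_inv_eq_iff_eq_mul]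
        exact hswap.commute.symm.eq
      calc c * Equiv.swap x y * g * (c * Equiv.swap x y)⁻¹
          = c * (Equiv.swap x y * g * (Equiv.swap x y)⁻¹) * c⁻¹ := by
            simp [mul_assoc]
        _ = g⁻¹ := by rw [hcomm, hc]
  have hsign : sign c' = 1 := by
    rw [hc'def]
    split_ifs with h
    · exact h
    · rcases Int.units_eq_one_or (sign c) with h' | h'
      · exact absurd h' h
      · simp [h', Equiv.Perm.sign_swap hxy]
  obtain ⟨k, hk⟩ := h1
  refine ⟨g ^ (k + 1), c', ?_, hsign, ?_⟩
  · rw [map_pow, sign_eq_one_of_odd_orderOf ⟨k, hk⟩, one_pow]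
  · have hsq : g ^ (k + 1) * g ^ (k + 1) = g := by
      rw [← pow_add]
      have : k + 1 + (k + 1) = orderOf g + 1 := by omega
      rw [this, pow_succ, pow_orderOf_eq_one, one_mul]
    have hpow : c' * g ^ (k + 1) * c'⁻¹ = (g ^ (k + 1))⁻¹ := by
      rw [← conj_pow, hconj, inv_pow]
    have hconjh : c' * (g ^ (k + 1))⁻¹ * c'⁻¹ = g ^ (k + 1) := by
      have h' := congrArg (·⁻¹) hpow
      simpa [mul_assoc] using h' 
    calc g = g ^ (k + 1) * g ^ (k + 1) := hsq.symm
      _ = g ^ (k + 1) * (c' * (g ^ (k + 1))⁻¹ * c'⁻¹) := by rw [hconjh]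
      _ = ⁅g ^ (k + 1), c'⁆ := by rw [commutatorElement_def]; group


theorem odd_of_dvd {m n : ℕ} (h : m ∣ n) (hn : Odd n) : Odd m := by
  rw [Nat.odd_iff] at *
  rcases Nat.even_or_odd m with he | ho
  · exfalso
    have : 2 ∣ n := dvd_trans he.two_dvd h
    omega
  · rwa [Nat.odd_iff] at ho

theorem odd_orderOf_mul {G : Type*} [Group G] {a b : G} (h : Commute a b)
    (ha : Odd (orderOf a)) (hb : Odd (orderOf b)) : Odd (orderOf (a * b)) :=
  odd_of_dvd (h.orderOf_mul_dvd_lcm.trans (Nat.lcm_dvd_mul _ _)) (ha.mul hb)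

theorem odd_orderOf_of_factors {σ : Perm α}
    (h : ∀ c ∈ σ.cycleFactorsFinset, Odd c.support.card) : Odd (orderOf σ) := by
  rw [← Equiv.Perm.lcm_cycleType]
  have hdvd : σ.cycleType.lcm ∣ σ.cycleType.prod :=
    Multiset.lcm_dvd.mpr fun b hb => Multiset.dvd_prod hb
  refine odd_of_dvd hdvd ?_
  refine Multiset.prod_induction _ _ (fun a b ha hb => ha.mul hb) odd_one ?_
  intro a ha
  rw [Equiv.Perm.cycleType_def, Multiset.mem_map] at ha
  obtain ⟨c, hc, rfl⟩ := ha
  exact h c hc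

/-- Splitting an odd cycle into a product of two smaller odd cycles. -/
theorem split_cycle {c : Perm α} (hc : IsCycle c) (hodd : Odd c.support.card)
    (h5 : 5 ≤ c.support.card) :
    ∃ g1 g2 : Perm α, c = g1 * g2 ∧ IsCycle g1 ∧ IsCycle g2 ∧
      g1.support ⊆ c.support ∧ g2.support ⊆ c.support ∧
      Odd g1.support.card ∧ Odd g2.support.card ∧
      g1.support.card + g2.support.card = c.support.card + 1 ∧
      2 * g1.support.card ≤ c.support.card + 3 ∧
      2 * g2.support.card ≤ c.support.card + 3 ∧
      (c.support.card % 4 = 1 →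
        2 * g1.support.card ≤ c.support.card + 1 ∧
        2 * g2.support.card ≤ c.support.card + 1) := by
  set m := c.support.card with hm
  obtain ⟨x, hx⟩ := hc.nonempty_support
  have hfp : List.formPerm (c.toList x) = c := by
    rw [Equiv.Perm.formPerm_toList, hc.cycleOf_eq (Equiv.Perm.mem_support.mp hx)]
  set l := c.toList x with hl
  have hnodup : l.Nodup := Equiv.Perm.nodup_toList c x
  have hlen : l.length = m := by
    rw [hl, Equiv.Perm.length_toList, hc.cycleOf_eq (Equiv.Perm.mem_support.mp hx)]
  have hlfin : l.toFinset = c.support := by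
    rw [← hfp]
    exact (List.support_formPerm_of_nodup l hnodup
      (fun y hy => by rw [hy] at hlen; simp at hlen; omega)).symm
  obtain ⟨t, hmt⟩ := hodd
  set q : ℕ := 2 * ((m + 1) / 4) with hq
  have hq2 : 2 ≤ q := by omega
  have hqm : q + 2 ≤ m := by omega
  have hql : q < l.length := by omega
  -- the two lists
  have hysne : l.drop q ≠ [] := by
    intro h; rw [← List.length_eq_zero_iff] at h; simp [hlen] at h; omega
  have hhead : (l.drop q).head hysne = l[q] := by
    simp only [List.drop_eq_getElem_cons hql, List.head_cons]
  have htake : l.take q ++ [(l.drop q).head hysne] = l.take (q + 1) := by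
    rw [hhead]; exact List.take_concat_get' l q hql
  have hxsne : l.take q ≠ [] := by
    intro h; rw [← List.length_eq_zero_iff] at h; simp [hlen] at h; omega
  have hsplit : c = List.formPerm (l.take (q + 1)) * List.formPerm (l.drop q) := by
    conv_lhs => rw [← hfp, ← List.take_append_drop q l]
    rw [core1 _ _ hxsne hysne, htake]
  have hnd1 : (l.take (q + 1)).Nodup := hnodup.sublist (List.take_sublist _ _)
  have hnd2 : (l.drop q).Nodup := hnodup.sublist (List.drop_sublist _ _)
  have hlen1 : (l.take (q + 1)).length = q + 1 := by
    rw [List.length_take, hlen]; omega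
  have hlen2 : (l.drop q).length = m - q := by
    rw [List.length_drop, hlen]
  have hc1 : IsCycle (List.formPerm (l.take (q + 1))) :=
    List.isCycle_formPerm hnd1 (by omega)
  have hc2 : IsCycle (List.formPerm (l.drop q)) :=
    List.isCycle_formPerm hnd2 (by omega)
  have hs1 : (List.formPerm (l.take (q + 1))).support = (l.take (q + 1)).toFinset :=
    List.support_formPerm_of_nodup _ hnd1
      (fun y hy => by rw [hy] at hlen1; simp at hlen1; omega)
  have hs2 : (List.formPerm (l.drop q)).support = (l.drop q).toFinset :=
    List.support_formPerm_of_nodup _ hnd2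
      (fun y hy => by rw [hy] at hlen2; simp at hlen2; omega)
  have hcard1 : (List.formPerm (l.take (q + 1))).support.card = q + 1 := by
    rw [hs1, List.toFinset_card_of_nodup hnd1, hlen1]
  have hcard2 : (List.formPerm (l.drop q)).support.card = m - q := by
    rw [hs2, List.toFinset_card_of_nodup hnd2, hlen2]
  refine ⟨_, _, hsplit, hc1, hc2, ?_, ?_, ?_, ?_, ?_, ?_, ?_, ?_⟩
  · rw [hs1, ← hlfin]
    intro y hy
    simp only [List.mem_toFinset] at *
    exact List.mem_of_mem_take (by exact hy)
  · rw [hs2, ← hlfin]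
    intro y hy
    simp only [List.mem_toFinset] at *
    exact List.mem_of_mem_drop (by exact hy)
  · rw [hcard1]; exact ⟨(m + 1) / 4, by omega⟩
  · rw [hcard2]; exact ⟨t - (m + 1) / 4, by omega⟩
  · rw [hcard1, hcard2]; omega
  · rw [hcard1]; omega
  · rw [hcard2]; omega
  · intro h4; rw [hcard1, hcard2]; omega

theorem exists_list_of_cycle {c : Perm α} (hc : IsCycle c) :
    ∃ l : List α, l.Nodup ∧ l.formPerm = c ∧ l.toFinset = c.support ∧
      l.length = c.support.card ∧ 2 ≤ l.length := by
  obtain ⟨x, hx⟩ := hc.nonempty_support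
  refine ⟨c.toList x, Equiv.Perm.nodup_toList c x, ?_, ?_, ?_, ?_⟩
  · rw [Equiv.Perm.formPerm_toList, hc.cycleOf_eq (Equiv.Perm.mem_support.mp hx)]
  · have hs := List.support_formPerm_of_nodup (c.toList x) (Equiv.Perm.nodup_toList c x)
      (fun y => Equiv.Perm.toList_ne_singleton c x y)
    rw [Equiv.Perm.formPerm_toList, hc.cycleOf_eq (Equiv.Perm.mem_support.mp hx)] at hs
    exact hs.symm
  · rw [Equiv.Perm.length_toList, hc.cycleOf_eq (Equiv.Perm.mem_support.mp hx)]
  · rw [Equiv.Perm.length_toList, hc.cycleOf_eq (Equiv.Perm.mem_support.mp hx)]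
    exact hc.two_le_card_support

/-- A product of two disjoint cycles as a product of two cycles one longer each. -/
theorem pair_cycles {c1 c2 : Perm α} (h1 : IsCycle c1) (h2 : IsCycle c2)
    (hd : Equiv.Perm.Disjoint c1 c2) :
    ∃ d1 d2 : Perm α, c1 * c2 = d1 * d2 ∧ IsCycle d1 ∧ IsCycle d2 ∧
      d1.support ⊆ c1.support ∪ c2.support ∧ d2.support ⊆ c1.support ∪ c2.support ∧
      d1.support.card = c1.support.card + 1 ∧ d2.support.card = c2.support.card + 1 := by
  obtain ⟨l1, hnd1, hfp1, hfin1, hlen1, h21⟩ := exists_list_of_cycle h1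
  obtain ⟨l2, hnd2, hfp2, hfin2, hlen2, h22⟩ := exists_list_of_cycle h2
  have hne1 : l1 ≠ [] := by intro h; rw [h] at h21; simp at h21
  have hne2 : l2 ≠ [] := by intro h; rw [h] at h22; simp at h22
  have hdisj : ∀ a ∈ l1, a ∉ l2 := by
    intro a ha hb
    have ha' : a ∈ c1.support := hfin1 ▸ List.mem_toFinset.mpr ha
    have hb' : a ∈ c2.support := hfin2 ▸ List.mem_toFinset.mpr hb
    exact (hd.mem_imp ha') hb'
  have hhead2 : l2.head hne2 ∈ l2 := List.head_mem hne2
  have hlast1 : l1.getLast hne1 ∈ l1 := List.getLast_mem hne1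
  have hndA : (l1 ++ [l2.head hne2]).Nodup := by
    rw [List.nodup_append]
    exact ⟨hnd1, List.nodup_singleton _, fun a ha b hb => by
      simp only [List.mem_singleton] at hb
      intro h; subst hb; subst h; exact hdisj _ ha hhead2⟩
  have hndB : (l1.getLast hne1 :: l2).Nodup :=
    List.nodup_cons.mpr ⟨fun h => hdisj _ hlast1 h, hnd2⟩
  have hlenA : (l1 ++ [l2.head hne2]).length = l1.length + 1 := by simp
  have hlenB : (l1.getLast hne1 :: l2).length = l2.length + 1 := by simp
  have hcA : IsCycle (List.formPerm (l1 ++ [l2.head hne2])) :=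
    List.isCycle_formPerm hndA (by rw [hlenA]; omega)
  have hcB : IsCycle (List.formPerm (l1.getLast hne1 :: l2)) :=
    List.isCycle_formPerm hndB (by rw [hlenB]; omega)
  have hsA : (List.formPerm (l1 ++ [l2.head hne2])).support = (l1 ++ [l2.head hne2]).toFinset :=
    List.support_formPerm_of_nodup _ hndA
      (fun y hy => by
        have h' := congrArg List.length hy
        simp only [List.length_append, List.length_singleton, List.length_cons,
          List.length_nil] at h'
        omega)
  have hsB : (List.formPerm (l1.getLast hne1 :: l2)).support = (l1.getLast hne1 :: l2).toFinset :=
    List.support_formPerm_of_nodup _ hndB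
      (fun y hy => by
        have h' := congrArg List.length hy
        simp only [List.length_append, List.length_singleton, List.length_cons,
          List.length_nil] at h'
        omega)
  refine ⟨_, _, ?_, hcA, hcB, ?_, ?_, ?_, ?_⟩
  · rw [← hfp1, ← hfp2]
    exact pair l1 l2 hne1 hne2
  · rw [hsA]
    intro y hy
    rw [List.mem_toFinset, List.mem_append, List.mem_singleton] at hy
    rw [Finset.mem_union]
    rcases hy with hy | hy
    · exact Or.inl (hfin1 ▸ List.mem_toFinset.mpr hy)
    · exact Or.inr (hfin2 ▸ List.mem_toFinset.mpr (hy ▸ hhead2))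
  · rw [hsB]
    intro y hy
    rw [List.mem_toFinset, List.mem_cons] at hy
    rw [Finset.mem_union]
    rcases hy with hy | hy
    · exact Or.inl (hfin1 ▸ List.mem_toFinset.mpr (hy ▸ hlast1))
    · exact Or.inr (hfin2 ▸ List.mem_toFinset.mpr hy)
  · rw [hsA, List.toFinset_card_of_nodup hndA, hlenA, hlen1]
  · rw [hsB, List.toFinset_card_of_nodup hndB, hlenB, hlen2]

/-- Decomposing a permutation all of whose cycles have even length (an even number of them)
into a product of two odd-order permutations. -/
theorem even_part_decomp (n : ℕ) : ∀ (E : Perm α), E.cycleFactorsFinset.card = n →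
    (∀ c ∈ E.cycleFactorsFinset, Even c.support.card) → Even n →
    ∃ A B : Perm α, E = A * B ∧ Odd (orderOf A) ∧ Odd (orderOf B) ∧
      A.support ⊆ E.support ∧ B.support ⊆ E.support ∧
      2 * A.support.card + n ≤ 2 * E.support.card ∧
      2 * B.support.card + n ≤ 2 * E.support.card := by
  induction n using Nat.strong_induction_on with
  | _ n IH =>
  intro E hcard hev hn
  rcases Nat.eq_zero_or_pos n with h0 | hpos
  · subst h0
    have hE1 : E = 1 := Equiv.Perm.cycleFactorsFinset_eq_empty_iff.mp
      (Finset.card_eq_zero.mp hcard)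
    exact ⟨1, 1, by simp [hE1], ⟨0, by simp⟩, ⟨0, by simp⟩, by simp, by simp,
      by simp [hE1], by simp [hE1]⟩
  · have hn2 : 2 ≤ n := by obtain ⟨k, hk⟩ := hn; omega
    obtain ⟨c1, hc1mem⟩ := Finset.card_pos.mp (by omega : 0 < E.cycleFactorsFinset.card)
    have herase : 0 < (E.cycleFactorsFinset.erase c1).card := by
      rw [Finset.card_erase_of_mem hc1mem]; omega
    obtain ⟨c2, hc2mem'⟩ := Finset.card_pos.mp herase
    have hne : c2 ≠ c1 := Finset.ne_of_mem_erase hc2mem'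
    have hc2mem : c2 ∈ E.cycleFactorsFinset := Finset.mem_of_mem_erase hc2mem'
    have hc1cyc : IsCycle c1 := (Equiv.Perm.mem_cycleFactorsFinset_iff.mp hc1mem).1
    have hc2cyc : IsCycle c2 := (Equiv.Perm.mem_cycleFactorsFinset_iff.mp hc2mem).1
    have hd12 : Equiv.Perm.Disjoint c1 c2 :=
      (Equiv.Perm.cycleFactorsFinset_pairwise_disjoint E) (Finset.mem_coe.mpr hc1mem)
        (Finset.mem_coe.mpr hc2mem) (Ne.symm hne)
    have hfac1 : (E * c1⁻¹).cycleFactorsFinset = E.cycleFactorsFinset \ {c1} :=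
      Equiv.Perm.cycleFactorsFinset_mul_inv_mem_eq_sdiff hc1mem
    have hc2mem1 : c2 ∈ (E * c1⁻¹).cycleFactorsFinset := by
      rw [hfac1]; simp [hne, hc2mem]
    have hfac' : (E * c1⁻¹ * c2⁻¹).cycleFactorsFinset =
        (E.cycleFactorsFinset.erase c1).erase c2 := by
      rw [Equiv.Perm.cycleFactorsFinset_mul_inv_mem_eq_sdiff hc2mem1, hfac1,
        Finset.sdiff_singleton_eq_erase, Finset.sdiff_singleton_eq_erase]
    set E' := E * c1⁻¹ * c2⁻¹ with hE'def
    have hsub : E'.cycleFactorsFinset ⊆ E.cycleFactorsFinset := by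
      rw [hfac']
      intro z hz
      exact Finset.mem_of_mem_erase (Finset.mem_of_mem_erase hz)
    have hcard' : E'.cycleFactorsFinset.card = n - 2 := by
      rw [hfac']
      rw [Finset.card_erase_of_mem (Finset.mem_erase.mpr ⟨hne, hc2mem⟩),
        Finset.card_erase_of_mem hc1mem, hcard]
      omega
    obtain ⟨A', B', hAB', hoA', hoB', hsA', hsB', hcA', hcB'⟩ :=
      IH (n - 2) (by omega) E' hcard' (fun c hc => hev c (hsub hc))
        (by obtain ⟨k, hk⟩ := hn; exact ⟨k - 1, by omega⟩)
    -- disjointness facts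
    have hdE1c1 : Equiv.Perm.Disjoint (E * c1⁻¹) c1 :=
      Equiv.Perm.disjoint_mul_inv_of_mem_cycleFactorsFinset hc1mem
    have hdE'c2 : Equiv.Perm.Disjoint E' c2 :=
      Equiv.Perm.disjoint_mul_inv_of_mem_cycleFactorsFinset hc2mem1
    have hdE'c1 : Equiv.Perm.Disjoint E' c1 :=
      Equiv.Perm.Disjoint.mul_left hdE1c1 (hd12.symm.inv_left)
    -- product structure
    have hE : E = c1 * c2 * E' := by
      have h1 : E' * c2 * c1 = E := by
        rw [hE'def]; group
      calc E = E' * c2 * c1 := h1.symm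
        _ = c2 * E' * c1 := by rw [hdE'c2.commute.eq]
        _ = c2 * c1 * E' := by rw [mul_assoc, hdE'c1.commute.eq, ← mul_assoc]
        _ = c1 * c2 * E' := by rw [hd12.symm.commute.eq]
    obtain ⟨d1, d2, hpair, hd1cyc, hd2cyc, hd1sub, hd2sub, hd1card, hd2card⟩ :=
      pair_cycles hc1cyc hc2cyc hd12
    -- supports of c1, c2, E' inside E
    have hc1sup : c1.support ⊆ E.support := Equiv.Perm.mem_cycleFactorsFinset_support_le hc1mem
    have hc2sup : c2.support ⊆ E.support := Equiv.Perm.mem_cycleFactorsFinset_support_le hc2mem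
    have hE'sup : E'.support ⊆ E.support := by
      intro z hz
      have h1 := Equiv.Perm.support_mul_le (E * c1⁻¹) c2⁻¹ hz
      simp only [Finset.sup_eq_union, Finset.mem_union, Equiv.Perm.support_inv] at h1
      rcases h1 with h1 | h1
      · have h2 := Equiv.Perm.support_mul_le E c1⁻¹ h1
        simp only [Finset.sup_eq_union, Finset.mem_union, Equiv.Perm.support_inv] at h2
        rcases h2 with h2 | h2
        · exact h2
        · exact hc1sup h2
      · exact hc2sup h1
    have hdisjsup : _root_.Disjoint (c1.support ∪ c2.support) E'.support :=
      Finset.disjoint_union_left.mpr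
        ⟨hdE'c1.symm.disjoint_support, hdE'c2.symm.disjoint_support⟩
    have hdd1A' : Equiv.Perm.Disjoint d1 A' := by
      rw [Equiv.Perm.disjoint_iff_disjoint_support]
      exact Finset.disjoint_of_subset_left hd1sub
        (Finset.disjoint_of_subset_right hsA' hdisjsup)
    have hdd2A' : Equiv.Perm.Disjoint d2 A' := by
      rw [Equiv.Perm.disjoint_iff_disjoint_support]
      exact Finset.disjoint_of_subset_left hd2sub
        (Finset.disjoint_of_subset_right hsA' hdisjsup)
    have hdd1B' : Equiv.Perm.Disjoint d1 B' := by
      rw [Equiv.Perm.disjoint_iff_disjoint_support]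
      exact Finset.disjoint_of_subset_left hd1sub
        (Finset.disjoint_of_subset_right hsB' hdisjsup)
    have hdd2B' : Equiv.Perm.Disjoint d2 B' := by
      rw [Equiv.Perm.disjoint_iff_disjoint_support]
      exact Finset.disjoint_of_subset_left hd2sub
        (Finset.disjoint_of_subset_right hsB' hdisjsup)
    -- the decomposition
    refine ⟨d1 * A', d2 * B', ?_, ?_, ?_, ?_, ?_, ?_, ?_⟩
    · calc E = c1 * c2 * E' := hE
        _ = d1 * d2 * (A' * B') := by rw [hpair, hAB']
        _ = d1 * (d2 * A') * B' := by group
        _ = d1 * (A' * d2) * B' := by rw [hdd2A'.commute.eq]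
        _ = d1 * A' * (d2 * B') := by group
    · refine odd_orderOf_mul hdd1A'.commute ?_ hoA'
      rw [hd1cyc.orderOf, hd1card]
      obtain ⟨k, hk⟩ := hev c1 hc1mem
      exact ⟨k, by omega⟩
    · refine odd_orderOf_mul hdd2B'.commute ?_ hoB'
      rw [hd2cyc.orderOf, hd2card]
      obtain ⟨k, hk⟩ := hev c2 hc2mem
      exact ⟨k, by omega⟩
    · intro z hz
      have h1 := Equiv.Perm.support_mul_le d1 A' hz
      simp only [Finset.sup_eq_union, Finset.mem_union] at h1
      rcases h1 with h1 | h1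
      · rcases Finset.mem_union.mp (hd1sub h1) with h | h
        · exact hc1sup h
        · exact hc2sup h
      · exact hE'sup (hsA' h1)
    · intro z hz
      have h1 := Equiv.Perm.support_mul_le d2 B' hz
      simp only [Finset.sup_eq_union, Finset.mem_union] at h1
      rcases h1 with h1 | h1
      · rcases Finset.mem_union.mp (hd2sub h1) with h | h
        · exact hc1sup h
        · exact hc2sup h
      · exact hE'sup (hsB' h1)
    · -- card bound for A
      have hcardE : E.support.card = c1.support.card + c2.support.card + E'.support.card := by
        rw [hE, ((hdE'c1.symm).mul_left (hdE'c2.symm)).card_support_mul,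
          hd12.card_support_mul]
      have hcardA : (d1 * A').support.card = d1.support.card + A'.support.card :=
        hdd1A'.card_support_mul
      have h2c2 : 2 ≤ c2.support.card := hc2cyc.two_le_card_support
      rw [hcardA, hcardE, hd1card]
      omega
    · have hcardE : E.support.card = c1.support.card + c2.support.card + E'.support.card := by
        rw [hE, ((hdE'c1.symm).mul_left (hdE'c2.symm)).card_support_mul,
          hd12.card_support_mul]
      have hcardB : (d2 * B').support.card = d2.support.card + B'.support.card :=
        hdd2B'.card_support_mul
      have h2c1 : 2 ≤ c1.support.card := hc1cyc.two_le_card_support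
      rw [hcardB, hcardE, hd2card]
      omega

theorem even_multiset_sum {s : Multiset ℕ} (h : ∀ x ∈ s, Even x) : Even s.sum := by
  induction s using Multiset.induction_on with
  | empty => simp
  | cons a t IH =>
    rw [Multiset.sum_cons]
    exact (h a (Multiset.mem_cons_self a t)).add
      (IH fun x hx => h x (Multiset.mem_cons_of_mem hx))

/-- The main decomposition: every even permutation on at least `5` points is a product of
three permutations of odd order each missing at least two points. -/
theorem decomp (h5 : 5 ≤ Fintype.card α) {σ : Perm α} (hσ : Equiv.Perm.sign σ = 1) :
    ∃ g1 g2 g3 : Perm α, σ = g1 * g2 * g3 ∧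
      (Odd (orderOf g1) ∧ g1.support.card + 2 ≤ Fintype.card α) ∧
      (Odd (orderOf g2) ∧ g2.support.card + 2 ≤ Fintype.card α) ∧
      (Odd (orderOf g3) ∧ g3.support.card + 2 ≤ Fintype.card α) := by
  classical
  have hgood1 : Odd (orderOf (1 : Perm α)) ∧ (1 : Perm α).support.card + 2 ≤ Fintype.card α := by
    constructor
    · rw [orderOf_one]; exact odd_one
    · rw [Equiv.Perm.support_one, Finset.card_empty]; omega
  set F := σ.cycleFactorsFinset with hF
  set Fe := F.filter (fun c => Even c.support.card) with hFeDef
  set Fo := F.filter (fun c => ¬ Even c.support.card) with hFoDef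
  have hFeF : Fe ⊆ F := Finset.filter_subset _ _
  have hFoF : Fo ⊆ F := Finset.filter_subset _ _
  have commF := Equiv.Perm.cycleFactorsFinset_mem_commute σ
  have pdF := Equiv.Perm.cycleFactorsFinset_pairwise_disjoint σ
  have commFe : (↑Fe : Set (Perm α)).Pairwise Commute := commF.mono (Finset.coe_subset.mpr hFeF)
  have commFo : (↑Fo : Set (Perm α)).Pairwise Commute := commF.mono (Finset.coe_subset.mpr hFoF)
  have pdFe : (↑Fe : Set (Perm α)).Pairwise Equiv.Perm.Disjoint :=
    pdF.mono (Finset.coe_subset.mpr hFeF)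
  have pdFo : (↑Fo : Set (Perm α)).Pairwise Equiv.Perm.Disjoint :=
    pdF.mono (Finset.coe_subset.mpr hFoF)
  set E := Fe.noncommProd id commFe with hEdef
  set O := Fo.noncommProd id commFo with hOdef
  have hfacE : E.cycleFactorsFinset = Fe :=
    Equiv.Perm.cycleFactorsFinset_eq_finset.mpr
      ⟨fun f hf => (Equiv.Perm.mem_cycleFactorsFinset_iff.mp (hFeF hf)).1, pdFe, rfl⟩
  have hfacO : O.cycleFactorsFinset = Fo :=
    Equiv.Perm.cycleFactorsFinset_eq_finset.mpr
      ⟨fun f hf => (Equiv.Perm.mem_cycleFactorsFinset_iff.mp (hFoF hf)).1, pdFo, rfl⟩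
  have hdisjFoFe : ∀ a ∈ Fo, ∀ b ∈ Fe, Equiv.Perm.Disjoint a b := by
    intro a ha b hb
    have hne : a ≠ b := by
      intro h
      rw [Finset.mem_filter] at ha hb
      rw [h] at ha
      exact ha.2 hb.2
    exact pdF (Finset.mem_coe.mpr (hFoF ha)) (Finset.mem_coe.mpr (hFeF hb)) hne
  have hbase : ∀ b ∈ Fe, Equiv.Perm.Disjoint b O := fun b hb =>
    Finset.noncommProd_induction Fo id commFo (fun g => Equiv.Perm.Disjoint b g)
      (fun x y hx hy => hx.mul_right hy) (Equiv.Perm.disjoint_one_right b)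
      (fun a ha => (hdisjFoFe a ha b hb).symm)
  have hdisjEO : Equiv.Perm.Disjoint E O :=
    Finset.noncommProd_induction Fe id commFe (fun g => Equiv.Perm.Disjoint g O)
      (fun x y hx hy => hx.mul_left hy) (Equiv.Perm.disjoint_one_left O) hbase
  have hunion : Fe ∪ Fo = F := Finset.filter_union_filter_not_eq _ F
  have hdisjSet : Disjoint Fe Fo := Finset.disjoint_filter_filter_not F F _
  have hEO : σ = E * O := by
    conv_lhs => rw [← Equiv.Perm.cycleFactorsFinset_noncommProd σ]
    rw [← Finset.noncommProd_union_of_disjoint hdisjSet id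
      (by rw [show Fe ∪ Fo = F from hunion]; exact commF)]
    exact Finset.noncommProd_congr hunion.symm (fun x _ => rfl) _
  have hOodd : Odd (orderOf O) := by
    apply odd_orderOf_of_factors
    rw [hfacO]
    intro c hc
    exact Nat.not_even_iff_odd.mp (Finset.mem_filter.mp hc).2
  have hsigO : Equiv.Perm.sign O = 1 := sign_eq_one_of_odd_orderOf hOodd
  have hsigE : Equiv.Perm.sign E = 1 := by
    have h1 : Equiv.Perm.sign σ = Equiv.Perm.sign E * Equiv.Perm.sign O := by
      rw [hEO, map_mul]
    rw [hσ, hsigO, mul_one] at h1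
    exact h1.symm
  have hcardEO : E.support.card + O.support.card = σ.support.card := by
    rw [hEO, hdisjEO.card_support_mul]
  have hcardσ : σ.support.card ≤ Fintype.card α := Finset.card_le_univ _
  have hFeEven : Even Fe.card := by
    by_contra hodd
    have hoddFe : Odd Fe.card := Nat.not_even_iff_odd.mp hodd
    have hsum : Even E.cycleType.sum := by
      apply even_multiset_sum
      intro x hx
      rw [Equiv.Perm.cycleType_def, Multiset.mem_map] at hx
      obtain ⟨c, hc, rfl⟩ := hx
      rw [hfacE] at hc
      exact (Finset.mem_filter.mp hc).2
    have hcardCT : Multiset.card E.cycleType = Fe.card := by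
      rw [Equiv.Perm.cycleType_def, Multiset.card_map, hfacE]
      rfl
    have := Equiv.Perm.sign_of_cycleType E
    rw [hsigE, hcardCT] at this
    rw [pow_add, hsum.neg_one_pow, hoddFe.neg_one_pow, one_mul] at this
    exact absurd this.symm (by decide)
  -- Case analysis
  by_cases hFeE : Fe = ∅
  · -- no even cycles : σ = O
    have hE1 : E = 1 := Equiv.Perm.cycleFactorsFinset_eq_empty_iff.mp (by rw [hfacE, hFeE])
    have hσO : σ = O := by rw [hEO, hE1, one_mul]
    by_cases hsmall : O.support.card + 2 ≤ Fintype.card α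
    · exact ⟨O, 1, 1, by rw [hσO]; group, ⟨hOodd, hsmall⟩, hgood1, hgood1⟩
    · push_neg at hsmall
      rcases Nat.lt_or_ge Fo.card 2 with hlt | hge
      · interval_cases h : Fo.card
        · -- O = 1, contradiction
          have hFo0 : Fo = ∅ := Finset.card_eq_zero.mp h
          have : O = 1 := Equiv.Perm.cycleFactorsFinset_eq_empty_iff.mp (by rw [hfacO, hFo0])
          rw [this] at hsmall
          simp [Equiv.Perm.support_one] at hsmall
          omega
        · -- single big odd cycle
          obtain ⟨c, hc⟩ := Finset.card_eq_one.mp h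
          have hOc : O.IsCycle ∧ O = c :=
            Equiv.Perm.cycleFactorsFinset_eq_singleton_iff.mp (by rw [hfacO, hc])
          have hcmem : c ∈ Fo := by rw [hc]; exact Finset.mem_singleton_self c
          have hOoddcard : Odd O.support.card := by
            rw [hOc.2]
            exact Nat.not_even_iff_odd.mp (Finset.mem_filter.mp hcmem).2
          have hOcard : O.support.card ≤ Fintype.card α := Finset.card_le_univ _
          obtain ⟨t, ht⟩ := hOoddcard
          have h5O : 5 ≤ O.support.card := by omega
          obtain ⟨s1, s2, hsplit, hs1c, hs2c, _, _, ho1, ho2, hsum12, hb1, hb2, hb4⟩ :=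
            split_cycle hOc.1 ⟨t, ht⟩ h5O
          refine ⟨s1, s2, 1, by rw [hσO, hsplit]; group, ⟨?_, ?_⟩, ⟨?_, ?_⟩, hgood1⟩
          · rw [hs1c.orderOf]; exact ho1
          · by_cases h4 : O.support.card % 4 = 1
            · have := hb4 h4; omega
            · omega
          · rw [hs2c.orderOf]; exact ho2
          · by_cases h4 : O.support.card % 4 = 1
            · have := hb4 h4; omega
            · omega
      · -- at least two odd cycles : peel off the smallest
        obtain ⟨c, hcmem, hcmin⟩ :=
          Finset.exists_min_image Fo (fun c => c.support.card)
            (Finset.card_pos.mp (by omega))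
        have herase2 : 0 < (Fo.erase c).card := by
          rw [Finset.card_erase_of_mem hcmem]; omega
        obtain ⟨c', hc'mem⟩ := Finset.card_pos.mp herase2
        have hc'ne : c' ≠ c := Finset.ne_of_mem_erase hc'mem
        have hc'Fo : c' ∈ Fo := Finset.mem_of_mem_erase hc'mem
        have hcOfac : c ∈ O.cycleFactorsFinset := by rw [hfacO]; exact hcmem
        have hc'Ofac : c' ∈ O.cycleFactorsFinset := by rw [hfacO]; exact hc'Fo
        have hccyc : c.IsCycle := (Equiv.Perm.mem_cycleFactorsFinset_iff.mp hcOfac).1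
        have hcodd : Odd c.support.card :=
          Nat.not_even_iff_odd.mp (Finset.mem_filter.mp hcmem).2
        have hdcc' : Equiv.Perm.Disjoint c c' :=
          pdFo (Finset.mem_coe.mpr hcmem) (Finset.mem_coe.mpr hc'Fo) (Ne.symm hc'ne)
        have hcsup : c.support ⊆ O.support :=
          Equiv.Perm.mem_cycleFactorsFinset_support_le hcOfac
        have hc'sup : c'.support ⊆ O.support :=
          Equiv.Perm.mem_cycleFactorsFinset_support_le hc'Ofac
        have hsum2 : c.support.card + c'.support.card ≤ O.support.card := by
          rw [← Finset.card_union_of_disjoint hdcc'.disjoint_support]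
          exact Finset.card_le_card (Finset.union_subset hcsup hc'sup)
        have hcle : c.support.card ≤ c'.support.card := hcmin c' hc'Fo
        set O' := O * c⁻¹ with hO'def
        have hdO'c : Equiv.Perm.Disjoint O' c :=
          Equiv.Perm.disjoint_mul_inv_of_mem_cycleFactorsFinset hcOfac
        have hσO' : σ = O' * c := by rw [hσO, hO'def]; group
        have hfacO' : O'.cycleFactorsFinset = Fo.erase c := by
          rw [hO'def, Equiv.Perm.cycleFactorsFinset_mul_inv_mem_eq_sdiff hcOfac, hfacO,
            Finset.sdiff_singleton_eq_erase]
        have hO'odd : Odd (orderOf O') := by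
          apply odd_orderOf_of_factors
          rw [hfacO']
          intro d hd
          exact Nat.not_even_iff_odd.mp
            (Finset.mem_filter.mp (Finset.mem_of_mem_erase hd)).2
        have hcardO : O.support.card = O'.support.card + c.support.card := by
          conv_lhs => rw [show O = O' * c by rw [hO'def]; group]
          exact hdO'c.card_support_mul
        have hOle : O.support.card ≤ Fintype.card α := Finset.card_le_univ _
        obtain ⟨u, hu⟩ := hcodd
        have hc2 : 2 ≤ c.support.card := hccyc.two_le_card_support
        refine ⟨O', c, 1, by rw [hσO']; group, ⟨hO'odd, ?_⟩, ⟨?_, ?_⟩, hgood1⟩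
        · omega
        · rw [hccyc.orderOf]; exact ⟨u, hu⟩
        · omega
  · -- there are even cycles
    have hFe2 : 2 ≤ Fe.card := by
      rcases hFeEven with ⟨k, hk⟩
      have : 0 < Fe.card := Finset.card_pos.mpr (Finset.nonempty_of_ne_empty hFeE)
      omega
    have hE2 : 2 ≤ E.support.card := by
      obtain ⟨c0, hc0⟩ := Finset.nonempty_of_ne_empty hFeE
      have hc0fac : c0 ∈ E.cycleFactorsFinset := by rw [hfacE]; exact hc0
      have := Equiv.Perm.mem_cycleFactorsFinset_support_le hc0fac
      have h2 := (Equiv.Perm.mem_cycleFactorsFinset_iff.mp hc0fac).1.two_le_card_support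
      calc 2 ≤ c0.support.card := h2
        _ ≤ E.support.card := Finset.card_le_card this
    have hOgood : Odd (orderOf O) ∧ O.support.card + 2 ≤ Fintype.card α :=
      ⟨hOodd, by omega⟩
    rcases Nat.lt_or_ge Fe.card 4 with hlt4 | hge4
    · -- exactly two even cycles
      have hFe2' : Fe.card = 2 := by
        obtain ⟨k, hk⟩ := hFeEven; omega
      obtain ⟨c1, hc1mem, hc1min⟩ :=
        Finset.exists_min_image Fe (fun c => c.support.card)
          (Finset.nonempty_of_ne_empty hFeE)
      have herase1 : (Fe.erase c1).card = 1 := by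
        rw [Finset.card_erase_of_mem hc1mem, hFe2']
      obtain ⟨c2, hc2eq⟩ := Finset.card_eq_one.mp herase1
      have hc2mem' : c2 ∈ Fe.erase c1 := by rw [hc2eq]; exact Finset.mem_singleton_self c2
      have hc2ne : c2 ≠ c1 := Finset.ne_of_mem_erase hc2mem'
      have hc2mem : c2 ∈ Fe := Finset.mem_of_mem_erase hc2mem'
      have hc1fac : c1 ∈ E.cycleFactorsFinset := by rw [hfacE]; exact hc1mem
      have hc1cyc : c1.IsCycle := (Equiv.Perm.mem_cycleFactorsFinset_iff.mp hc1fac).1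
      have hc2fac : c2 ∈ E.cycleFactorsFinset := by rw [hfacE]; exact hc2mem
      have hc2cyc : c2.IsCycle := (Equiv.Perm.mem_cycleFactorsFinset_iff.mp hc2fac).1
      have hd21 : Equiv.Perm.Disjoint c2 c1 :=
        pdFe (Finset.mem_coe.mpr hc2mem) (Finset.mem_coe.mpr hc1mem) hc2ne
      have hc2E : E * c1⁻¹ = c2 := by
        have hfac1 : (E * c1⁻¹).cycleFactorsFinset = {c2} := by
          rw [Equiv.Perm.cycleFactorsFinset_mul_inv_mem_eq_sdiff hc1fac, hfacE,
            Finset.sdiff_singleton_eq_erase, hc2eq]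
        exact (Equiv.Perm.cycleFactorsFinset_eq_singleton_iff.mp hfac1).2
      have hE12 : E = c2 * c1 := by rw [← hc2E]; group
      have hcardE12 : E.support.card = c2.support.card + c1.support.card := by
        rw [hE12, hd21.card_support_mul]
      obtain ⟨a1, ha1⟩ := (Finset.mem_filter.mp hc1mem).2
      obtain ⟨a2, ha2⟩ := (Finset.mem_filter.mp hc2mem).2
      have h21 : 2 ≤ c1.support.card := hc1cyc.two_le_card_support
      have h22 : 2 ≤ c2.support.card := hc2cyc.two_le_card_support
      have hminle : c1.support.card ≤ c2.support.card := hc1min c2 hc2mem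
      obtain ⟨d1, d2, hpair, hd1cyc, hd2cyc, hd1sub, hd2sub, hd1card, hd2card⟩ :=
        pair_cycles hc2cyc hc1cyc hd21
      have hσE : σ = d1 * d2 * O := by rw [hEO, hE12, hpair]
      have hd2good : Odd (orderOf d2) ∧ d2.support.card + 2 ≤ Fintype.card α := by
        constructor
        · rw [hd2cyc.orderOf, hd2card]; exact ⟨a1, by omega⟩
        · rw [hd2card]; omega
      by_cases hbig : d1.support.card + 2 ≤ Fintype.card α
      · exact ⟨d1, d2, O, hσE,
          ⟨by rw [hd1cyc.orderOf, hd1card]; exact ⟨a2, by omega⟩, hbig⟩, hd2good, hOgood⟩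
      · -- c2 is a cycle of length (card α) - 2 : O = 1 and we split d1
        push_neg at hbig
        rw [hd1card] at hbig
        have hO1 : O = 1 := by
          rw [← Equiv.Perm.support_eq_empty_iff, ← Finset.card_eq_zero]
          omega
        have hOcard0 : O.support.card = 0 := by rw [hO1, Equiv.Perm.support_one]; rfl
        have hd1odd : Odd d1.support.card := by rw [hd1card]; exact ⟨a2, by omega⟩
        have h5d1 : 5 ≤ d1.support.card := by rw [hd1card]; omega
        obtain ⟨s1, s2, hsplit, hs1c, hs2c, _, _, ho1, ho2, hsum12, hb1, hb2, _⟩ :=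
          split_cycle hd1cyc hd1odd h5d1
        refine ⟨s1, s2, d2, ?_, ⟨?_, ?_⟩, ⟨?_, ?_⟩, hd2good⟩
        · rw [hσE, hO1, hsplit]; group
        · rw [hs1c.orderOf]; exact ho1
        · rw [hd1card] at hsum12 hb1; omega
        · rw [hs2c.orderOf]; exact ho2
        · rw [hd1card] at hsum12 hb2; omega
    · -- at least four even cycles
      obtain ⟨A, B, hABE, hoA, hoB, _, _, hcA, hcB⟩ :=
        even_part_decomp Fe.card E (by rw [hfacE]) 
          (fun c hc => by rw [hfacE] at hc; exact (Finset.mem_filter.mp hc).2) hFeEven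
      have hEcard : E.support.card ≤ Fintype.card α := by omega
      exact ⟨A, B, O, by rw [hEO, hABE], ⟨hoA, by omega⟩, ⟨hoB, by omega⟩, hOgood⟩

end ThreeComm

/-- **Generating `Alt(N)` by commutators.** If `N ≥ 5`, every element of the alternating group
`Alt(N)` is a product of `3` commutators `⁅a,b⁆ = a*b*a⁻¹*b⁻¹` of elements of `Alt(N)`. -/
theorem alternating_three_commutators (N : ℕ) (hN : 5 ≤ N)
    (σ : alternatingGroup (Fin N)) :
    ∃ a b c d e f : alternatingGroup (Fin N),
      σ = ⁅a, b⁆ * ⁅c, d⁆ * ⁅e, f⁆ := by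
  have h5 : 5 ≤ Fintype.card (Fin N) := by simpa using hN
  have hσ : Equiv.Perm.sign (σ : Equiv.Perm (Fin N)) = 1 :=
    Equiv.Perm.mem_alternatingGroup.mp σ.2
  obtain ⟨g1, g2, g3, hprod, hg1, hg2, hg3⟩ := ThreeComm.decomp h5 hσ
  obtain ⟨a, b, hsa, hsb, hab⟩ := ThreeComm.good_comm hg1.1 hg1.2
  obtain ⟨c, d, hsc, hsd, hcd⟩ := ThreeComm.good_comm hg2.1 hg2.2
  obtain ⟨e, f, hse, hsf, hef⟩ := ThreeComm.good_comm hg3.1 hg3.2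
  refine ⟨⟨a, Equiv.Perm.mem_alternatingGroup.mpr hsa⟩,
    ⟨b, Equiv.Perm.mem_alternatingGroup.mpr hsb⟩,
    ⟨c, Equiv.Perm.mem_alternatingGroup.mpr hsc⟩,
    ⟨d, Equiv.Perm.mem_alternatingGroup.mpr hsd⟩,
    ⟨e, Equiv.Perm.mem_alternatingGroup.mpr hse⟩,
    ⟨f, Equiv.Perm.mem_alternatingGroup.mpr hsf⟩, ?_⟩
  apply Subtype.ext
  have : (σ : Equiv.Perm (Fin N)) = ⁅a, b⁆ * ⁅c, d⁆ * ⁅e, f⁆ := by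
    rw [hprod, hab, hcd, hef]
  rw [this]
  simp only [commutatorElement_def, Subgroup.coe_mul, InvMemClass.coe_inv]
end

section
/- Let A and B be disjoint finite sets with |B| ≥ |A| + 6 and |B| ≥ 8 (i.e., |A| ≥ 2). Then every element of Alt(A ∪ B) is a product of 4 elements, each of the form P·Q·P⁻¹ with P ∈ Alt(A ∪ B) and Q ∈ Alt(B). -/
section AuxiliaryLemmas

open Equiv Equiv.Perm Finset

private def sumInrEquiv (α β : Type*) : β ≃ {x : α ⊕ β // x.isRight = true} where
  toFun b := ⟨Sum.inr b, rfl⟩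
  invFun x := x.1.getRight x.2
  left_inv b := rfl
  right_inv := fun ⟨x, hx⟩ => by
    cases x with
    | inl a => simp at hx
    | inr b => rfl

private lemma sumCongr_eq_extendDomain {α β : Type*} [DecidableEq α] [DecidableEq β]
    (Q : Equiv.Perm β) :
    (Equiv.sumCongr (Equiv.refl α) Q : Equiv.Perm (α ⊕ β)) =
      Q.extendDomain (sumInrEquiv α β) := by
  ext x
  cases x with
  | inl a =>
    rw [Equiv.Perm.extendDomain_apply_not_subtype]
    · rfl
    · simp
  | inr b =>
    have h1 : ((sumInrEquiv α β) b : α ⊕ β) = Sum.inr b := rfl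
    have := Equiv.Perm.extendDomain_apply_image Q (sumInrEquiv α β) b
    rw [h1] at this
    rw [this]
    rfl

private lemma cycleType_sumCongr_refl {α β : Type*} [Fintype α] [DecidableEq α]
    [Fintype β] [DecidableEq β] (Q : Equiv.Perm β) :
    Equiv.Perm.cycleType (Equiv.sumCongr (Equiv.refl α) Q : Equiv.Perm (α ⊕ β)) = Q.cycleType := by
  rw [sumCongr_eq_extendDomain, Equiv.Perm.cycleType_extendDomain]

/-- Any even permutation of `α ⊕ β` whose support has size at most `|β|` is a conjugate
`P·Q·P⁻¹` of an even permutation `Q` of `β`, with `P` even. -/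
private lemma conj_realize {α β : Type*} [Fintype α] [DecidableEq α] [Fintype β] [DecidableEq β]
    (hα : 2 ≤ Fintype.card α)
    (τ : Equiv.Perm (α ⊕ β)) (hτ : τ ∈ alternatingGroup (α ⊕ β))
    (hsupp : τ.support.card ≤ Fintype.card β) :
    ∃ P ∈ alternatingGroup (α ⊕ β), ∃ Q ∈ alternatingGroup β,
      τ = P * (Equiv.sumCongr (Equiv.refl α) Q : Equiv.Perm (α ⊕ β)) * P⁻¹ := by
  obtain ⟨Q, hQ⟩ := (Equiv.Perm.exists_with_cycleType_iff β (m := τ.cycleType)).2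
    ⟨by rw [Equiv.Perm.sum_cycleType]; exact hsupp,
      fun a ha => Equiv.Perm.two_le_of_mem_cycleType ha⟩
  have hQalt : Q ∈ alternatingGroup β := by
    rw [Equiv.Perm.mem_alternatingGroup, Equiv.Perm.sign_of_cycleType, hQ,
      ← Equiv.Perm.sign_of_cycleType]
    exact Equiv.Perm.mem_alternatingGroup.1 hτ
  have hconj : IsConj (Equiv.sumCongr (Equiv.refl α) Q : Equiv.Perm (α ⊕ β)) τ :=
    Equiv.Perm.isConj_iff_cycleType_eq.2 (by rw [cycleType_sumCongr_refl, hQ])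
  obtain ⟨P, hP⟩ := isConj_iff.1 hconj
  by_cases hs : P ∈ alternatingGroup (α ⊕ β)
  · exact ⟨P, hs, Q, hQalt, hP.symm⟩
  · obtain ⟨a₀, a₁, hne⟩ := Fintype.exists_pair_of_one_lt_card (by omega : 1 < Fintype.card α)
    have hsP : Equiv.Perm.sign P = -1 := by
      rcases Int.units_eq_one_or (Equiv.Perm.sign P) with h | h
      · exact absurd (Equiv.Perm.mem_alternatingGroup.2 h) hs
      · exact h
    refine ⟨P * (Equiv.sumCongr (Equiv.swap a₀ a₁) (1 : Equiv.Perm β) : Equiv.Perm (α ⊕ β)),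
      ?_, Q, hQalt, ?_⟩
    · rw [Equiv.Perm.mem_alternatingGroup, map_mul, hsP, Equiv.Perm.sign_sumCongr,
        Equiv.Perm.sign_swap hne, map_one]
      norm_num
    · have hcomm : (Equiv.sumCongr (Equiv.swap a₀ a₁) (1 : Equiv.Perm β) : Equiv.Perm (α ⊕ β)) *
          (Equiv.sumCongr (Equiv.refl α) Q : Equiv.Perm (α ⊕ β)) *
          (Equiv.sumCongr (Equiv.swap a₀ a₁) (1 : Equiv.Perm β) : Equiv.Perm (α ⊕ β))⁻¹ =
          (Equiv.sumCongr (Equiv.refl α) Q : Equiv.Perm (α ⊕ β)) := by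
        have h1 : (Equiv.sumCongr (Equiv.refl α) Q : Equiv.Perm (α ⊕ β)) =
            Equiv.sumCongr (1 : Equiv.Perm α) Q := rfl
        rw [h1, Equiv.Perm.sumCongr_inv, Equiv.Perm.sumCongr_mul, Equiv.Perm.sumCongr_mul]
        simp
      rw [← hP, mul_inv_rev]
      calc P * ((Equiv.refl α).sumCongr Q) * P⁻¹
          = P * ((Equiv.sumCongr (Equiv.swap a₀ a₁) (1 : Equiv.Perm β) : Equiv.Perm (α ⊕ β)) *
              ((Equiv.refl α).sumCongr Q) *
              (Equiv.sumCongr (Equiv.swap a₀ a₁) (1 : Equiv.Perm β) :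
                Equiv.Perm (α ⊕ β))⁻¹) * P⁻¹ := by
            rw [hcomm]
        _ = P * (Equiv.sumCongr (Equiv.swap a₀ a₁) (1 : Equiv.Perm β) : Equiv.Perm (α ⊕ β)) *
              ((Equiv.refl α).sumCongr Q) *
              ((Equiv.sumCongr (Equiv.swap a₀ a₁) (1 : Equiv.Perm β) :
                Equiv.Perm (α ⊕ β))⁻¹ * P⁻¹) := by
            group

/-- Every even permutation with support of size at most `n` is a product of at most `n / 2`
even permutations, each with support of size at most `4`. -/
private lemma pairs_decomp {γ : Type*} [Fintype γ] [DecidableEq γ] :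
    ∀ (n : ℕ) (σ : Equiv.Perm γ), σ.support.card ≤ n → σ ∈ alternatingGroup γ →
    ∃ l : List (Equiv.Perm γ),
      (∀ τ ∈ l, τ ∈ alternatingGroup γ ∧ τ.support.card ≤ 4) ∧
      l.prod = σ ∧ 2 * l.length ≤ n := by
  intro n
  induction n using Nat.strong_induction_on with
  | _ n ih =>
    intro σ hcard hσ
    by_cases h1 : σ = 1
    · exact ⟨[], by simp, by simp [h1], by simp⟩
    · obtain ⟨x, hx⟩ := Finset.nonempty_iff_ne_empty.2
        (fun h => h1 (Equiv.Perm.support_eq_empty_iff.1 h))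
      have hσx : σ x ≠ x := Equiv.Perm.mem_support.1 hx
      set t₁ := Equiv.swap x (σ x) with ht₁
      set σ₁ := t₁ * σ with hσ₁
      have hc1 : σ₁.support.card < σ.support.card := Equiv.Perm.card_support_swap_mul hσx
      have hsign1 : Equiv.Perm.sign σ₁ = -1 := by
        rw [hσ₁, map_mul, ht₁, Equiv.Perm.sign_swap (Ne.symm hσx),
          Equiv.Perm.mem_alternatingGroup.1 hσ]
        norm_num
      have hσ₁ne : σ₁ ≠ 1 := by
        intro h; rw [h, map_one] at hsign1; exact absurd hsign1 (by norm_num)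
      obtain ⟨y, hy⟩ := Finset.nonempty_iff_ne_empty.2
        (fun h => hσ₁ne (Equiv.Perm.support_eq_empty_iff.1 h))
      have hσ₁y : σ₁ y ≠ y := Equiv.Perm.mem_support.1 hy
      set t₂ := Equiv.swap y (σ₁ y) with ht₂
      set σ₂ := t₂ * σ₁ with hσ₂
      have hc2 : σ₂.support.card < σ₁.support.card := Equiv.Perm.card_support_swap_mul hσ₁y
      have hσ₂alt : σ₂ ∈ alternatingGroup γ := by
        rw [Equiv.Perm.mem_alternatingGroup, hσ₂, map_mul, hsign1, ht₂,
          Equiv.Perm.sign_swap (Ne.symm hσ₁y)]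
        norm_num
      have hσ₂le : σ₂.support.card ≤ n - 2 := by omega
      have hn2 : n - 2 < n := by
        have h2 : 2 ≤ σ.support.card := Equiv.Perm.two_le_card_support_of_ne_one h1
        omega
      obtain ⟨l, hl, hlp, hln⟩ := ih (n - 2) hn2 σ₂ hσ₂le hσ₂alt
      refine ⟨(t₁ * t₂) :: l, ?_, ?_, ?_⟩
      · rintro τ hτ
        rcases List.mem_cons.1 hτ with rfl | hτ
        · constructor
          · rw [Equiv.Perm.mem_alternatingGroup, map_mul, ht₁, ht₂,
              Equiv.Perm.sign_swap (Ne.symm hσx), Equiv.Perm.sign_swap (Ne.symm hσ₁y)]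
            norm_num
          · calc (t₁ * t₂).support.card
                ≤ (t₁.support ∪ t₂.support).card :=
                  Finset.card_le_card (Equiv.Perm.support_mul_le t₁ t₂)
              _ ≤ t₁.support.card + t₂.support.card := Finset.card_union_le _ _
              _ ≤ 4 := by
                  rw [ht₁, ht₂, Equiv.Perm.card_support_swap (Ne.symm hσx),
                    Equiv.Perm.card_support_swap (Ne.symm hσ₁y)]
        · exact hl τ hτ
      · rw [List.prod_cons, hlp, hσ₂, hσ₁, ht₂, ht₁]
        rw [show Equiv.swap x (σ x) * Equiv.swap y ((Equiv.swap x (σ x) * σ) y) *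
              (Equiv.swap y ((Equiv.swap x (σ x) * σ) y) * (Equiv.swap x (σ x) * σ)) =
            Equiv.swap x (σ x) * (Equiv.swap y ((Equiv.swap x (σ x) * σ) y) *
              Equiv.swap y ((Equiv.swap x (σ x) * σ) y)) * (Equiv.swap x (σ x) * σ) by group]
        rw [Equiv.swap_mul_self, mul_one, ← mul_assoc, Equiv.swap_mul_self, one_mul]
      · simp only [List.length_cons]
        have h2 : 2 ≤ σ.support.card := Equiv.Perm.two_le_card_support_of_ne_one h1
        omega

private lemma support_list_prod_card {γ : Type*} [Fintype γ] [DecidableEq γ]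
    (l : List (Equiv.Perm γ)) :
    l.prod.support.card ≤ (l.map fun τ => τ.support.card).sum := by
  induction l with
  | nil => simp
  | cons a l ih =>
    simp only [List.prod_cons, List.map_cons, List.sum_cons]
    calc (a * l.prod).support.card
        ≤ (a.support ∪ l.prod.support).card :=
          Finset.card_le_card (Equiv.Perm.support_mul_le a l.prod)
      _ ≤ a.support.card + l.prod.support.card := Finset.card_union_le _ _
      _ ≤ a.support.card + (l.map fun τ => τ.support.card).sum := Nat.add_le_add_left ih _

private lemma chunk_bound {γ : Type*} [Fintype γ] [DecidableEq γ] (L : List (Equiv.Perm γ))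
    (c : ℕ) (hmem : ∀ τ ∈ L, τ ∈ alternatingGroup γ ∧ τ.support.card ≤ 4)
    (hlen : L.length ≤ c) :
    L.prod ∈ alternatingGroup γ ∧ L.prod.support.card ≤ 4 * c := by
  constructor
  · exact list_prod_mem (fun τ hτ => (hmem τ hτ).1)
  · calc L.prod.support.card ≤ (L.map fun τ => τ.support.card).sum := support_list_prod_card L
      _ ≤ (L.map fun τ => τ.support.card).length * 4 := by
          refine List.sum_le_card_nsmul _ 4 ?_ |>.trans (by simp)
          intro x hx
          obtain ⟨τ, hτ, rfl⟩ := List.mem_map.1 hx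
          exact (hmem τ hτ).2
      _ = L.length * 4 := by rw [List.length_map]
      _ ≤ c * 4 := Nat.mul_le_mul_right 4 hlen
      _ = 4 * c := Nat.mul_comm c 4

private lemma prod_ofFn_four {G : Type*} [Monoid G] (f : Fin 4 → G) :
    (List.ofFn f).prod = f 0 * f 1 * f 2 * f 3 := by
  have : (3 : Fin 4) = Fin.succ 2 := rfl
  simp [List.ofFn_succ, mul_assoc, this]

end AuxiliaryLemmas

/-- **Conjugating a smaller alternating group.** Let `A` (= `α`) and `B` (= `β`) be disjoint
finite sets with `|A| ≥ 2` and `|B| ≥ |A| + 6` (hence `|B| ≥ 8`). Every element of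
`Alt(A ∪ B)` is a product of `4` elements of the form `P·Q·P⁻¹` with `P ∈ Alt(A ∪ B)` and
`Q ∈ Alt(B)` (embedded in `Alt(A ∪ B)` fixing `A` pointwise). -/
theorem alternating_four_conjugates
    {α β : Type*} [Fintype α] [DecidableEq α] [Fintype β] [DecidableEq β]
    (hα : 2 ≤ Fintype.card α) (hβ : Fintype.card α + 6 ≤ Fintype.card β)
    (σ : Equiv.Perm (α ⊕ β)) (hσ : σ ∈ alternatingGroup (α ⊕ β)) :
    ∃ (P : Fin 4 → Equiv.Perm (α ⊕ β)) (Q : Fin 4 → Equiv.Perm β),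
      (∀ i, P i ∈ alternatingGroup (α ⊕ β)) ∧ (∀ i, Q i ∈ alternatingGroup β) ∧
      σ = (List.ofFn fun i : Fin 4 =>
            P i * (Equiv.sumCongr (Equiv.refl α) (Q i) : Equiv.Perm (α ⊕ β)) * (P i)⁻¹).prod := by
  classical
  set b := Fintype.card β with hb
  -- decompose σ into pairs of transpositions
  have hcard : σ.support.card ≤ Fintype.card α + b := by
    calc σ.support.card ≤ Fintype.card (α ⊕ β) := Finset.card_le_univ _
      _ = Fintype.card α + b := Fintype.card_sum
  obtain ⟨l, hl, hlp, hln⟩ := pairs_decomp (Fintype.card α + b) σ hcard hσ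
  set q := l.length with hq
  have hq3 : q ≤ b - 3 := by omega
  set c := (q + 3) / 4 with hc
  have h4c : q ≤ 4 * c ∧ 4 * c ≤ q + 3 := by constructor <;> omega
  have hcb : 4 * c ≤ b := by omega
  -- the four chunks
  set L1 := l.take c with hL1
  set L2 := (l.drop c).take c with hL2
  set L3 := ((l.drop c).drop c).take c with hL3
  set L4 := ((l.drop c).drop c).drop c with hL4
  have hmem1 : ∀ τ ∈ L1, τ ∈ alternatingGroup (α ⊕ β) ∧ τ.support.card ≤ 4 :=
    fun τ hτ => hl τ (List.take_subset c l hτ)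
  have hmem2 : ∀ τ ∈ L2, τ ∈ alternatingGroup (α ⊕ β) ∧ τ.support.card ≤ 4 :=
    fun τ hτ => hl τ (List.drop_subset c l (List.take_subset c _ hτ))
  have hmem3 : ∀ τ ∈ L3, τ ∈ alternatingGroup (α ⊕ β) ∧ τ.support.card ≤ 4 :=
    fun τ hτ => hl τ (List.drop_subset c l (List.drop_subset c _ (List.take_subset c _ hτ)))
  have hmem4 : ∀ τ ∈ L4, τ ∈ alternatingGroup (α ⊕ β) ∧ τ.support.card ≤ 4 :=
    fun τ hτ => hl τ (List.drop_subset c l (List.drop_subset c _ (List.drop_subset c _ hτ)))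
  have hlen1 : L1.length ≤ c := by simp [hL1]
  have hlen2 : L2.length ≤ c := by simp [hL2]
  have hlen3 : L3.length ≤ c := by simp [hL3]
  have hlen4 : L4.length ≤ c := by
    simp only [hL4, List.length_drop]
    omega
  obtain ⟨halt1, hsupp1⟩ := chunk_bound L1 c hmem1 hlen1
  obtain ⟨halt2, hsupp2⟩ := chunk_bound L2 c hmem2 hlen2
  obtain ⟨halt3, hsupp3⟩ := chunk_bound L3 c hmem3 hlen3
  obtain ⟨halt4, hsupp4⟩ := chunk_bound L4 c hmem4 hlen4
  have hprod : σ = L1.prod * L2.prod * L3.prod * L4.prod := by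
    rw [← hlp]
    conv_lhs => rw [← List.take_append_drop c l]
    rw [List.prod_append]
    conv_lhs => rw [← List.take_append_drop c (l.drop c)]
    rw [List.prod_append]
    conv_lhs => rw [← List.take_append_drop c ((l.drop c).drop c)]
    rw [List.prod_append]
    group
    rfl
  -- realize each chunk as a conjugate
  obtain ⟨P1, hP1, Q1, hQ1, hE1⟩ := conj_realize hα L1.prod halt1 (le_trans hsupp1 hcb)
  obtain ⟨P2, hP2, Q2, hQ2, hE2⟩ := conj_realize hα L2.prod halt2 (le_trans hsupp2 hcb)
  obtain ⟨P3, hP3, Q3, hQ3, hE3⟩ := conj_realize hα L3.prod halt3 (le_trans hsupp3 hcb)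
  obtain ⟨P4, hP4, Q4, hQ4, hE4⟩ := conj_realize hα L4.prod halt4 (le_trans hsupp4 hcb)
  refine ⟨![P1, P2, P3, P4], ![Q1, Q2, Q3, Q4], ?_, ?_, ?_⟩
  · intro i; fin_cases i <;> simpa using ‹_›
  · intro i; fin_cases i <;> simpa using ‹_›
  · rw [prod_ofFn_four]
    simp only [Matrix.cons_val_zero, Matrix.cons_val_one, Matrix.head_cons]
    rw [show ((![P1, P2, P3, P4] : Fin 4 → Equiv.Perm (α ⊕ β)) 2) = P3 by simp,
      show ((![Q1, Q2, Q3, Q4] : Fin 4 → Equiv.Perm β) 2) = Q3 by simp,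
      show ((![P1, P2, P3, P4] : Fin 4 → Equiv.Perm (α ⊕ β)) 3) = P4 by simp,
      show ((![Q1, Q2, Q3, Q4] : Fin 4 → Equiv.Perm β) 3) = Q4 by simp]
    rw [hprod, hE1, hE2, hE3, hE4]
end

section
/- Let A, B, C be disjoint finite sets with |B| ≥ |C|. Then every element of Sym(A ∪ B ∪ C) is a product ℓ·r·ℓ' with ℓ, ℓ' ∈ Sym(A ∪ B) and r ∈ Sym(B ∪ C). If additionally |B| ≥ 2, every element of Alt(A ∪ B ∪ C) is a product of three elements from Alt(A ∪ B) ∪ Alt(B ∪ C). -/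
open Equiv

lemma perm_of_embeddings {α : Type*} [Fintype α] [DecidableEq α] {β : Type*} [Fintype β]
    (i g : β ↪ α) : ∃ e : Equiv.Perm α, ∀ t, e (i t) = g t := by
  classical
  have hcard : Fintype.card ↥(Set.range ⇑i)ᶜ = Fintype.card ↥(Set.range ⇑g)ᶜ := by
    rw [Fintype.card_compl_set, Fintype.card_compl_set,
      Set.card_range_of_injective i.injective, Set.card_range_of_injective g.injective]
  refine ⟨(Equiv.Set.sumCompl (Set.range ⇑i)).symm.trans
    ((Equiv.sumCongr ((Equiv.ofInjective _ i.injective).symm.trans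
        (Equiv.ofInjective _ g.injective)) (Fintype.equivOfCardEq hcard)).trans
      (Equiv.Set.sumCompl (Set.range ⇑g))), fun t => ?_⟩
  simp only [Equiv.trans_apply, Equiv.sumCongr_apply]
  rw [Set.sumCompl_symm_apply_of_mem (Set.mem_range_self t)]
  simp

lemma exists_perm_extend {Ω : Type*} [Fintype Ω] [DecidableEq Ω] (S T : Finset Ω) (hTS : T ⊆ S)
    (f : Ω → Ω) (hinj : ∀ x ∈ T, ∀ y ∈ T, f x = f y → x = y) (hmaps : ∀ x ∈ T, f x ∈ S) :
    ∃ π : Equiv.Perm Ω, (∀ x ∈ T, π x = f x) ∧ ∀ x, x ∉ S → π x = x := by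
  classical
  let i : ↥T ↪ ↥S := ⟨fun x => ⟨x, hTS x.2⟩, fun a b h => Subtype.ext (by
    simpa using congrArg Subtype.val h)⟩
  let g : ↥T ↪ ↥S := ⟨fun x => ⟨f x, hmaps x x.2⟩, fun a b h =>
    Subtype.ext (hinj a a.2 b b.2 (by simpa using congrArg Subtype.val h))⟩
  obtain ⟨e, he⟩ := perm_of_embeddings i g
  refine ⟨e.extendDomain (Equiv.refl {x // x ∈ S}), fun x hx => ?_, fun x hx => ?_⟩
  · have := e.extendDomain_apply_subtype (Equiv.refl {x // x ∈ S}) (hTS hx)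
    rw [this]
    have h2 := he ⟨x, hx⟩
    simp only [i, g, Function.Embedding.coeFn_mk] at h2
    simp
    exact congrArg Subtype.val h2
  · exact e.extendDomain_apply_not_subtype _ hx

/-- **Merging two overlapping symmetric (or alternating) groups.** Let `A, B, C` be disjoint
finite sets covering `Ω` with `|B| ≥ |C|`. Every element of `Sym(A∪B∪C) = Sym(Ω)` is a product
`ℓ·r·ℓ'` with `ℓ, ℓ' ∈ Sym(A∪B)` (fixing `C` pointwise) and `r ∈ Sym(B∪C)` (fixing `A`
pointwise). If moreover `|B| ≥ 2`, every element of `Alt(Ω)` is a product of three elements of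
`Alt(A∪B) ∪ Alt(B∪C)`. -/
theorem merging_symmetric_groups
    {Ω : Type*} [Fintype Ω] [DecidableEq Ω]
    (A B C : Finset Ω) (hAB : Disjoint A B) (hAC : Disjoint A C) (hBC : Disjoint B C)
    (hcover : A ∪ B ∪ C = Finset.univ) (hcard : C.card ≤ B.card) :
    (∀ σ : Equiv.Perm Ω, ∃ l r l' : Equiv.Perm Ω,
      (∀ x ∈ C, l x = x) ∧ (∀ x ∈ C, l' x = x) ∧ (∀ x ∈ A, r x = x) ∧
      σ = l * r * l')
    ∧ (2 ≤ B.card → ∀ σ ∈ alternatingGroup Ω,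
        ∃ p₁ p₂ p₃ : Equiv.Perm Ω,
          p₁ ∈ alternatingGroup Ω ∧ p₂ ∈ alternatingGroup Ω ∧ p₃ ∈ alternatingGroup Ω ∧
          ((∀ x ∈ C, p₁ x = x) ∨ (∀ x ∈ A, p₁ x = x)) ∧
          ((∀ x ∈ C, p₂ x = x) ∨ (∀ x ∈ A, p₂ x = x)) ∧
          ((∀ x ∈ C, p₃ x = x) ∨ (∀ x ∈ A, p₃ x = x)) ∧
          σ = p₁ * p₂ * p₃) := by
  classical
  have part1 : ∀ σ : Equiv.Perm Ω, ∃ l r l' : Equiv.Perm Ω,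
      (∀ x ∈ C, l x = x) ∧ (∀ x ∈ C, l' x = x) ∧ (∀ x ∈ A, r x = x) ∧ σ = l * r * l' := by
    intro σ
    set Ci := C.image σ with hCi
    have hCicard : Ci.card = C.card := Finset.card_image_of_injective _ σ.injective
    have hle : (Ci ∩ A).card ≤ (B \ Ci).card := by
      have h1 : (Ci ∩ A).card + (Ci ∩ B).card ≤ Ci.card := by
        rw [← Finset.card_union_of_disjoint (Finset.disjoint_left.mpr
          (fun x hx hy => Finset.disjoint_left.mp hAB (Finset.mem_inter.mp hx).2
            (Finset.mem_inter.mp hy).2))]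
        exact Finset.card_le_card (by
          intro x hx
          rcases Finset.mem_union.mp hx with h | h <;> exact (Finset.mem_inter.mp h).1)
      have h2 : (B ∩ Ci).card + (B \ Ci).card = B.card := Finset.card_inter_add_card_sdiff B Ci
      have h3 : (Ci ∩ B).card = (B ∩ Ci).card := by rw [Finset.inter_comm]
      omega
    have hcardle : Fintype.card ↥(Ci ∩ A) ≤ Fintype.card ↥(B \ Ci) := by
      rw [Fintype.card_coe, Fintype.card_coe]; exact hle
    obtain ⟨emb⟩ := Function.Embedding.nonempty_of_card_le hcardle
    set f : Ω → Ω := fun x => if hx : x ∈ Ci ∩ A then ↑(emb ⟨x, hx⟩) else x with hf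
    have hfB : ∀ x, ∀ hx : x ∈ Ci ∩ A, f x ∈ B \ Ci := by
      intro x hx
      simp only [hf, dif_pos hx]
      exact Finset.coe_mem (emb ⟨x, hx⟩)
    have hfid : ∀ x, x ∉ Ci ∩ A → f x = x := by
      intro x hx; simp only [hf, dif_neg hx]
    have hinj : ∀ x ∈ Ci ∪ C, ∀ y ∈ Ci ∪ C, f x = f y → x = y := by
      intro x hx y hy hxy
      by_cases hx1 : x ∈ Ci ∩ A <;> by_cases hy1 : y ∈ Ci ∩ A
      · have h := emb.injective (Subtype.ext (by
          simpa only [hf, dif_pos hx1, dif_pos hy1] using hxy))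
        simpa using congrArg Subtype.val h
      · exfalso
        have h1 : y ∈ B \ Ci := by rw [← hfid y hy1, ← hxy]; exact hfB x hx1
        rcases Finset.mem_sdiff.mp h1 with ⟨hyB, hyCi⟩
        have hyC : y ∈ C := by
          rcases Finset.mem_union.mp hy with h | h
          · exact absurd h hyCi
          · exact h
        exact Finset.disjoint_right.mp hBC hyC hyB
      · exfalso
        have h1 : x ∈ B \ Ci := by rw [← hfid x hx1, hxy]; exact hfB y hy1
        rcases Finset.mem_sdiff.mp h1 with ⟨hxB, hxCi⟩
        have hxC : x ∈ C := by
          rcases Finset.mem_union.mp hx with h | h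
          · exact absurd h hxCi
          · exact h
        exact Finset.disjoint_right.mp hBC hxC hxB
      · rw [← hfid x hx1, ← hfid y hy1]; exact hxy
    obtain ⟨π, hπ1, -⟩ := exists_perm_extend Finset.univ (Ci ∪ C) (Finset.subset_univ _) f
      hinj (fun x _ => Finset.mem_univ _)
    have hπC : ∀ x ∈ C, π x = x := by
      intro x hx
      rw [hπ1 x (Finset.mem_union_right _ hx)]
      exact hfid x (fun h => Finset.disjoint_right.mp hAC hx (Finset.mem_inter.mp h).2)
    have hπσ : ∀ x ∈ C, π (σ x) ∈ B ∪ C := by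
      intro x hx
      have hσx : σ x ∈ Ci := Finset.mem_image_of_mem σ hx
      rw [hπ1 _ (Finset.mem_union_left _ hσx)]
      by_cases h : σ x ∈ Ci ∩ A
      · exact Finset.mem_union_left _ (Finset.mem_sdiff.mp (hfB _ h)).1
      · rw [hfid _ h]
        have hnA : σ x ∉ A := fun hA => h (Finset.mem_inter.mpr ⟨hσx, hA⟩)
        have hu : σ x ∈ A ∪ B ∪ C := hcover ▸ Finset.mem_univ _
        rcases Finset.mem_union.mp hu with h' | h'
        · rcases Finset.mem_union.mp h' with h'' | h''
          · exact absurd h'' hnA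
          · exact Finset.mem_union_left _ h''
        · exact Finset.mem_union_right _ h'
    obtain ⟨r, hr1, hr2⟩ := exists_perm_extend (B ∪ C) C Finset.subset_union_right
      (fun x => π (σ x)) (fun x _ y _ h => σ.injective (π.injective h)) hπσ
    refine ⟨π⁻¹, r, r⁻¹ * (π * σ), ?_, ?_, ?_, ?_⟩
    · intro x hx
      conv_lhs => rw [← hπC x hx]
      exact π.symm_apply_apply x
    · intro x hx
      rw [Equiv.Perm.mul_apply, Equiv.Perm.mul_apply, ← hr1 x hx]
      exact r.symm_apply_apply _
    · intro x hx
      refine hr2 x (fun h => ?_)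
      rcases Finset.mem_union.mp h with h' | h'
      · exact Finset.disjoint_left.mp hAB hx h'
      · exact Finset.disjoint_left.mp hAC hx h'
    · group
  refine ⟨part1, fun hB2 σ hσ => ?_⟩
  obtain ⟨b₁, hb₁, b₂, hb₂, hne⟩ := Finset.one_lt_card.mp hB2
  set t := Equiv.swap b₁ b₂ with ht
  have htC : ∀ x ∈ C, t x = x := fun x hx => Equiv.swap_apply_of_ne_of_ne
    (fun h => Finset.disjoint_right.mp hBC hx (h ▸ hb₁))
    (fun h => Finset.disjoint_right.mp hBC hx (h ▸ hb₂))
  have htA : ∀ x ∈ A, t x = x := fun x hx => Equiv.swap_apply_of_ne_of_ne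
    (fun h => Finset.disjoint_left.mp hAB hx (h ▸ hb₁))
    (fun h => Finset.disjoint_left.mp hAB hx (h ▸ hb₂))
  have hts : Equiv.Perm.sign t = -1 := Equiv.Perm.sign_swap hne
  have htt : t * t = 1 := Equiv.swap_mul_self _ _
  obtain ⟨l, r, l', hlC, hl'C, hrA, hσeq⟩ := part1 σ
  set a : Equiv.Perm Ω := if Equiv.Perm.sign l = 1 then 1 else t with ha
  set b : Equiv.Perm Ω := if Equiv.Perm.sign l' = 1 then 1 else t with hb
  have haa : a * a = 1 := by rw [ha]; split_ifs <;> simp [htt]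
  have hbb : b * b = 1 := by rw [hb]; split_ifs <;> simp [htt]
  have hsa : Equiv.Perm.sign a = Equiv.Perm.sign l := by
    rw [ha]; split_ifs with h
    · simp [h]
    · rcases Int.units_eq_one_or (Equiv.Perm.sign l) with h1 | h1
      · exact absurd h1 h
      · rw [h1, hts]
  have hsb : Equiv.Perm.sign b = Equiv.Perm.sign l' := by
    rw [hb]; split_ifs with h
    · simp [h]
    · rcases Int.units_eq_one_or (Equiv.Perm.sign l') with h1 | h1
      · exact absurd h1 h
      · rw [h1, hts]
  have haC : ∀ x ∈ C, a x = x := by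
    rw [ha]; split_ifs
    · intro x _; rfl
    · exact htC
  have haA : ∀ x ∈ A, a x = x := by
    rw [ha]; split_ifs
    · intro x _; rfl
    · exact htA
  have hbC : ∀ x ∈ C, b x = x := by
    rw [hb]; split_ifs
    · intro x _; rfl
    · exact htC
  have hbA : ∀ x ∈ A, b x = x := by
    rw [hb]; split_ifs
    · intro x _; rfl
    · exact htA
  have hσs : Equiv.Perm.sign σ = 1 := Equiv.Perm.mem_alternatingGroup.mp hσ
  refine ⟨l * a, a * r * b, b * l', ?_, ?_, ?_, Or.inl ?_, Or.inr ?_, Or.inl ?_, ?_⟩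
  · rw [Equiv.Perm.mem_alternatingGroup, Equiv.Perm.sign_mul, hsa, Int.units_mul_self]
  · rw [Equiv.Perm.mem_alternatingGroup, Equiv.Perm.sign_mul, Equiv.Perm.sign_mul, hsa, hsb]
    rw [hσeq] at hσs
    simpa only [Equiv.Perm.sign_mul] using hσs
  · rw [Equiv.Perm.mem_alternatingGroup, Equiv.Perm.sign_mul, hsb, Int.units_mul_self]
  · intro x hx
    rw [Equiv.Perm.mul_apply, haC x hx]
    exact hlC x hx
  · intro x hx
    rw [Equiv.Perm.mul_apply, Equiv.Perm.mul_apply, hbA x hx, hrA x hx]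
    exact haA x hx
  · intro x hx
    rw [Equiv.Perm.mul_apply, hl'C x hx]
    exact hbC x hx
  · rw [hσeq]
    have : (l * a) * (a * r * b) * (b * l') = l * (a * a) * (r * (b * b)) * l' := by group
    rw [this, haa, hbb, mul_one, mul_one]
end

section
/- Let R be any unital (possibly noncommutative) ring and let n, m ≥ 2. Then the elementary matrix group EL(n; Mat(m; R)) of n×n matrices over the matrix ring Mat(m;R), viewed naturally as nm×nm matrices over R, equals EL(nm; R). In particular, every elementary matrix 1 + r·e_{i,j} (i ≠ j, r ∈ R) of size nm is a product of matrices of the form 1 + M where M is supported in a single off-diagonal m×m block. -/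
/-!
Under `Mat(n; Mat(m; R)) ≃ Mat(nm; R)` the block elementary matrix `1 + M·e_{i,j}` is the product
of the scalar elementary matrices `1 + M_{a,b}·e_{(i,a),(j,b)}`, because `M ↦ 1 + M·e_{i,j}` turns
sums into products. Conversely, a scalar elementary matrix whose entry lies in an off-diagonal
block is the image of a block elementary matrix with a single nonzero entry, and one whose entry
`(p, q)` lies in a diagonal block is the commutator of `1 + r·e_{p,s}` and `1 + e_{s,q}` for a
position `s` in another block row, which exists because `n ≥ 2`.
-/

/-- The elementary matrix group `EL(ι; R)`: the subgroup of `GL` (units of the matrix ring)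
generated by the elementary matrices `1 + r·e_{i,j}` with `i ≠ j` and `r ∈ R`. -/
def EL (ι : Type*) [Fintype ι] [DecidableEq ι] (R : Type*) [Ring R] :
    Subgroup (Matrix ι ι R)ˣ :=
  Subgroup.closure
    {u : (Matrix ι ι R)ˣ | ∃ i j : ι, ∃ r : R,
      i ≠ j ∧ Units.val u = 1 + Matrix.single i j r}

open scoped commutatorElement

namespace Matrix

variable {ι : Type*} [Fintype ι] [DecidableEq ι] {κ : Type*} [Fintype κ] [DecidableEq κ]
  {R : Type*} [Ring R]

theorem one_add_single_mul_one_add_single {i j : ι} (h : i ≠ j) (r s : R) :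
    (1 + single i j r) * (1 + single i j s) = 1 + single i j (r + s) := by
  rw [mul_add, add_mul, add_mul, single_mul_single_of_ne (h := h.symm), single_add]
  simp only [mul_one, one_mul, add_zero]
  abel

def elementaryUnit (i j : ι) (h : i ≠ j) (r : R) : (Matrix ι ι R)ˣ where
  val := 1 + single i j r
  inv := 1 + single i j (-r)
  val_inv := by rw [one_add_single_mul_one_add_single h, add_neg_cancel, single_zero, add_zero]
  inv_val := by rw [one_add_single_mul_one_add_single h, neg_add_cancel, single_zero, add_zero]

section elementaryUnit

variable {i j : ι} (h : i ≠ j)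

@[simp]
theorem val_elementaryUnit (r : R) : (elementaryUnit i j h r).val = 1 + single i j r := rfl

theorem elementaryUnit_mul_elementaryUnit (r s : R) :
    elementaryUnit i j h r * elementaryUnit i j h s = elementaryUnit i j h (r + s) :=
  Units.ext (one_add_single_mul_one_add_single h r s)

@[simp]
theorem elementaryUnit_zero : elementaryUnit i j h (0 : R) = 1 :=
  Units.ext (by simp)

@[simp]
theorem inv_elementaryUnit (r : R) : (elementaryUnit i j h r)⁻¹ = elementaryUnit i j h (-r) :=
  Units.ext rfl

end elementaryUnit

theorem commutatorElement_elementaryUnit {p s q : ι} (hps : p ≠ s) (hsq : s ≠ q) (hpq : p ≠ q)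
    (r : R) : ⁅elementaryUnit p s hps r, elementaryUnit s q hsq 1⁆ = elementaryUnit p q hpq r := by
  rw [commutatorElement_def, mul_inv_eq_iff_eq_mul, mul_inv_eq_iff_eq_mul]
  ext : 1
  simp only [Units.val_mul, val_elementaryUnit, mul_add, mul_one, add_mul, one_mul,
    single_mul_single_same, ne_eq, hsq.symm, hpq.symm, not_false_eq_true,
    single_mul_single_of_ne, add_zero]
  abel

variable (ι κ R) in
def offDiagBlockElementary : Set (Matrix (ι × κ) (ι × κ) R)ˣ :=
  {u | ∃ p q : ι × κ, ∃ r : R, p.1 ≠ q.1 ∧ u.val = 1 + single p q r}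

theorem elementaryUnit_mem_offDiagBlockElementary {p q : ι × κ} (h : p.1 ≠ q.1) (r : R) :
    elementaryUnit p q (ne_of_apply_ne Prod.fst h) r ∈ offDiagBlockElementary ι κ R :=
  ⟨p, q, r, h, rfl⟩

theorem inv_mem_offDiagBlockElementary {u : (Matrix (ι × κ) (ι × κ) R)ˣ}
    (hu : u ∈ offDiagBlockElementary ι κ R) : u⁻¹ ∈ offDiagBlockElementary ι κ R := by
  obtain ⟨p, q, r, hpq, hu⟩ := hu
  obtain rfl : u = elementaryUnit p q (ne_of_apply_ne Prod.fst hpq) r := Units.ext hu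
  rw [inv_elementaryUnit]
  exact elementaryUnit_mem_offDiagBlockElementary hpq (-r)

theorem exists_block_of_mem_offDiagBlockElementary {u : (Matrix (ι × κ) (ι × κ) R)ˣ}
    (hu : u ∈ offDiagBlockElementary ι κ R) :
    ∃ a b : ι, a ≠ b ∧
      ∀ s t : ι × κ, ¬(s.1 = a ∧ t.1 = b) → u.val s t = (1 : Matrix (ι × κ) (ι × κ) R) s t := by
  obtain ⟨p, q, r, hpq, hu⟩ := hu
  refine ⟨p.1, q.1, hpq, fun s t hst => ?_⟩
  rw [hu, add_apply, single_apply_of_ne, add_zero]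
  rintro ⟨rfl, rfl⟩
  exact hst ⟨rfl, rfl⟩

theorem exists_list_offDiagBlockElementary_prod_eq [Nontrivial ι] {p q : ι × κ} (hpq : p ≠ q)
    (r : R) :
    ∃ l : List (Matrix (ι × κ) (ι × κ) R)ˣ,
      (∀ v ∈ l, v ∈ offDiagBlockElementary ι κ R) ∧ l.prod = elementaryUnit p q hpq r := by
  by_cases hblock : p.1 = q.1
  · obtain ⟨k, hk⟩ := exists_ne p.1
    have hps : p.1 ≠ k := hk.symm
    have hsq : k ≠ q.1 := hblock ▸ hk
    set e := elementaryUnit p (k, p.2) (ne_of_apply_ne Prod.fst hps) r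
    set f := elementaryUnit (k, p.2) q (ne_of_apply_ne Prod.fst hsq) (1 : R)
    have he : e ∈ offDiagBlockElementary ι κ R := elementaryUnit_mem_offDiagBlockElementary hps r
    have hf : f ∈ offDiagBlockElementary ι κ R :=
      elementaryUnit_mem_offDiagBlockElementary (p := (k, p.2)) hsq 1
    have hcomm : ⁅e, f⁆ = elementaryUnit p q hpq r := commutatorElement_elementaryUnit _ _ hpq r
    refine ⟨[e, f, e⁻¹, f⁻¹], ?_, ?_⟩
    · simp only [List.mem_cons, List.not_mem_nil, or_false]
      rintro v (rfl | rfl | rfl | rfl)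
      exacts [he, hf, inv_mem_offDiagBlockElementary he, inv_mem_offDiagBlockElementary hf]
    · rw [← hcomm, commutatorElement_def]
      simp only [List.prod_cons, List.prod_nil, mul_one, mul_assoc]
  · exact ⟨[elementaryUnit p q hpq r],
      by simpa using elementaryUnit_mem_offDiagBlockElementary hblock r, List.prod_singleton⟩

theorem units_map_compRingEquiv_elementaryUnit_single {i j : ι} (h : i ≠ j) (a b : κ) (r : R) :
    Units.map (compRingEquiv ι κ R).toRingHom.toMonoidHom (elementaryUnit i j h (single a b r)) =
      elementaryUnit (i, a) (j, b) (ne_of_apply_ne Prod.fst h) r := by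
  ext : 1
  simp only [RingEquiv.toRingHom_eq_coe, RingHom.toMonoidHom_eq_coe, Units.coe_map,
    MonoidHom.coe_coe, RingHom.coe_coe, val_elementaryUnit, map_add, map_one,
    compRingEquiv_apply, comp_single_single]

end Matrix

open Matrix

section EL

variable {ι : Type*} [Fintype ι] [DecidableEq ι] {κ : Type*} [Fintype κ] [DecidableEq κ]
  {R : Type*} [Ring R]

theorem elementaryUnit_mem_EL {i j : ι} (h : i ≠ j) (r : R) : elementaryUnit i j h r ∈ EL ι R :=
  Subgroup.subset_closure ⟨i, j, r, h, rfl⟩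

theorem EL_le_iff {H : Subgroup (Matrix ι ι R)ˣ} :
    EL ι R ≤ H ↔ ∀ (i j : ι) (h : i ≠ j) (r : R), elementaryUnit i j h r ∈ H := by
  refine ⟨fun hH i j h r => hH (elementaryUnit_mem_EL h r), fun hH => ?_⟩
  refine (Subgroup.closure_le H).2 ?_
  rintro u ⟨i, j, r, h, hu⟩
  exact (Units.ext hu : u = elementaryUnit i j h r) ▸ hH i j h r

theorem map_EL_le_EL :
    (EL ι (Matrix κ κ R)).map (Units.map (compRingEquiv ι κ R).toRingHom.toMonoidHom) ≤
      EL (ι × κ) R := by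
  rw [Subgroup.map_le_iff_le_comap, EL_le_iff]
  intro i j hij M
  induction M using Matrix.induction_on' with
  | h_zero => simp
  | h_add M N hM hN => rw [← elementaryUnit_mul_elementaryUnit]; exact mul_mem hM hN
  | h_std_basis a b r =>
    rw [Subgroup.mem_comap, units_map_compRingEquiv_elementaryUnit_single]
    exact elementaryUnit_mem_EL _ r

theorem offDiagBlockElementary_subset_map_EL :
    offDiagBlockElementary ι κ R ⊆
      (EL ι (Matrix κ κ R)).map (Units.map (compRingEquiv ι κ R).toRingHom.toMonoidHom) := by
  rintro u ⟨p, q, r, hpq, hu⟩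
  obtain rfl : u = elementaryUnit p q (ne_of_apply_ne Prod.fst hpq) r := Units.ext hu
  exact ⟨_, elementaryUnit_mem_EL hpq (single p.2 q.2 r),
    units_map_compRingEquiv_elementaryUnit_single hpq p.2 q.2 r⟩

theorem EL_le_map_EL [Nontrivial ι] :
    EL (ι × κ) R ≤
      (EL ι (Matrix κ κ R)).map (Units.map (compRingEquiv ι κ R).toRingHom.toMonoidHom) := by
  refine EL_le_iff.2 fun p q hpq r => ?_
  obtain ⟨l, hl, hprod⟩ := exists_list_offDiagBlockElementary_prod_eq hpq r
  rw [← hprod]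
  exact list_prod_mem fun v hv => offDiagBlockElementary_subset_map_EL (hl v hv)

end EL

theorem EL_comp_eq_EL_general (n m : ℕ) (hn : 2 ≤ n) (R : Type*) [Ring R] :
    Subgroup.map
        (Units.map (Matrix.compRingEquiv (Fin n) (Fin m) R).toRingHom.toMonoidHom)
        (EL (Fin n) (Matrix (Fin m) (Fin m) R))
      = EL (Fin n × Fin m) R
    ∧ ∀ (i j : Fin n × Fin m), i ≠ j → ∀ (r : R)
        (u : (Matrix (Fin n × Fin m) (Fin n × Fin m) R)ˣ),
        Units.val u = 1 + Matrix.single i j r →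
        ∃ l : List (Matrix (Fin n × Fin m) (Fin n × Fin m) R)ˣ,
          (∀ v ∈ l, ∃ a b : Fin n, a ≠ b ∧
            ∀ s q : Fin n × Fin m, ¬(s.1 = a ∧ q.1 = b) →
              Units.val v s q
                = (1 : Matrix (Fin n × Fin m) (Fin n × Fin m) R) s q) ∧
          l.prod = u := by
  have : Nontrivial (Fin n) := Fin.nontrivial_iff_two_le.mpr hn
  refine ⟨le_antisymm map_EL_le_EL EL_le_map_EL, fun i j hij r u hu => ?_⟩
  obtain ⟨l, hl, hprod⟩ := exists_list_offDiagBlockElementary_prod_eq hij r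
  exact ⟨l, fun v hv => exists_block_of_mem_offDiagBlockElementary (hl v hv),
    hprod.trans (Units.ext hu.symm)⟩

/-- **`EL(n; Mat(m;R)) = EL(nm; R)`.** For any unital (possibly noncommutative) ring `R` and
`n, m ≥ 2`, the elementary matrix group over the matrix ring `Mat(m;R)`, viewed as `nm × nm`
matrices over `R` via the canonical ring isomorphism, equals `EL(nm; R)`. In particular, every
elementary matrix `1 + r·e_{i,j}` (`i ≠ j`) of size `nm` is a product of matrices of the form
`1 + M` with `M` supported in a single off-diagonal `m × m` block. -/
theorem EL_comp_eq_EL (n m : ℕ) (hn : 2 ≤ n) (hm : 2 ≤ m) (R : Type*) [Ring R] :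
    Subgroup.map
        (Units.map (Matrix.compRingEquiv (Fin n) (Fin m) R).toRingHom.toMonoidHom)
        (EL (Fin n) (Matrix (Fin m) (Fin m) R))
      = EL (Fin n × Fin m) R
    ∧ ∀ (i j : Fin n × Fin m), i ≠ j → ∀ (r : R)
        (u : (Matrix (Fin n × Fin m) (Fin n × Fin m) R)ˣ),
        Units.val u = 1 + Matrix.single i j r →
        ∃ l : List (Matrix (Fin n × Fin m) (Fin n × Fin m) R)ˣ,
          (∀ v ∈ l, ∃ a b : Fin n, a ≠ b ∧
            ∀ s q : Fin n × Fin m, ¬(s.1 = a ∧ q.1 = b) →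
              Units.val v s q
                = (1 : Matrix (Fin n × Fin m) (Fin n × Fin m) R) s q) ∧
          l.prod = u :=
  EL_comp_eq_EL_general n m hn R
end

section
/- Let p ≥ r ≥ 0 be integers, let a_1,…,a_r, b_1,…,b_{p−r} ∈ [0,w] be reals, and let g(z) = (∏_i √(1 − a_i z))/(∏_j √(1 − b_j z)). Then the Taylor polynomial g_q of g at 0 of degree q satisfies |g(z) − g_q(z)| ≤ 3^p·2^{−q} for all z ∈ [0, 1/(5w)]. -/
open Complex Metric Finset

/-- **Taylor approximation of products of square-root factors.** For
`g(z) = (∏ᵢ √(1 − aᵢ z))/(∏ⱼ √(1 − bⱼ z))` with all `aᵢ, bⱼ ∈ [0, w]` (with `r` factors above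
and `p − r` below), the degree-`q` Taylor polynomial `g_q` of `g` at `0` satisfies
`|g(z) − g_q(z)| ≤ 3^p · 2^{−q}` for all `z ∈ [0, 1/(5w)]`. -/
theorem taylor_approx_sqrt_products (p r q : ℕ) (hrp : r ≤ p) (w : ℝ) (hw : 0 < w)
    (a : Fin r → ℝ) (b : Fin (p - r) → ℝ)
    (ha : ∀ i, a i ∈ Set.Icc (0 : ℝ) w) (hb : ∀ j, b j ∈ Set.Icc (0 : ℝ) w) :
    ∀ z ∈ Set.Icc (0 : ℝ) (1 / (5 * w)),
      |(∏ i, Real.sqrt (1 - a i * z)) / (∏ j, Real.sqrt (1 - b j * z)) -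
          ∑ k ∈ Finset.range (q + 1),
            (iteratedDeriv k
                (fun x : ℝ =>
                  (∏ i, Real.sqrt (1 - a i * x)) / (∏ j, Real.sqrt (1 - b j * x))) 0)
              / (Nat.factorial k) * z ^ k|
        ≤ 3 ^ p / 2 ^ q := by
  intro z hz
  obtain ⟨hz0, hz1⟩ := hz
  set g : ℝ → ℝ := fun x : ℝ =>
      (∏ i, Real.sqrt (1 - a i * x)) / (∏ j, Real.sqrt (1 - b j * x)) with hgdef
  set F : ℂ → ℂ := fun ζ : ℂ =>
      (∏ i, ((1 : ℂ) - (a i : ℂ) * ζ) ^ ((1/2 : ℝ) : ℂ)) /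
      (∏ j, ((1 : ℂ) - (b j : ℂ) * ζ) ^ ((1/2 : ℝ) : ℂ)) with hFdef
  set R : ℝ := 1 / (2 * w) with hRdef
  have hR0 : 0 < R := by positivity
  set Rn : NNReal := R.toNNReal with hRndef
  have hRn : (Rn : ℝ) = R := Real.coe_toNNReal R hR0.le
  have hRn0 : 0 < Rn := by
    rw [← NNReal.coe_lt_coe, hRn]; exact hR0
  -- basic factor estimates
  have key : ∀ c : ℝ, c ∈ Set.Icc (0:ℝ) w → ∀ ζ : ℂ, ‖ζ‖ ≤ R →
      1/2 ≤ ((1:ℂ) - (c:ℂ) * ζ).re ∧ ‖(1:ℂ) - (c:ℂ) * ζ‖ ≤ 3/2 := by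
    rintro c ⟨hc0, hcw⟩ ζ hζ
    have habs : ‖(c:ℂ) * ζ‖ ≤ 1/2 := by
      rw [norm_mul, Complex.norm_real, Real.norm_eq_abs, _root_.abs_of_nonneg hc0]
      calc c * ‖ζ‖ ≤ w * R := by
            apply mul_le_mul hcw hζ (norm_nonneg _) hw.le
        _ = 1/2 := by rw [hRdef]; field_simp
    constructor
    · have h1 : |((c:ℂ) * ζ).re| ≤ 1/2 := (Complex.abs_re_le_norm _).trans habs
      have h2 := (abs_le.mp h1).2
      simp only [Complex.sub_re, Complex.one_re]
      linarith
    · calc ‖(1:ℂ) - (c:ℂ)*ζ‖ ≤ ‖(1:ℂ)‖ + ‖(c:ℂ)*ζ‖ := by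
            rw [sub_eq_add_neg]
            simpa using norm_add_le (1:ℂ) (-((c:ℂ)*ζ))
      _ ≤ 3/2 := by
            simp only [norm_one]; linarith
  have keyne : ∀ c : ℝ, c ∈ Set.Icc (0:ℝ) w → ∀ ζ : ℂ, ‖ζ‖ ≤ R →
      ((1:ℂ) - (c:ℂ) * ζ) ≠ 0 := by
    intro c hc ζ hζ h0
    have := (key c hc ζ hζ).1
    rw [h0] at this
    norm_num at this
  -- norm of each cpow factor
  have hfac : ∀ c : ℝ, c ∈ Set.Icc (0:ℝ) w → ∀ ζ : ℂ, ‖ζ‖ ≤ R →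
      ‖((1:ℂ) - (c:ℂ) * ζ) ^ ((1/2:ℝ):ℂ)‖ =
        Real.sqrt ‖(1:ℂ) - (c:ℂ) * ζ‖ := by
    intro c hc ζ hζ
    rw [Complex.norm_cpow_of_ne_zero (keyne c hc ζ hζ), Complex.ofReal_re, Complex.ofReal_im,
      mul_zero, Real.exp_zero, div_one, Real.sqrt_eq_rpow]
  -- differentiability
  have hdF : ∀ ζ : ℂ, ‖ζ‖ ≤ R → DifferentiableAt ℂ F ζ := by
    intro ζ hζ
    have hnum : ∀ c : ℝ, c ∈ Set.Icc (0:ℝ) w →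
        DifferentiableAt ℂ (fun z : ℂ => ((1:ℂ) - (c:ℂ) * z) ^ ((1/2:ℝ):ℂ)) ζ := by
      intro c hc
      apply DifferentiableAt.cpow
      · exact (differentiableAt_const _).sub ((differentiableAt_const _).mul differentiableAt_id)
      · exact differentiableAt_const _
      · exact Or.inl (by linarith [(key c hc ζ hζ).1])
    apply DifferentiableAt.div
    · exact DifferentiableAt.fun_finsetProd (fun i _ => hnum (a i) (ha i))
    · exact DifferentiableAt.fun_finsetProd (fun j _ => hnum (b j) (hb j))
    · rw [Finset.prod_ne_zero_iff]
      intro j _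
      intro h0
      rcases (Complex.cpow_eq_zero_iff _ _).mp h0 with ⟨h1, -⟩
      exact keyne (b j) (hb j) ζ hζ h1
  have hd : DifferentiableOn ℂ F (closedBall 0 (Rn : ℝ)) := by
    intro ζ hζ
    rw [mem_closedBall_zero_iff, hRn] at hζ
    exact (hdF ζ hζ).differentiableWithinAt
  have h := hd.hasFPowerSeriesOnBall hRn0
  -- uniform bound on F on closed ball
  set M : ℝ := Real.sqrt 3 ^ p with hMdef
  have hM0 : 0 ≤ M := pow_nonneg (Real.sqrt_nonneg 3) p
  have hFb : ∀ ζ : ℂ, ‖ζ‖ ≤ R → ‖F ζ‖ ≤ M := by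
    intro ζ hζ
    have hnum : ‖∏ i, ((1:ℂ) - (a i : ℂ) * ζ) ^ ((1/2:ℝ):ℂ)‖ ≤
        Real.sqrt (3/2) ^ r := by
      rw [norm_prod]
      calc ∏ i, ‖((1:ℂ) - (a i : ℂ) * ζ) ^ ((1/2:ℝ):ℂ)‖
          ≤ ∏ _i : Fin r, Real.sqrt (3/2) := by
            apply Finset.prod_le_prod (fun i _ => norm_nonneg _)
            intro i _
            rw [hfac (a i) (ha i) ζ hζ]
            exact Real.sqrt_le_sqrt (key (a i) (ha i) ζ hζ).2
        _ = Real.sqrt (3/2) ^ r := by rw [Finset.prod_const, Finset.card_univ, Fintype.card_fin]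
    have hden : Real.sqrt (1/2) ^ (p - r) ≤
        ‖∏ j, ((1:ℂ) - (b j : ℂ) * ζ) ^ ((1/2:ℝ):ℂ)‖ := by
      rw [norm_prod]
      calc Real.sqrt (1/2) ^ (p - r) = ∏ _j : Fin (p - r), Real.sqrt (1/2) := by simp
        _ ≤ ∏ j, ‖((1:ℂ) - (b j : ℂ) * ζ) ^ ((1/2:ℝ):ℂ)‖ := by
            apply Finset.prod_le_prod (fun _ _ => Real.sqrt_nonneg _)
            intro j _
            rw [hfac (b j) (hb j) ζ hζ]
            apply Real.sqrt_le_sqrt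
            exact le_trans (key (b j) (hb j) ζ hζ).1 (Complex.re_le_norm _)
    have hdenpos : (0:ℝ) < Real.sqrt (1/2) ^ (p - r) := by positivity
    rw [hFdef]
    simp only [norm_div]
    calc ‖∏ i, ((1:ℂ) - (a i : ℂ) * ζ) ^ ((1/2:ℝ):ℂ)‖ /
          ‖∏ j, ((1:ℂ) - (b j : ℂ) * ζ) ^ ((1/2:ℝ):ℂ)‖
        ≤ Real.sqrt (3/2) ^ r / Real.sqrt (1/2) ^ (p - r) :=
          div_le_div₀ (by positivity) hnum hdenpos hden
      _ = Real.sqrt (3/2) ^ r * Real.sqrt 2 ^ (p - r) := by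
          rw [show (1/2 : ℝ) = 2⁻¹ by norm_num, Real.sqrt_inv, inv_pow, div_inv_eq_mul]
      _ ≤ Real.sqrt 3 ^ r * Real.sqrt 3 ^ (p - r) := by
          apply mul_le_mul
          · exact pow_le_pow_left₀ (Real.sqrt_nonneg _) (Real.sqrt_le_sqrt (by norm_num)) r
          · exact pow_le_pow_left₀ (Real.sqrt_nonneg _) (Real.sqrt_le_sqrt (by norm_num)) _
          · positivity
          · positivity
      _ = M := by rw [hMdef, ← pow_add, Nat.add_sub_cancel' hrp]
  set C : ℕ → ℂ := fun n => cauchyPowerSeries F 0 (Rn:ℝ) n (fun _ => 1) with hCdef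
  have hRnnn : (0:ℝ) ≤ (Rn:ℝ) := by rw [hRn]; exact hR0.le
  have hcirc : ∀ θ : ℝ, ‖circleMap 0 (Rn:ℝ) θ‖ ≤ R := by
    intro θ
    rw [norm_circleMap_zero, _root_.abs_of_nonneg hRnnn, hRn]
  have hFcont : Continuous fun θ : ℝ => ‖F (circleMap 0 (Rn:ℝ) θ)‖ := by
    apply Continuous.norm
    rw [continuous_iff_continuousAt]
    intro θ
    exact (hdF _ (hcirc θ)).continuousAt.comp (continuous_circleMap 0 (Rn:ℝ)).continuousAt
  have hint : (2 * Real.pi)⁻¹ *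
      ∫ θ : ℝ in (0:ℝ)..(2*Real.pi), ‖F (circleMap 0 (Rn:ℝ) θ)‖ ≤ M := by
    have h1 : (∫ θ : ℝ in (0:ℝ)..(2*Real.pi), ‖F (circleMap 0 (Rn:ℝ) θ)‖) ≤
        ∫ _θ : ℝ in (0:ℝ)..(2*Real.pi), M := by
      apply intervalIntegral.integral_mono_on Real.two_pi_pos.le
        (hFcont.intervalIntegrable _ _) intervalIntegrable_const
      intro θ _
      exact hFb _ (hcirc θ)
    rw [intervalIntegral.integral_const, smul_eq_mul, sub_zero] at h1
    calc (2*Real.pi)⁻¹ * ∫ θ : ℝ in (0:ℝ)..(2*Real.pi), ‖F (circleMap 0 (Rn:ℝ) θ)‖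
        ≤ (2*Real.pi)⁻¹ * (2*Real.pi*M) := by
          apply mul_le_mul_of_nonneg_left h1 (by positivity)
      _ = M := by
          rw [← mul_assoc, inv_mul_cancel₀ (by positivity), one_mul]
  have hCb : ∀ n, ‖C n‖ ≤ M * (2*w)^n := by
    intro n
    have h1 : ‖C n‖ ≤ ‖cauchyPowerSeries F 0 (Rn:ℝ) n‖ * ∏ _i : Fin n, ‖(1:ℂ)‖ :=
      (cauchyPowerSeries F 0 (Rn:ℝ) n).le_opNorm _
    simp only [norm_one, Finset.prod_const, one_pow, mul_one] at h1
    have h2 := norm_cauchyPowerSeries_le F 0 (Rn:ℝ) n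
    have h3 : |(Rn:ℝ)|⁻¹ = 2*w := by
      rw [_root_.abs_of_nonneg hRnnn, hRn, hRdef, one_div, inv_inv]
    calc ‖C n‖ = ‖C n‖ := rfl
      _ ≤ ‖cauchyPowerSeries F 0 (Rn:ℝ) n‖ := h1
      _ ≤ ((2*Real.pi)⁻¹ *
            ∫ θ : ℝ in (0:ℝ)..(2*Real.pi), ‖F (circleMap 0 (Rn:ℝ) θ)‖) * |(Rn:ℝ)|⁻¹ ^ n := h2
      _ ≤ M * (2*w)^n := by
          rw [h3]
          apply mul_le_mul_of_nonneg_right hint (by positivity)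
  -- real coefficients
  set cc : ℕ → ℝ := fun n => (C n).re with hccdef
  have hccb : ∀ n, |cc n| ≤ M * (2*w)^n := fun n => (Complex.abs_re_le_norm _).trans (hCb n)
  -- F agrees with g on real points
  have hFg : ∀ x : ℝ, |x| ≤ R → F ↑x = ↑(g x) := by
    intro x hx
    have hfactor : ∀ c : ℝ, c ∈ Set.Icc (0:ℝ) w →
        ((1:ℂ) - (c:ℂ) * (x:ℂ)) ^ ((1/2:ℝ):ℂ) = ((Real.sqrt (1 - c * x) : ℝ) : ℂ) := by
      rintro c ⟨hc0, hcw⟩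
      have hcx : c * x ≤ 1/2 := by
        calc c * x ≤ |c * x| := le_abs_self _
          _ = c * |x| := by rw [abs_mul, _root_.abs_of_nonneg hc0]
          _ ≤ w * R := mul_le_mul hcw hx (abs_nonneg _) hw.le
          _ = 1/2 := by rw [hRdef]; field_simp
      have hpos : (0:ℝ) < 1 - c * x := by linarith
      rw [show ((1:ℂ) - (c:ℂ) * (x:ℂ)) = ((1 - c * x : ℝ) : ℂ) by push_cast; ring,
        ← Complex.ofReal_cpow hpos.le, Real.sqrt_eq_rpow]
    simp only [hFdef, hgdef]
    rw [Finset.prod_congr rfl (fun i _ => hfactor (a i) (ha i)),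
      Finset.prod_congr rfl (fun j _ => hfactor (b j) (hb j)),
      ← Complex.ofReal_prod, ← Complex.ofReal_prod, ← Complex.ofReal_div]
  -- power series for g
  have hg : HasFPowerSeriesOnBall g (FormalMultilinearSeries.ofScalars ℝ cc) 0 Rn := by
    constructor
    · apply FormalMultilinearSeries.le_radius_of_bound _ M
      intro n
      rw [FormalMultilinearSeries.ofScalars_norm]
      calc ‖cc n‖ * (Rn:ℝ)^n ≤ (M * (2*w)^n) * R^n := by
            rw [hRn]
            exact mul_le_mul_of_nonneg_right (hccb n) (by positivity)
        _ = M := by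
            rw [mul_assoc, ← mul_pow, hRdef,
              show (2*w) * (1/(2*w)) = 1 by field_simp]
            simp
    · exact_mod_cast hRn0
    · intro y hy
      have hy' : |y| < R := by
        rw [EMetric.mem_ball, edist_zero_right] at hy
        have h5 : ‖y‖₊ < Rn := by exact_mod_cast hy
        have h6 := (NNReal.coe_lt_coe).mpr h5
        rwa [coe_nnnorm, Real.norm_eq_abs, hRn] at h6
      have hyC : (y:ℂ) ∈ Metric.eball (0:ℂ) Rn := by
        rw [EMetric.mem_ball, edist_zero_right]
        have h5 : ‖(y:ℂ)‖₊ = ‖y‖₊ := by ext; simp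
        rw [enorm_eq_nnnorm, h5]
        exact_mod_cast (show ‖y‖₊ < Rn by
          rw [← NNReal.coe_lt_coe, coe_nnnorm, Real.norm_eq_abs, hRn]; exact hy')
      have hs := h.hasSum hyC
      rw [zero_add, hFg y hy'.le] at hs
      have hterm : ∀ n, (cauchyPowerSeries F 0 (Rn:ℝ) n fun _ => (y:ℂ)) = (y:ℂ)^n * C n := by
        intro n
        have h4 := (cauchyPowerSeries F 0 (Rn:ℝ) n).map_smul_univ
          (fun _ : Fin n => (y:ℂ)) (fun _ => 1)
        simp only [smul_eq_mul, mul_one, Finset.prod_const, Finset.card_univ,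
          Fintype.card_fin] at h4
        rw [h4]
      simp only [hterm] at hs
      have hre := Complex.reCLM.hasSum hs
      simp only [Complex.reCLM_apply, Complex.ofReal_re, ← Complex.ofReal_pow,
        Complex.re_ofReal_mul] at hre
      rw [zero_add]
      convert hre using 2 with n
      · rfl
      rw [FormalMultilinearSeries.ofScalars_apply_eq, smul_eq_mul, mul_comm]
  -- iterated derivatives of g are the coefficients
  have hco : ∀ k, iteratedDeriv k g 0 = (Nat.factorial k : ℝ) * cc k := by
    intro k
    have h5 := hg.factorial_smul (1:ℝ) k
    rw [iteratedDeriv_eq_iteratedFDeriv, ← h5, FormalMultilinearSeries.ofScalars_apply_eq]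
    simp [smul_eq_mul]
  -- z is in the ball
  have hzR : |z| < R := by
    rw [_root_.abs_of_nonneg hz0, hRdef]
    calc z ≤ 1/(5*w) := hz1
      _ < 1/(2*w) := by
        apply one_div_lt_one_div_of_lt (by positivity)
        nlinarith
  have hzball : z ∈ Metric.eball (0:ℝ) Rn := by
    rw [EMetric.mem_ball, edist_zero_right]
    exact_mod_cast (show ‖z‖₊ < Rn by
      rw [← NNReal.coe_lt_coe, coe_nnnorm, Real.norm_eq_abs, hRn]; exact hzR)
  have hS := hg.hasSum hzball
  rw [zero_add] at hS
  simp only [FormalMultilinearSeries.ofScalars_apply_eq, smul_eq_mul] at hS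
  -- partial sums are the Taylor polynomial
  have hpart : (∑ k ∈ Finset.range (q+1), iteratedDeriv k g 0 / (Nat.factorial k) * z^k)
      = ∑ k ∈ Finset.range (q+1), cc k * z^k := by
    apply Finset.sum_congr rfl
    intro k _
    rw [hco k, mul_div_cancel_left₀ _
      (by exact_mod_cast Nat.factorial_ne_zero k : (Nat.factorial k:ℝ) ≠ 0)]
  have htail := (hasSum_nat_add_iff' (q+1)).mpr hS
  set u : ℕ → ℝ := fun n => (M * (2/5:ℝ)^(q+1)) * (2/5:ℝ)^n with hudef
  have hu : HasSum u ((M * (2/5:ℝ)^(q+1)) * ((1:ℝ) - 2/5)⁻¹) :=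
    (hasSum_geometric_of_lt_one (by norm_num) (by norm_num)).mul_left _
  have hbound : ∀ n, ‖cc (n + (q+1)) * z^(n+(q+1))‖ ≤ u n := by
    intro n
    rw [Real.norm_eq_abs, abs_mul, _root_.abs_of_nonneg (pow_nonneg hz0 _)]
    calc |cc (n+(q+1))| * z^(n+(q+1))
        ≤ (M * (2*w)^(n+(q+1))) * (1/(5*w))^(n+(q+1)) := by
          apply mul_le_mul (hccb _) (pow_le_pow_left₀ hz0 hz1 _) (pow_nonneg hz0 _)
            (by positivity)
      _ = M * (2/5:ℝ)^(n+(q+1)) := by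
          rw [mul_assoc, ← mul_pow, show (2*w) * (1/(5*w)) = (2/5:ℝ) by
            rw [mul_one_div, mul_comm 2 w, mul_comm 5 w, mul_div_mul_left _ _ hw.ne']]
      _ = u n := by rw [hudef, pow_add]; ring
  have habs : ‖g z - ∑ i ∈ Finset.range (q+1), cc i * z^i‖ ≤
      (M * (2/5:ℝ)^(q+1)) * ((1:ℝ) - 2/5)⁻¹ := by
    rw [← htail.tsum_eq]
    exact tsum_of_norm_bounded hu hbound
  have h3 : Real.sqrt 3 ≤ 3 := by
    have h6 := Real.sqrt_le_sqrt (show (3:ℝ) ≤ 9 by norm_num)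
    rwa [show (9:ℝ) = 3^2 by norm_num, Real.sqrt_sq (by norm_num : (0:ℝ) ≤ 3)] at h6
  have hM3 : M ≤ 3^p := pow_le_pow_left₀ (Real.sqrt_nonneg 3) h3 p
  have h25 : ((2:ℝ)/5)^q ≤ ((1:ℝ)/2)^q := pow_le_pow_left₀ (by norm_num) (by norm_num) q
  calc |g z - ∑ k ∈ Finset.range (q+1),
          iteratedDeriv k g 0 / (Nat.factorial k) * z^k|
      = ‖g z - ∑ i ∈ Finset.range (q+1), cc i * z^i‖ := by
        rw [hpart, Real.norm_eq_abs]
    _ ≤ (M * (2/5:ℝ)^(q+1)) * ((1:ℝ) - 2/5)⁻¹ := habs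
    _ = (M * (2/5:ℝ)^q) * (2/3) := by rw [pow_succ]; ring_nf
    _ ≤ (3^p * ((1:ℝ)/2)^q) * 1 := by
        apply mul_le_mul (mul_le_mul hM3 h25 (by positivity) (by positivity))
          (by norm_num) (by norm_num) (by positivity)
    _ = 3 ^ p / 2 ^ q := by rw [mul_one, div_pow, one_pow, ← div_eq_mul_one_div]
end
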